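/- arXiv:2401.00053 — 7 statements merged into one kernel-verified Lean document; each statement's English description precedes it below -/
import Mathlib

section
/- Let u₁ < u₂ and define B on Ω_R(u₁,u₂) by B(x₁,x₂) = ((ε+x₂)/(2ε))·f₊(x₁−x₂+ε) + ((ε−x₂)/(2ε))·f₋(x₁−x₂−ε). Then B is diagonally concave on Ω_R(u₁,u₂) (equivalently, B is a Bellman candidate there: it is diagonally concave, takes the boundary values f₊(x₁) at x₂ = ε and f₋(x₁) at x₂ = −ε, and is linear along the right extremal segments x₁−x₂ = const) if and only if for every u ∈ (u₁,u₂) both inequalities hold: f₊′(u+ε) − f₋′(u−ε) − 2ε·f₊″(u+ε) ≥ 0 and f₊′(u+ε) − f₋′(u−ε) − 2ε·f₋″(u−ε) ≥ 0. -/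
open Set

noncomputable section

/-- Diagonal concavity: concavity along every segment parallel to `(1,1)` or `(1,-1)`
contained in the set. -/
def DiagConcaveOn (S : Set (ℝ × ℝ)) (G : ℝ × ℝ → ℝ) : Prop :=
  ∀ a b : ℝ × ℝ, a ∈ S → b ∈ S →
    (b.1 - a.1 = b.2 - a.2 ∨ b.1 - a.1 = -(b.2 - a.2)) →
    segment ℝ a b ⊆ S →
    ∀ θ : ℝ, 0 ≤ θ → θ ≤ 1 →
      θ * G a + (1 - θ) * G b ≤ G (θ • a + (1 - θ) • b)

/-- The subregion `Ω_R(u₁,u₂)` of the strip `Ω_ε`, foliated by right extremal segments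
`x₁ - x₂ = u`, `u₁ ≤ u ≤ u₂`. -/
def OmR (ε u₁ u₂ : ℝ) : Set (ℝ × ℝ) :=
  {x : ℝ × ℝ | -ε ≤ x.2 ∧ x.2 ≤ ε ∧ u₁ ≤ x.1 - x.2 ∧ x.1 - x.2 ≤ u₂}

def auxF (ε : ℝ) (fp fm : ℝ → ℝ) (s u : ℝ) : ℝ :=
  ((ε + (s - u)/2)/(2*ε)) * fp (u + ε) + ((ε - (s - u)/2)/(2*ε)) * fm (u - ε)

def auxF1 (ε : ℝ) (fp fm : ℝ → ℝ) (s u : ℝ) : ℝ :=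
  (-1/(4*ε)) * fp (u + ε) + ((ε + (s - u)/2)/(2*ε)) * deriv fp (u + ε) +
  (1/(4*ε)) * fm (u - ε) + ((ε - (s - u)/2)/(2*ε)) * deriv fm (u - ε)

def auxF2 (ε : ℝ) (fp fm : ℝ → ℝ) (s u : ℝ) : ℝ :=
  (-1/(2*ε)) * deriv fp (u + ε) + ((ε + (s - u)/2)/(2*ε)) * deriv (deriv fp) (u + ε) +
  (1/(2*ε)) * deriv fm (u - ε) + ((ε - (s - u)/2)/(2*ε)) * deriv (deriv fm) (u - ε)

lemma comp_add_hasDerivAt {f : ℝ → ℝ} (hf : Differentiable ℝ f) (c u : ℝ) :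
    HasDerivAt (fun v : ℝ => f (v + c)) (deriv f (u + c)) u := by
  have h := (hf (u + c)).hasDerivAt
  simpa [Function.comp_def] using h.comp u ((hasDerivAt_id u).add_const c)

lemma coef1_hasDerivAt (ε s u : ℝ) :
    HasDerivAt (fun v : ℝ => (ε + (s - v)/2)/(2*ε)) (-1/(4*ε)) u := by
  have h := ((((hasDerivAt_id u).const_sub s).div_const 2).const_add ε).div_const (2*ε)
  rw [show (-1/(4*ε)) = -1/2/(2*ε) by ring]
  exact h

lemma coef2_hasDerivAt (ε s u : ℝ) :
    HasDerivAt (fun v : ℝ => (ε - (s - v)/2)/(2*ε)) (1/(4*ε)) u := by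
  have h := ((((hasDerivAt_id u).const_sub s).div_const 2).const_sub ε).div_const (2*ε)
  rw [show (1/(4*ε)) = -(-1/2)/(2*ε) by ring]
  exact h

lemma hasDerivAt_auxF (ε : ℝ) {fp fm : ℝ → ℝ}
    (hfp : Differentiable ℝ fp) (hfm : Differentiable ℝ fm) (s u : ℝ) :
    HasDerivAt (auxF ε fp fm s) (auxF1 ε fp fm s u) u := by
  have h := ((coef1_hasDerivAt ε s u).mul (comp_add_hasDerivAt hfp ε u)).add
    ((coef2_hasDerivAt ε s u).mul ((by
      have h2 := (hfm (u - ε)).hasDerivAt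
      simpa [Function.comp_def] using h2.comp u ((hasDerivAt_id u).sub_const ε) : HasDerivAt (fun v : ℝ => fm (v - ε)) (deriv fm (u - ε)) u)))
  have he : -1/(4*ε) * fp (u + ε) + (ε + (s - u)/2)/(2*ε) * deriv fp (u + ε) +
      (1/(4*ε) * fm (u - ε) + (ε - (s - u)/2)/(2*ε) * deriv fm (u - ε)) = auxF1 ε fp fm s u := by
    unfold auxF1; ring
  rw [← he]
  exact h

lemma hasDerivAt_auxF1 (ε : ℝ) {fp fm : ℝ → ℝ}
    (hfp : ContDiff ℝ (⊤ : ℕ∞) fp) (hfm : ContDiff ℝ (⊤ : ℕ∞) fm) (s u : ℝ) :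
    HasDerivAt (auxF1 ε fp fm s) (auxF2 ε fp fm s u) u := by
  have hfp' : ContDiff ℝ (⊤:ℕ∞) (deriv fp) := (contDiff_infty_iff_deriv.mp (hfp.of_le (by simp))).2
  have hfm' : ContDiff ℝ (⊤:ℕ∞) (deriv fm) := (contDiff_infty_iff_deriv.mp (hfm.of_le (by simp))).2
  have h1 : HasDerivAt (fun v : ℝ => (-1/(4*ε)) * fp (v + ε)) ((-1/(4*ε)) * deriv fp (u + ε)) u :=
    (comp_add_hasDerivAt (hfp.differentiable (by simp)) ε u).const_mul _
  have h2 := (coef1_hasDerivAt ε s u).mul (comp_add_hasDerivAt (hfp'.differentiable (by simp)) ε u)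
  have h3 : HasDerivAt (fun v : ℝ => (1/(4*ε)) * fm (v - ε)) ((1/(4*ε)) * deriv fm (u - ε)) u := by
    have h := ((hfm.differentiable (by simp)) (u - ε)).hasDerivAt
    exact ((by simpa [Function.comp_def] using h.comp u ((hasDerivAt_id u).sub_const ε) :
      HasDerivAt (fun v : ℝ => fm (v - ε)) (deriv fm (u - ε)) u)).const_mul _
  have h4 := (coef2_hasDerivAt ε s u).mul ((by
      have h := ((hfm'.differentiable (by simp)) (u - ε)).hasDerivAt
      simpa [Function.comp_def] using h.comp u ((hasDerivAt_id u).sub_const ε) :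
        HasDerivAt (fun v : ℝ => deriv fm (v - ε)) (deriv (deriv fm) (u - ε)) u))
  have h := ((h1.add h2).add h3).add h4
  have he : (-1/(4*ε)) * deriv fp (u + ε) +
      (-1/(4*ε) * deriv fp (u + ε) + (ε + (s - u)/2)/(2*ε) * deriv (deriv fp) (u + ε)) +
      (1/(4*ε)) * deriv fm (u - ε) +
      (1/(4*ε) * deriv fm (u - ε) + (ε - (s - u)/2)/(2*ε) * deriv (deriv fm) (u - ε)) =
      auxF2 ε fp fm s u := by
    unfold auxF2; ring
  rw [← he]
  exact h

lemma convex_OmR (ε u₁ u₂ : ℝ) : Convex ℝ (OmR ε u₁ u₂) := by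
  intro x hx y hy c d hc hd hcd
  obtain ⟨hx1, hx2, hx3, hx4⟩ := hx
  obtain ⟨hy1, hy2, hy3, hy4⟩ := hy
  have e1 : c * (-ε) + d * (-ε) = -ε := by linear_combination (-ε) * hcd
  have e2 : c * ε + d * ε = ε := by linear_combination ε * hcd
  have e3 : c * u₁ + d * u₁ = u₁ := by linear_combination u₁ * hcd
  have e4 : c * u₂ + d * u₂ = u₂ := by linear_combination u₂ * hcd
  refine ⟨?_, ?_, ?_, ?_⟩ <;>
    simp only [Prod.fst_add, Prod.snd_add, Prod.smul_fst, Prod.smul_snd, smul_eq_mul]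
  · linarith [mul_le_mul_of_nonneg_left hx1 hc, mul_le_mul_of_nonneg_left hy1 hd]
  · linarith [mul_le_mul_of_nonneg_left hx2 hc, mul_le_mul_of_nonneg_left hy2 hd]
  · linarith [mul_le_mul_of_nonneg_left hx3 hc, mul_le_mul_of_nonneg_left hy3 hd]
  · linarith [mul_le_mul_of_nonneg_left hx4 hc, mul_le_mul_of_nonneg_left hy4 hd]

lemma G_pair (ε s v : ℝ) (fp fm : ℝ → ℝ) :
    (fun x : ℝ × ℝ =>
        ((ε + x.2) / (2 * ε)) * fp (x.1 - x.2 + ε) +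
        ((ε - x.2) / (2 * ε)) * fm (x.1 - x.2 - ε)) (((s+v)/2, (s-v)/2) : ℝ × ℝ)
      = auxF ε fp fm s v := by
  show ((ε + (s-v)/2) / (2 * ε)) * fp ((s+v)/2 - (s-v)/2 + ε) +
      ((ε - (s-v)/2) / (2 * ε)) * fm ((s+v)/2 - (s-v)/2 - ε) = _
  rw [show (s+v)/2 - (s-v)/2 + ε = v + ε by ring, show (s+v)/2 - (s-v)/2 - ε = v - ε by ring]
  rfl

lemma key_eq (ε : ℝ) (fp fm : ℝ → ℝ) (p : ℝ × ℝ) :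
    (fun x : ℝ × ℝ =>
        ((ε + x.2) / (2 * ε)) * fp (x.1 - x.2 + ε) +
        ((ε - x.2) / (2 * ε)) * fm (x.1 - x.2 - ε)) p
      = auxF ε fp fm (p.1 + p.2) (p.1 - p.2) := by
  show ((ε + p.2) / (2 * ε)) * fp (p.1 - p.2 + ε) +
      ((ε - p.2) / (2 * ε)) * fm (p.1 - p.2 - ε) = _
  unfold auxF
  rw [show (p.1 + p.2 - (p.1 - p.2))/2 = p.2 by ring]

lemma deriv_nonpos_of_antitone_right {f : ℝ → ℝ} {u r c : ℝ} (hur : u < r)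
    (hf : ∀ x ∈ Ioc u r, f x ≤ f u) (hd : HasDerivAt f c u) : c ≤ 0 := by
  have ht : Filter.Tendsto (slope f u) (nhdsWithin u (Ioi u)) (nhds c) :=
    (hasDerivAt_iff_tendsto_slope.mp hd).mono_left
      (nhdsWithin_mono u fun x (hx : x ∈ Ioi u) =>
        Set.mem_compl_singleton_iff.mpr (ne_of_gt hx))
  refine le_of_tendsto ht ?_
  filter_upwards [Ioc_mem_nhdsGT hur] with x hx
  rw [slope_def_field]
  apply div_nonpos_of_nonpos_of_nonneg
  · linarith [hf x hx]
  · linarith [hx.1]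

lemma aux_lim {c M ε : ℝ} (hε : 0 < ε) (h : ∀ δ : ℝ, 0 < δ → δ < ε → c ≤ δ * M) : c ≤ 0 := by
  by_contra hc
  push_neg at hc
  have h1 : (0:ℝ) < |M| + 1 := by positivity
  set δ := min (ε/2) (c/(2*(|M|+1))) with hδ
  have hδ1 : 0 < δ := lt_min (by linarith) (div_pos hc (by positivity))
  have hδ2 : δ < ε := lt_of_le_of_lt (min_le_left _ _) (by linarith)
  have h2 := h δ hδ1 hδ2
  have h3 : δ * M ≤ δ * |M| := mul_le_mul_of_nonneg_left (le_abs_self M) hδ1.le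
  have h4 : δ ≤ c/(2*(|M|+1)) := min_le_right _ _
  have h5 : δ * |M| ≤ (c/(2*(|M|+1))) * (|M|+1) :=
    mul_le_mul h4 (by linarith) (abs_nonneg M) (by positivity)
  have h6 : (c/(2*(|M|+1))) * (|M|+1) = c/2 := by field_simp
  linarith

lemma concaveOn_auxF_of_diag (ε u₁ u₂ : ℝ) (fp fm : ℝ → ℝ)
    (hdiag : DiagConcaveOn (OmR ε u₁ u₂) (fun x : ℝ × ℝ =>
        ((ε + x.2) / (2 * ε)) * fp (x.1 - x.2 + ε) +
        ((ε - x.2) / (2 * ε)) * fm (x.1 - x.2 - ε)))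
    (s l r : ℝ)
    (hq : ∀ v ∈ Icc l r, (((s+v)/2, (s-v)/2) : ℝ × ℝ) ∈ OmR ε u₁ u₂) :
    ConcaveOn ℝ (Icc l r) (auxF ε fp fm s) := by
  refine ⟨convex_Icc l r, ?_⟩
  intro v hv w hw c d hc hd hcd
  obtain rfl : d = 1 - c := by linarith
  have hpv := hq v hv
  have hpw := hq w hw
  have hdir : ((((s+w)/2, (s-w)/2) : ℝ × ℝ)).1 - ((((s+v)/2, (s-v)/2) : ℝ × ℝ)).1 =
      -(((((s+w)/2, (s-w)/2) : ℝ × ℝ)).2 - ((((s+v)/2, (s-v)/2) : ℝ × ℝ)).2) := by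
    show (s+w)/2 - (s+v)/2 = -((s-w)/2 - (s-v)/2)
    ring
  have h := hdiag _ _ hpv hpw (Or.inr hdir)
    ((convex_OmR ε u₁ u₂).segment_subset hpv hpw) c hc (by linarith)
  have ec : c • (((s+v)/2, (s-v)/2) : ℝ × ℝ) + (1-c) • (((s+w)/2, (s-w)/2) : ℝ × ℝ) =
      (((s + (c*v+(1-c)*w))/2, (s - (c*v+(1-c)*w))/2) : ℝ × ℝ) := by
    refine Prod.ext_iff.mpr ⟨?_, ?_⟩ <;>
      simp only [Prod.fst_add, Prod.snd_add, Prod.smul_fst, Prod.smul_snd, smul_eq_mul] <;> ring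
  rw [ec] at h
  rw [G_pair, G_pair, G_pair] at h
  simpa [smul_eq_mul] using h

lemma concaveOn_auxF_of_cond (ε : ℝ) (hε : 0 < ε) {fp fm : ℝ → ℝ}
    (hfp : ContDiff ℝ (⊤ : ℕ∞) fp) (hfm : ContDiff ℝ (⊤ : ℕ∞) fm) (u₁ u₂ : ℝ)
    (hcond : ∀ u ∈ Set.Ioo u₁ u₂,
      0 ≤ deriv fp (u + ε) - deriv fm (u - ε) - 2 * ε * deriv (deriv fp) (u + ε) ∧
      0 ≤ deriv fp (u + ε) - deriv fm (u - ε) - 2 * ε * deriv (deriv fm) (u - ε))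
    (s l r : ℝ) (hlr : l ≤ r)
    (hq : ∀ v ∈ Icc l r, (((s+v)/2, (s-v)/2) : ℝ × ℝ) ∈ OmR ε u₁ u₂) :
    ConcaveOn ℝ (Icc l r) (auxF ε fp fm s) := by
  have hfpd : Differentiable ℝ fp := hfp.differentiable (by simp)
  have hfmd : Differentiable ℝ fm := hfm.differentiable (by simp)
  apply concaveOn_of_hasDerivWithinAt2_nonpos (convex_Icc l r)
    (f' := auxF1 ε fp fm s) (f'' := auxF2 ε fp fm s)
  · exact fun x _ =>
      (hasDerivAt_auxF ε hfpd hfmd s x).differentiableAt.continuousAt.continuousWithinAt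
  · exact fun x _ => (hasDerivAt_auxF ε hfpd hfmd s x).hasDerivWithinAt
  · exact fun x _ => (hasDerivAt_auxF1 ε hfp hfm s x).hasDerivWithinAt
  · intro x hx
    rw [interior_Icc] at hx
    have hl' : l ∈ Icc l r := left_mem_Icc.mpr hlr
    have hr' : r ∈ Icc l r := right_mem_Icc.mpr hlr
    obtain ⟨_, _, h1a, _⟩ := hq l hl'
    obtain ⟨_, _, _, h2b⟩ := hq r hr'
    have hxu : x ∈ Set.Ioo u₁ u₂ := by
      constructor
      · have : u₁ ≤ l := by
          have := h1a; simp only at this; linarith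
        linarith [hx.1]
      · have : r ≤ u₂ := by
          have := h2b; simp only at this; linarith
        linarith [hx.2]
    obtain ⟨ha1, ha2, _, _⟩ := hq x ⟨hx.1.le, hx.2.le⟩
    obtain ⟨hA, hB⟩ := hcond x hxu
    simp only at ha1 ha2
    have he : auxF2 ε fp fm s x =
        (-(deriv fp (x+ε)) + deriv fm (x-ε) + (ε + (s-x)/2) * deriv (deriv fp) (x+ε)
          + (ε - (s-x)/2) * deriv (deriv fm) (x-ε)) / (2*ε) := by
      unfold auxF2; field_simp; ring
    rw [he]
    apply div_nonpos_of_nonpos_of_nonneg _ (by positivity)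
    nlinarith [mul_nonneg (by linarith : (0:ℝ) ≤ ε + (s-x)/2) hA,
      mul_nonneg (by linarith : (0:ℝ) ≤ ε - (s-x)/2) hB, hε]


/-- The function `B` built from boundary data by linearity along right extremal segments is a
Bellman candidate (i.e. diagonally concave) on `Ω_R(u₁,u₂)` iff the two inequalities hold for
all `u ∈ (u₁,u₂)`. -/
theorem right_simple_foliation_candidate_iff
    (ε : ℝ) (hε : 0 < ε) (fp fm : ℝ → ℝ)
    (hfp : ContDiff ℝ (⊤ : ℕ∞) fp) (hfm : ContDiff ℝ (⊤ : ℕ∞) fm)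
    (u₁ u₂ : ℝ) (h12 : u₁ < u₂) :
    DiagConcaveOn (OmR ε u₁ u₂)
      (fun x : ℝ × ℝ =>
        ((ε + x.2) / (2 * ε)) * fp (x.1 - x.2 + ε) +
        ((ε - x.2) / (2 * ε)) * fm (x.1 - x.2 - ε)) ↔
    ∀ u ∈ Set.Ioo u₁ u₂,
      0 ≤ deriv fp (u + ε) - deriv fm (u - ε) - 2 * ε * deriv (deriv fp) (u + ε) ∧
      0 ≤ deriv fp (u + ε) - deriv fm (u - ε) - 2 * ε * deriv (deriv fm) (u - ε) := by
  have hfpd : Differentiable ℝ fp := hfp.differentiable (by simp)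
  have hfmd : Differentiable ℝ fm := hfm.differentiable (by simp)
  constructor
  · -- forward direction
    intro hdiag u hu
    obtain ⟨hu1, hu2⟩ := hu
    have step1 : ∀ x₂ : ℝ, x₂ ∈ Set.Ioo (-ε) ε →
        -(deriv fp (u+ε)) + deriv fm (u-ε) + (ε + x₂) * deriv (deriv fp) (u+ε)
          + (ε - x₂) * deriv (deriv fm) (u-ε) ≤ 0 := by
      intro x₂ hx₂
      obtain ⟨hx₂1, hx₂2⟩ := hx₂
      set r : ℝ := min (min (ε - x₂) (x₂ + ε)) (min ((u - u₁)/2) ((u₂ - u)/2)) with hrdef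
      have hr : 0 < r :=
        lt_min (lt_min (by linarith) (by linarith)) (lt_min (by linarith) (by linarith))
      have hr1 : r ≤ ε - x₂ := le_trans (min_le_left _ _) (min_le_left _ _)
      have hr2 : r ≤ x₂ + ε := le_trans (min_le_left _ _) (min_le_right _ _)
      have hr3 : r ≤ (u - u₁)/2 := le_trans (min_le_right _ _) (min_le_left _ _)
      have hr4 : r ≤ (u₂ - u)/2 := le_trans (min_le_right _ _) (min_le_right _ _)
      have hq : ∀ v ∈ Icc (u - 2*r) (u + 2*r),
          ((((u + 2*x₂)+v)/2, ((u + 2*x₂)-v)/2) : ℝ × ℝ) ∈ OmR ε u₁ u₂ := by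
        intro v hv
        obtain ⟨hv1, hv2⟩ := hv
        refine ⟨?_, ?_, ?_, ?_⟩
        · show -ε ≤ ((u + 2*x₂)-v)/2; linarith
        · show ((u + 2*x₂)-v)/2 ≤ ε; linarith
        · show u₁ ≤ ((u + 2*x₂)+v)/2 - ((u + 2*x₂)-v)/2; linarith
        · show ((u + 2*x₂)+v)/2 - ((u + 2*x₂)-v)/2 ≤ u₂; linarith
      have hconc := concaveOn_auxF_of_diag ε u₁ u₂ fp fm hdiag (u + 2*x₂) (u - 2*r) (u + 2*r) hq
      have hanti : AntitoneOn (deriv (auxF ε fp fm (u + 2*x₂))) (Icc (u - 2*r) (u + 2*r)) :=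
        hconc.antitoneOn_deriv (fun x _ => (hasDerivAt_auxF ε hfpd hfmd _ x).differentiableAt)
      have hde : deriv (auxF ε fp fm (u + 2*x₂)) = auxF1 ε fp fm (u + 2*x₂) :=
        funext fun x => (hasDerivAt_auxF ε hfpd hfmd _ x).deriv
      rw [hde] at hanti
      have h2 : auxF2 ε fp fm (u + 2*x₂) u ≤ 0 := by
        refine deriv_nonpos_of_antitone_right (show u < u + 2*r by linarith) ?_
          (hasDerivAt_auxF1 ε hfp hfm _ u)
        intro x hx
        exact hanti (show u ∈ Icc (u - 2*r) (u + 2*r) from ⟨by linarith, by linarith⟩)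
          ⟨by linarith [hx.1], hx.2⟩ hx.1.le
      have he : auxF2 ε fp fm (u + 2*x₂) u =
          (-(deriv fp (u+ε)) + deriv fm (u-ε) + (ε + x₂) * deriv (deriv fp) (u+ε)
            + (ε - x₂) * deriv (deriv fm) (u-ε)) / (2*ε) := by
        unfold auxF2; field_simp; ring
      rw [he] at h2
      rcases div_nonpos_iff.mp h2 with ⟨_, h4⟩ | ⟨h3, _⟩
      · linarith
      · exact h3
    constructor
    · have hlim : ∀ δ : ℝ, 0 < δ → δ < ε →
          2*ε*deriv (deriv fp) (u+ε) - (deriv fp (u+ε) - deriv fm (u-ε)) ≤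
            δ * (deriv (deriv fp) (u+ε) - deriv (deriv fm) (u-ε)) := by
        intro δ h1 h2
        have := step1 (ε - δ) ⟨by linarith, by linarith⟩
        linarith
      linarith [aux_lim hε hlim]
    · have hlim : ∀ δ : ℝ, 0 < δ → δ < ε →
          2*ε*deriv (deriv fm) (u-ε) - (deriv fp (u+ε) - deriv fm (u-ε)) ≤
            δ * (deriv (deriv fm) (u-ε) - deriv (deriv fp) (u+ε)) := by
        intro δ h1 h2
        have := step1 (δ - ε) ⟨by linarith, by linarith⟩
        linarith
      linarith [aux_lim hε hlim]
  · -- backward direction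
    intro hcond a b ha hb hdir hseg θ hθ0 hθ1
    rcases hdir with hdir | hdir
    · -- direction (1,1): the function is affine along such segments
      have hba : b.1 - b.2 = a.1 - a.2 := by linarith
      simp only [key_eq, Prod.fst_add, Prod.snd_add, Prod.smul_fst, Prod.smul_snd, smul_eq_mul]
      rw [show θ * a.1 + (1 - θ) * b.1 - (θ * a.2 + (1 - θ) * b.2) = a.1 - a.2 from by
        linear_combination (1 - θ) * hba, hba]
      apply le_of_eq
      unfold auxF
      linear_combination ((1-θ)/(4*ε)) * (fp (a.1-a.2+ε) - fm (a.1-a.2-ε)) * hba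
    · -- direction (1,-1)
      have hsb : b.1 + b.2 = a.1 + a.2 := by linarith
      by_cases hab : a.1 - a.2 = b.1 - b.2
      · have hEq : a = b := Prod.ext_iff.mpr ⟨by linarith, by linarith⟩
        subst hEq
        have hcc : θ • a + (1 - θ) • a = a := by
          rw [← add_smul]; norm_num
        rw [hcc]
        apply le_of_eq; ring
      · have hD : b.1 - b.2 - (a.1 - a.2) ≠ 0 := sub_ne_zero.mpr (fun h => hab h.symm)
        have hq : ∀ v ∈ Icc (min (a.1 - a.2) (b.1 - b.2)) (max (a.1 - a.2) (b.1 - b.2)),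
            ((((a.1 + a.2) + v)/2, ((a.1 + a.2) - v)/2) : ℝ × ℝ) ∈ OmR ε u₁ u₂ := by
          intro v hv
          apply hseg
          rw [segment_eq_image']
          set t : ℝ := (v - (a.1 - a.2))/((b.1 - b.2) - (a.1 - a.2)) with htdef
          have htD : t * ((b.1 - b.2) - (a.1 - a.2)) = v - (a.1 - a.2) :=
            div_mul_cancel₀ _ hD
          have ht01 : 0 ≤ t ∧ t ≤ 1 := by
            rcases lt_or_gt_of_ne (fun h => hab h : ¬ (a.1-a.2) = (b.1-b.2)) with hlt | hlt
            · have h1 : a.1 - a.2 ≤ v := by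
                have := hv.1; rwa [min_eq_left hlt.le] at this
              have h2 : v ≤ b.1 - b.2 := by
                have := hv.2; rwa [max_eq_right hlt.le] at this
              constructor
              · exact div_nonneg (by linarith) (by linarith)
              · rw [div_le_one (by linarith)]; linarith
            · have h1 : b.1 - b.2 ≤ v := by
                have := hv.1; rwa [min_eq_right hlt.le] at this
              have h2 : v ≤ a.1 - a.2 := by
                have := hv.2; rwa [max_eq_left hlt.le] at this
              have htalt : t = ((a.1 - a.2) - v)/((a.1 - a.2) - (b.1 - b.2)) := by
                rw [htdef, ← neg_div_neg_eq]; congr 1 <;> ring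
              constructor
              · rw [htalt]; exact div_nonneg (by linarith) (by linarith)
              · rw [htalt, div_le_one (by linarith)]; linarith
            
          refine ⟨t, ⟨ht01.1, ht01.2⟩, ?_⟩
          refine Prod.ext_iff.mpr ⟨?_, ?_⟩ <;>
            simp only [Prod.fst_add, Prod.snd_add, Prod.fst_sub, Prod.snd_sub,
              Prod.smul_fst, Prod.smul_snd, smul_eq_mul]
          · linear_combination (1/2) * htD + (t/2) * hsb
          · linear_combination (-1/2) * htD + (t/2) * hsb
        have hCon := concaveOn_auxF_of_cond ε hε hfp hfm u₁ u₂ hcond (a.1 + a.2) _ _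
          min_le_max hq
        have hfinal := hCon.2
          (show a.1 - a.2 ∈ Icc _ _ from ⟨min_le_left _ _, le_max_left _ _⟩)
          (show b.1 - b.2 ∈ Icc _ _ from ⟨min_le_right _ _, le_max_right _ _⟩)
          hθ0 (show (0:ℝ) ≤ 1 - θ by linarith) (by ring)
        have ec : θ • a + (1 - θ) • b =
            ((((a.1 + a.2) + (θ * (a.1 - a.2) + (1 - θ) * (b.1 - b.2)))/2,
              ((a.1 + a.2) - (θ * (a.1 - a.2) + (1 - θ) * (b.1 - b.2)))/2) : ℝ × ℝ) := by
          refine Prod.ext_iff.mpr ⟨?_, ?_⟩ <;>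
            simp only [Prod.fst_add, Prod.snd_add, Prod.smul_fst, Prod.smul_snd, smul_eq_mul]
          · linear_combination ((1 - θ)/2) * hsb
          · linear_combination ((1 - θ)/2) * hsb
        rw [ec, G_pair]
        simp only [key_eq]
        rw [hsb]
        simpa [smul_eq_mul] using hfinal
end
end

section
/- Let u₁ < u₂ and define B on Ω_L(u₁,u₂) by B(x₁,x₂) = ((ε+x₂)/(2ε))·f₊(x₁+x₂−ε) + ((ε−x₂)/(2ε))·f₋(x₁+x₂+ε). Then B is diagonally concave on Ω_L(u₁,u₂) (equivalently, B is a Bellman candidate there: it is diagonally concave, takes the boundary values f₊(x₁) at x₂ = ε and f₋(x₁) at x₂ = −ε, and is linear along the left extremal segments x₁+x₂ = const) if and only if for every u ∈ (u₁,u₂) both inequalities hold: f₋′(u+ε) − f₊′(u−ε) − 2ε·f₊″(u−ε) ≥ 0 and f₋′(u+ε) − f₊′(u−ε) − 2ε·f₋″(u+ε) ≥ 0. -/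
open Set

noncomputable section

/-- The subregion `Ω_L(u₁,u₂)` of the strip `Ω_ε`, foliated by left extremal segments
`x₁ + x₂ = u`, `u₁ ≤ u ≤ u₂`. -/
def OmL (ε u₁ u₂ : ℝ) : Set (ℝ × ℝ) :=
  {x : ℝ × ℝ | -ε ≤ x.2 ∧ x.2 ≤ ε ∧ u₁ ≤ x.1 + x.2 ∧ x.1 + x.2 ≤ u₂}


lemma affDeriv (c m t : ℝ) : HasDerivAt (fun x => c + m*x) m t := by
  simpa using ((hasDerivAt_id t).const_mul m).const_add c

lemma compAff {P : ℝ → ℝ} (hP : Differentiable ℝ P) (c m t : ℝ) :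
    HasDerivAt (fun x => P (c + m*x)) (deriv P (c + m*t) * m) t := by
  exact (hP (c+m*t)).hasDerivAt.comp t (affDeriv c m t)

lemma Hderiv1 {P M : ℝ → ℝ} (hP : Differentiable ℝ P) (hM : Differentiable ℝ M)
    (p0 p1 q0 q1 c₁ c₂ m : ℝ) (t : ℝ) :
    HasDerivAt (fun t => (p0+p1*t) * P (c₁+m*t) + (q0+q1*t) * M (c₂+m*t))
      (p1 * P (c₁+m*t) + (p0+p1*t) * (deriv P (c₁+m*t) * m)
        + (q1 * M (c₂+m*t) + (q0+q1*t) * (deriv M (c₂+m*t) * m))) t :=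
  ((affDeriv p0 p1 t).mul (compAff hP c₁ m t)).add ((affDeriv q0 q1 t).mul (compAff hM c₂ m t))

lemma Hderiv1' {P M : ℝ → ℝ} (hP : Differentiable ℝ P) (hM : Differentiable ℝ M)
    (p0 p1 q0 q1 c₁ c₂ m : ℝ) :
    deriv (fun t => (p0+p1*t) * P (c₁+m*t) + (q0+q1*t) * M (c₂+m*t))
      = fun t => p1 * P (c₁+m*t) + (p0+p1*t) * (deriv P (c₁+m*t) * m)
        + (q1 * M (c₂+m*t) + (q0+q1*t) * (deriv M (c₂+m*t) * m)) :=
  funext fun t => (Hderiv1 hP hM p0 p1 q0 q1 c₁ c₂ m t).deriv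

lemma Hderiv2 {P M : ℝ → ℝ} (hP : Differentiable ℝ P) (hP' : Differentiable ℝ (deriv P))
    (hM : Differentiable ℝ M) (hM' : Differentiable ℝ (deriv M))
    (p0 p1 q0 q1 c₁ c₂ m : ℝ) (t : ℝ) :
    deriv (deriv (fun t => (p0+p1*t) * P (c₁+m*t) + (q0+q1*t) * M (c₂+m*t))) t
      = 2*p1*m*(deriv P (c₁+m*t)) + (p0+p1*t)*(deriv (deriv P) (c₁+m*t))*m*m
        + 2*q1*m*(deriv M (c₂+m*t)) + (q0+q1*t)*(deriv (deriv M) (c₂+m*t))*m*m := by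
  rw [Hderiv1' hP hM]
  have h2 : HasDerivAt (fun t => p1 * P (c₁+m*t) + (p0+p1*t) * (deriv P (c₁+m*t) * m)
        + (q1 * M (c₂+m*t) + (q0+q1*t) * (deriv M (c₂+m*t) * m)))
      ((p1 * (deriv P (c₁+m*t) * m)
          + (p1 * (deriv P (c₁+m*t) * m) + (p0+p1*t) * (deriv (deriv P) (c₁+m*t) * m * m)))
        + (q1 * (deriv M (c₂+m*t) * m)
          + (q1 * (deriv M (c₂+m*t) * m) + (q0+q1*t) * (deriv (deriv M) (c₂+m*t) * m * m)))) t :=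
    (((compAff hP c₁ m t).const_mul p1).add
      ((affDeriv p0 p1 t).mul ((compAff hP' c₁ m t).mul_const m))).add
      (((compAff hM c₂ m t).const_mul q1).add
      ((affDeriv q0 q1 t).mul ((compAff hM' c₂ m t).mul_const m)))
  rw [h2.deriv]; ring

lemma Hdiff {P M : ℝ → ℝ} (hP : Differentiable ℝ P) (hM : Differentiable ℝ M)
    (p0 p1 q0 q1 c₁ c₂ m : ℝ) :
    Differentiable ℝ (fun t => (p0+p1*t) * P (c₁+m*t) + (q0+q1*t) * M (c₂+m*t)) :=
  fun t => (Hderiv1 hP hM p0 p1 q0 q1 c₁ c₂ m t).differentiableAt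

lemma Hdiff' {P M : ℝ → ℝ} (hP : Differentiable ℝ P) (hP' : Differentiable ℝ (deriv P))
    (hM : Differentiable ℝ M) (hM' : Differentiable ℝ (deriv M))
    (p0 p1 q0 q1 c₁ c₂ m : ℝ) :
    Differentiable ℝ (deriv (fun t => (p0+p1*t) * P (c₁+m*t) + (q0+q1*t) * M (c₂+m*t))) := by
  rw [Hderiv1' hP hM]
  intro t
  exact ((((compAff hP c₁ m t).const_mul p1).add
      ((affDeriv p0 p1 t).mul ((compAff hP' c₁ m t).mul_const m))).add
      (((compAff hM c₂ m t).const_mul q1).add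
      ((affDeriv q0 q1 t).mul ((compAff hM' c₂ m t).mul_const m)))).differentiableAt

def Gfun (ε : ℝ) (fp fm : ℝ → ℝ) : ℝ × ℝ → ℝ := fun x =>
  ((ε + x.2) / (2 * ε)) * fp (x.1 + x.2 - ε) + ((ε - x.2) / (2 * ε)) * fm (x.1 + x.2 + ε)

def Hfun (ε : ℝ) (fp fm : ℝ → ℝ) (a1 a2 d : ℝ) : ℝ → ℝ := fun s =>
  ((ε+a2)/(2*ε) + d/(2*ε)*s) * fp ((a1+a2-ε) + 2*d*s)
    + ((ε-a2)/(2*ε) + (-(d/(2*ε)))*s) * fm ((a1+a2+ε) + 2*d*s)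

lemma GHval (ε : ℝ) (fp fm : ℝ → ℝ) (a1 a2 d t : ℝ) :
    Hfun ε fp fm a1 a2 d t = Gfun ε fp fm (a1 + d*t, a2 + d*t) := by
  simp only [Hfun, Gfun]
  rw [show a1 + d*t + (a2 + d*t) - ε = (a1+a2-ε) + 2*d*t from by ring,
      show a1 + d*t + (a2 + d*t) + ε = (a1+a2+ε) + 2*d*t from by ring]
  ring

lemma concaveSeg (ε : ℝ) (hε : 0 < ε) (fp fm : ℝ → ℝ)
    (hfp : Differentiable ℝ fp) (hfp' : Differentiable ℝ (deriv fp))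
    (hfm : Differentiable ℝ fm) (hfm' : Differentiable ℝ (deriv fm))
    (u₁ u₂ : ℝ)
    (hin : ∀ u, u₁ ≤ u → u ≤ u₂ →
      0 ≤ deriv fm (u+ε) - deriv fp (u-ε) - 2*ε*deriv (deriv fp) (u-ε) ∧
      0 ≤ deriv fm (u+ε) - deriv fp (u-ε) - 2*ε*deriv (deriv fm) (u+ε))
    (a1 a2 d : ℝ)
    (hc : ∀ t, 0 ≤ t → t ≤ 1 →
      -ε ≤ a2 + d*t ∧ a2 + d*t ≤ ε ∧ u₁ ≤ a1+a2+2*d*t ∧ a1+a2+2*d*t ≤ u₂) :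
    ConcaveOn ℝ (Icc (0:ℝ) 1) (Hfun ε fp fm a1 a2 d) := by
  unfold Hfun
  apply concaveOn_of_deriv2_nonpos (convex_Icc 0 1)
    ((Hdiff hfp hfm _ _ _ _ _ _ _).continuous.continuousOn)
    ((Hdiff hfp hfm _ _ _ _ _ _ _).differentiableOn)
    ((Hdiff' hfp hfp' hfm hfm' _ _ _ _ _ _ _).differentiableOn)
  intro x hx
  rw [interior_Icc] at hx
  have hit : deriv^[2] (fun s => ((ε+a2)/(2*ε) + d/(2*ε)*s) * fp ((a1+a2-ε) + 2*d*s)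
      + ((ε-a2)/(2*ε) + (-(d/(2*ε)))*s) * fm ((a1+a2+ε) + 2*d*s)) x
      = deriv (deriv (fun s => ((ε+a2)/(2*ε) + d/(2*ε)*s) * fp ((a1+a2-ε) + 2*d*s)
      + ((ε-a2)/(2*ε) + (-(d/(2*ε)))*s) * fm ((a1+a2+ε) + 2*d*s))) x := by
    simp [Function.iterate_succ, Function.iterate_zero]
  rw [hit, Hderiv2 hfp hfp' hfm hfm' ((ε+a2)/(2*ε)) (d/(2*ε)) ((ε-a2)/(2*ε)) (-(d/(2*ε)))
      ((a1+a2-ε)) ((a1+a2+ε)) (2*d) x]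
  obtain ⟨hs1, hs2, hu1l, hu2l⟩ := hc x hx.1.le hx.2.le
  obtain ⟨hA, hB⟩ := hin (a1+a2+2*d*x) hu1l hu2l
  rw [show (a1+a2-ε) + 2*d*x = (a1+a2+2*d*x) - ε from by ring,
      show (a1+a2+ε) + 2*d*x = (a1+a2+2*d*x) + ε from by ring]
  set A1 := deriv fp ((a1+a2+2*d*x) - ε)
  set A2 := deriv (deriv fp) ((a1+a2+2*d*x) - ε)
  set B1 := deriv fm ((a1+a2+2*d*x) + ε)
  set B2 := deriv (deriv fm) ((a1+a2+2*d*x) + ε)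
  have heq : 2*(d/(2*ε))*(2*d)*A1 + ((ε+a2)/(2*ε)+d/(2*ε)*x)*A2*(2*d)*(2*d)
      + 2*(-(d/(2*ε)))*(2*d)*B1 + ((ε-a2)/(2*ε)+(-(d/(2*ε)))*x)*B2*(2*d)*(2*d)
      = (2*d^2/ε) * (A1 - B1 + (ε+(a2+d*x))*A2 + (ε-(a2+d*x))*B2) := by
    field_simp; ring
  have hbr : A1 - B1 + (ε+(a2+d*x))*A2 + (ε-(a2+d*x))*B2 ≤ 0 := by
    nlinarith [mul_nonneg (by linarith : (0:ℝ) ≤ ε+(a2+d*x)) hA,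
      mul_nonneg (by linarith : (0:ℝ) ≤ ε-(a2+d*x)) hB]
  have hprod : (2*d^2/ε) * (A1 - B1 + (ε+(a2+d*x))*A2 + (ε-(a2+d*x))*B2) ≤ 0 :=
    mul_nonpos_of_nonneg_of_nonpos (by positivity) hbr
  linarith [heq, hprod]

lemma strictSeg (ε : ℝ) (hε : 0 < ε) (fp fm : ℝ → ℝ)
    (hfp : Differentiable ℝ fp) (hfp' : Differentiable ℝ (deriv fp))
    (hfm : Differentiable ℝ fm) (hfm' : Differentiable ℝ (deriv fm))
    (a1 a2 d : ℝ) (hd : d ≠ 0)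
    (hbr : ∀ t, 0 ≤ t → t ≤ 1 →
      0 < deriv fp ((a1+a2+2*d*t) - ε) - deriv fm ((a1+a2+2*d*t) + ε)
          + (ε+(a2+d*t)) * deriv (deriv fp) ((a1+a2+2*d*t) - ε)
          + (ε-(a2+d*t)) * deriv (deriv fm) ((a1+a2+2*d*t) + ε)) :
    StrictConvexOn ℝ (Icc (0:ℝ) 1) (Hfun ε fp fm a1 a2 d) := by
  unfold Hfun
  apply strictConvexOn_of_deriv2_pos (convex_Icc 0 1)
    ((Hdiff hfp hfm _ _ _ _ _ _ _).continuous.continuousOn)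
  intro x hx
  rw [interior_Icc] at hx
  have hit : deriv^[2] (fun s => ((ε+a2)/(2*ε) + d/(2*ε)*s) * fp ((a1+a2-ε) + 2*d*s)
      + ((ε-a2)/(2*ε) + (-(d/(2*ε)))*s) * fm ((a1+a2+ε) + 2*d*s)) x
      = deriv (deriv (fun s => ((ε+a2)/(2*ε) + d/(2*ε)*s) * fp ((a1+a2-ε) + 2*d*s)
      + ((ε-a2)/(2*ε) + (-(d/(2*ε)))*s) * fm ((a1+a2+ε) + 2*d*s))) x := by
    simp [Function.iterate_succ, Function.iterate_zero]
  rw [hit, Hderiv2 hfp hfp' hfm hfm' ((ε+a2)/(2*ε)) (d/(2*ε)) ((ε-a2)/(2*ε)) (-(d/(2*ε)))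
      ((a1+a2-ε)) ((a1+a2+ε)) (2*d) x]
  have h := hbr x hx.1.le hx.2.le
  rw [show (a1+a2-ε) + 2*d*x = (a1+a2+2*d*x) - ε from by ring,
      show (a1+a2+ε) + 2*d*x = (a1+a2+2*d*x) + ε from by ring]
  set A1 := deriv fp ((a1+a2+2*d*x) - ε)
  set A2 := deriv (deriv fp) ((a1+a2+2*d*x) - ε)
  set B1 := deriv fm ((a1+a2+2*d*x) + ε)
  set B2 := deriv (deriv fm) ((a1+a2+2*d*x) + ε)
  have heq : 2*(d/(2*ε))*(2*d)*A1 + ((ε+a2)/(2*ε)+d/(2*ε)*x)*A2*(2*d)*(2*d)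
      + 2*(-(d/(2*ε)))*(2*d)*B1 + ((ε-a2)/(2*ε)+(-(d/(2*ε)))*x)*B2*(2*d)*(2*d)
      = (2*d^2/ε) * (A1 - B1 + (ε+(a2+d*x))*A2 + (ε-(a2+d*x))*B2) := by
    field_simp; ring
  have hprod : 0 < (2*d^2/ε) * (A1 - B1 + (ε+(a2+d*x))*A2 + (ε-(a2+d*x))*B2) :=
    mul_pos (by positivity) h
  linarith [heq, hprod]

lemma noStrict (ε : ℝ) (fp fm : ℝ → ℝ) (u₁ u₂ : ℝ)
    (hdc : DiagConcaveOn (OmL ε u₁ u₂) (Gfun ε fp fm))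
    (a1 a2 d : ℝ)
    (hsub : segment ℝ ((a1, a2) : ℝ × ℝ) ((a1+d, a2+d) : ℝ × ℝ) ⊆ OmL ε u₁ u₂)
    (hsc : StrictConvexOn ℝ (Icc (0:ℝ) 1) (Hfun ε fp fm a1 a2 d)) : False := by
  have hma : ((a1, a2) : ℝ × ℝ) ∈ OmL ε u₁ u₂ := hsub (left_mem_segment ℝ _ _)
  have hmb : ((a1+d, a2+d) : ℝ × ℝ) ∈ OmL ε u₁ u₂ := hsub (right_mem_segment ℝ _ _)
  have hk := hdc (a1, a2) (a1+d, a2+d) hma hmb (Or.inl (by show a1+d-a1 = a2+d-a2; ring)) hsub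
    (1/2) (by norm_num) (by norm_num)
  have hs := hsc.2 (show (0:ℝ) ∈ Icc (0:ℝ) 1 by norm_num) (show (1:ℝ) ∈ Icc (0:ℝ) 1 by norm_num)
    (by norm_num) (by norm_num : (0:ℝ) < 1/2) (by norm_num : (0:ℝ) < 1/2) (by norm_num)
  rw [show ((1/2 : ℝ) • (0:ℝ) + (1/2 : ℝ) • (1:ℝ)) = (1/2 : ℝ) by norm_num] at hs
  rw [GHval, GHval, GHval] at hs
  have hpair : ((1/2 : ℝ)) • ((a1, a2) : ℝ × ℝ) + (1 - (1/2 : ℝ)) • ((a1+d, a2+d) : ℝ × ℝ)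
      = ((a1 + d*(1/2), a2 + d*(1/2)) : ℝ × ℝ) := by
    simp only [Prod.smul_mk, smul_eq_mul, Prod.mk_add_mk, Prod.mk.injEq]
    constructor <;> ring
  rw [hpair] at hk
  rw [show a1 + d*0 = a1 from by ring, show a2 + d*0 = a2 from by ring,
      show a1 + d*1 = a1 + d from by ring, show a2 + d*1 = a2 + d from by ring] at hs
  simp only [smul_eq_mul] at hs
  linarith

set_option maxHeartbeats 1000000 in
/-- The function `B` built from boundary data by linearity along left extremal segments is a
Bellman candidate (i.e. diagonally concave) on `Ω_L(u₁,u₂)` iff the two inequalities hold for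
all `u ∈ (u₁,u₂)`. -/
theorem left_simple_foliation_candidate_iff
    (ε : ℝ) (hε : 0 < ε) (fp fm : ℝ → ℝ)
    (hfp : ContDiff ℝ (⊤ : ℕ∞) fp) (hfm : ContDiff ℝ (⊤ : ℕ∞) fm)
    (u₁ u₂ : ℝ) (h12 : u₁ < u₂) :
    DiagConcaveOn (OmL ε u₁ u₂)
      (fun x : ℝ × ℝ =>
        ((ε + x.2) / (2 * ε)) * fp (x.1 + x.2 - ε) +
        ((ε - x.2) / (2 * ε)) * fm (x.1 + x.2 + ε)) ↔
    ∀ u ∈ Set.Ioo u₁ u₂,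
      0 ≤ deriv fm (u + ε) - deriv fp (u - ε) - 2 * ε * deriv (deriv fp) (u - ε) ∧
      0 ≤ deriv fm (u + ε) - deriv fp (u - ε) - 2 * ε * deriv (deriv fm) (u + ε) := by
  have hfpi : ContDiff ℝ (⊤ : ℕ∞) fp := hfp.of_le (by simp)
  have hfmi : ContDiff ℝ (⊤ : ℕ∞) fm := hfm.of_le (by simp)
  have hfp1 : Differentiable ℝ fp := hfpi.differentiable (by simp)
  have hfm1 : Differentiable ℝ fm := hfmi.differentiable (by simp)
  have hfpD : ContDiff ℝ (⊤ : ℕ∞) (deriv fp) := (contDiff_infty_iff_deriv.mp hfpi).2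
  have hfmD : ContDiff ℝ (⊤ : ℕ∞) (deriv fm) := (contDiff_infty_iff_deriv.mp hfmi).2
  have hfp2 : Differentiable ℝ (deriv fp) := hfpD.differentiable (by simp)
  have hfm2 : Differentiable ℝ (deriv fm) := hfmD.differentiable (by simp)
  have hfp2c : Continuous (deriv fp) := hfpD.continuous
  have hfm2c : Continuous (deriv fm) := hfmD.continuous
  have hfp3c : Continuous (deriv (deriv fp)) := ((contDiff_infty_iff_deriv.mp hfpD).2).continuous
  have hfm3c : Continuous (deriv (deriv fm)) := ((contDiff_infty_iff_deriv.mp hfmD).2).continuous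
  show DiagConcaveOn (OmL ε u₁ u₂) (Gfun ε fp fm) ↔ _
  constructor
  ·
    intro hdc u hu
    constructor
    · by_contra hcon
      push_neg at hcon
      have c1 : Continuous (fun S : ℝ => u + 2*(S-ε) - ε) := by continuity
      have c2 : Continuous (fun S : ℝ => u + 2*(S-ε) + ε) := by continuity
      have hcont : Continuous (fun S : ℝ =>
          deriv fp (u + 2*(S-ε) - ε) - deriv fm (u + 2*(S-ε) + ε)
          + (ε+S)*deriv (deriv fp) (u + 2*(S-ε) - ε)
          + (ε-S)*deriv (deriv fm) (u + 2*(S-ε) + ε)) :=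
        (((hfp2c.comp c1).sub (hfm2c.comp c2)).add
          ((continuous_const.add continuous_id).mul (hfp3c.comp c1))).add
          ((continuous_const.sub continuous_id).mul (hfm3c.comp c2))
      have hopen : IsOpen {S : ℝ | 0 <
          deriv fp (u + 2*(S-ε) - ε) - deriv fm (u + 2*(S-ε) + ε)
          + (ε+S)*deriv (deriv fp) (u + 2*(S-ε) - ε)
          + (ε-S)*deriv (deriv fm) (u + 2*(S-ε) + ε)} :=
        isOpen_lt continuous_const hcont
      have hmemε : ε ∈ {S : ℝ | 0 <
          deriv fp (u + 2*(S-ε) - ε) - deriv fm (u + 2*(S-ε) + ε)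
          + (ε+S)*deriv (deriv fp) (u + 2*(S-ε) - ε)
          + (ε-S)*deriv (deriv fm) (u + 2*(S-ε) + ε)} := by
        simp only [mem_setOf_eq]
        rw [show u + 2*(ε-ε) - ε = u - ε from by ring,
            show u + 2*(ε-ε) + ε = u + ε from by ring,
            show (ε - ε : ℝ) = 0 from by ring]
        linarith
      obtain ⟨δ, hδ0, hball⟩ := Metric.isOpen_iff.mp hopen ε hmemε
      set r := min δ (min (u - u₁) ε) / 2 with hrdef
      have m1 := min_le_left δ (min (u - u₁) ε)
      have m2 := min_le_right δ (min (u - u₁) ε)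
      have m3 := min_le_left (u - u₁) ε
      have m4 := min_le_right (u - u₁) ε
      have hrm : 0 < min δ (min (u - u₁) ε) := lt_min hδ0 (lt_min (by linarith [hu.1]) hε)
      have hr0 : 0 < r := by rw [hrdef]; linarith
      have hrδ : r < δ := by rw [hrdef]; linarith
      have hru : 2*r ≤ u - u₁ := by rw [hrdef]; linarith
      have hrε : 2*r ≤ ε := by rw [hrdef]; linarith
      apply noStrict ε fp fm u₁ u₂ hdc (u - ε - r) (ε - r) r
      · rintro x ⟨p, q, hp, hq, hpq, rfl⟩
        have e1 : p*ε + q*ε = ε := by rw [← add_mul, hpq, one_mul]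
        have e2 : p*r + q*r = r := by rw [← add_mul, hpq, one_mul]
        have e3 : p*u + q*u = u := by rw [← add_mul, hpq, one_mul]
        have h4 : 0 ≤ p*r := mul_nonneg hp hr0.le
        have h5 : 0 ≤ q*r := mul_nonneg hq hr0.le
        simp only [OmL, mem_setOf_eq, Prod.smul_mk, smul_eq_mul, Prod.mk_add_mk]
        refine ⟨by linarith, by linarith, by linarith [hu.1], by linarith [hu.2]⟩
      · apply strictSeg ε hε fp fm hfp1 hfp2 hfm1 hfm2 _ _ r hr0.ne'
        intro t ht0 ht1
        have hmem : (ε - r + r*t) ∈ Metric.ball ε δ := by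
          rw [Metric.mem_ball, Real.dist_eq]
          have habs : |ε - r + r*t - ε| = r - r*t := by
            rw [show ε - r + r*t - ε = -(r - r*t) from by ring, abs_neg]
            exact abs_of_nonneg (by nlinarith [mul_le_of_le_one_right hr0.le ht1])
          rw [habs]
          nlinarith [mul_nonneg hr0.le ht0]
        have h := hball hmem
        simp only [mem_setOf_eq] at h
        rw [show u - ε - r + (ε - r) + 2*r*t - ε = u + 2*(ε - r + r*t - ε) - ε from by ring,
            show u - ε - r + (ε - r) + 2*r*t + ε = u + 2*(ε - r + r*t - ε) + ε from by ring]
        exact h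
    · by_contra hcon
      push_neg at hcon
      have c1 : Continuous (fun S : ℝ => u + 2*(S+ε) - ε) := by continuity
      have c2 : Continuous (fun S : ℝ => u + 2*(S+ε) + ε) := by continuity
      have hcont : Continuous (fun S : ℝ =>
          deriv fp (u + 2*(S+ε) - ε) - deriv fm (u + 2*(S+ε) + ε)
          + (ε+S)*deriv (deriv fp) (u + 2*(S+ε) - ε)
          + (ε-S)*deriv (deriv fm) (u + 2*(S+ε) + ε)) :=
        (((hfp2c.comp c1).sub (hfm2c.comp c2)).add
          ((continuous_const.add continuous_id).mul (hfp3c.comp c1))).add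
          ((continuous_const.sub continuous_id).mul (hfm3c.comp c2))
      have hopen : IsOpen {S : ℝ | 0 <
          deriv fp (u + 2*(S+ε) - ε) - deriv fm (u + 2*(S+ε) + ε)
          + (ε+S)*deriv (deriv fp) (u + 2*(S+ε) - ε)
          + (ε-S)*deriv (deriv fm) (u + 2*(S+ε) + ε)} :=
        isOpen_lt continuous_const hcont
      have hmemε : (-ε : ℝ) ∈ {S : ℝ | 0 <
          deriv fp (u + 2*(S+ε) - ε) - deriv fm (u + 2*(S+ε) + ε)
          + (ε+S)*deriv (deriv fp) (u + 2*(S+ε) - ε)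
          + (ε-S)*deriv (deriv fm) (u + 2*(S+ε) + ε)} := by
        simp only [mem_setOf_eq]
        rw [show u + 2*(-ε+ε) - ε = u - ε from by ring,
            show u + 2*(-ε+ε) + ε = u + ε from by ring,
            show (ε + -ε : ℝ) = 0 from by ring,
            show (ε - -ε : ℝ) = ε + ε from by ring]
        linarith
      obtain ⟨δ, hδ0, hball⟩ := Metric.isOpen_iff.mp hopen (-ε) hmemε
      set r := min δ (min (u₂ - u) ε) / 2 with hrdef
      have m1 := min_le_left δ (min (u₂ - u) ε)
      have m2 := min_le_right δ (min (u₂ - u) ε)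
      have m3 := min_le_left (u₂ - u) ε
      have m4 := min_le_right (u₂ - u) ε
      have hrm : 0 < min δ (min (u₂ - u) ε) := lt_min hδ0 (lt_min (by linarith [hu.2]) hε)
      have hr0 : 0 < r := by rw [hrdef]; linarith
      have hrδ : r < δ := by rw [hrdef]; linarith
      have hru : 2*r ≤ u₂ - u := by rw [hrdef]; linarith
      have hrε : 2*r ≤ ε := by rw [hrdef]; linarith
      apply noStrict ε fp fm u₁ u₂ hdc (u + ε) (-ε) r
      · rintro x ⟨p, q, hp, hq, hpq, rfl⟩
        have e1 : p*ε + q*ε = ε := by rw [← add_mul, hpq, one_mul]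
        have e2 : p*r + q*r = r := by rw [← add_mul, hpq, one_mul]
        have e3 : p*u + q*u = u := by rw [← add_mul, hpq, one_mul]
        have h4 : 0 ≤ p*r := mul_nonneg hp hr0.le
        have h5 : 0 ≤ q*r := mul_nonneg hq hr0.le
        simp only [OmL, mem_setOf_eq, Prod.smul_mk, smul_eq_mul, Prod.mk_add_mk]
        refine ⟨by linarith, by linarith, by linarith [hu.1], by linarith [hu.2]⟩
      · apply strictSeg ε hε fp fm hfp1 hfp2 hfm1 hfm2 _ _ r hr0.ne'
        intro t ht0 ht1
        have hmem : (-ε + r*t) ∈ Metric.ball (-ε) δ := by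
          rw [Metric.mem_ball, Real.dist_eq]
          have habs : |-ε + r*t - -ε| = r*t := by
            rw [show -ε + r*t - -ε = r*t from by ring]
            exact abs_of_nonneg (mul_nonneg hr0.le ht0)
          rw [habs]
          nlinarith [mul_le_of_le_one_right hr0.le ht1]
        have h := hball hmem
        simp only [mem_setOf_eq] at h
        rw [show u + ε + -ε + 2*r*t - ε = u + 2*(-ε + r*t + ε) - ε from by ring,
            show u + ε + -ε + 2*r*t + ε = u + 2*(-ε + r*t + ε) + ε from by ring]
        exact h
  · -- backward direction
    intro hin
    have hIcc : ∀ u, u₁ ≤ u → u ≤ u₂ →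
        0 ≤ deriv fm (u+ε) - deriv fp (u-ε) - 2*ε*deriv (deriv fp) (u-ε) ∧
        0 ≤ deriv fm (u+ε) - deriv fp (u-ε) - 2*ε*deriv (deriv fm) (u+ε) := by
      intro u h1 h2
      have hucl : u ∈ closure (Ioo u₁ u₂) := by
        rw [closure_Ioo h12.ne]; exact ⟨h1, h2⟩
      have cplus : Continuous (fun u : ℝ => u + ε) := continuous_id.add continuous_const
      have cminus : Continuous (fun u : ℝ => u - ε) := continuous_id.sub continuous_const
      constructor
      · have hc : Continuous (fun u : ℝ =>
            deriv fm (u+ε) - deriv fp (u-ε) - 2*ε*deriv (deriv fp) (u-ε)) :=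
          ((hfm2c.comp cplus).sub (hfp2c.comp cminus)).sub
            (continuous_const.mul (hfp3c.comp cminus))
        exact closure_minimal (fun v hv => (hin v hv).1)
          (isClosed_le continuous_const hc) hucl
      · have hc : Continuous (fun u : ℝ =>
            deriv fm (u+ε) - deriv fp (u-ε) - 2*ε*deriv (deriv fm) (u+ε)) :=
          ((hfm2c.comp cplus).sub (hfp2c.comp cminus)).sub
            (continuous_const.mul (hfm3c.comp cplus))
        exact closure_minimal (fun v hv => (hin v hv).2)
          (isClosed_le continuous_const hc) hucl
    intro a b ha hb hdir hseg θ hθ0 hθ1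
    rcases hdir with hdir | hdir
    · -- diagonal direction (1,1)
      have hbeq : b = ((a.1 + (b.2 - a.2), a.2 + (b.2 - a.2)) : ℝ × ℝ) := by
        refine Prod.ext_iff.mpr ⟨?_, ?_⟩
        · show b.1 = a.1 + (b.2 - a.2); linarith
        · show b.2 = a.2 + (b.2 - a.2); ring
      have hc : ∀ t, 0 ≤ t → t ≤ 1 →
          -ε ≤ a.2 + (b.2 - a.2)*t ∧ a.2 + (b.2 - a.2)*t ≤ ε ∧
          u₁ ≤ a.1+a.2+2*(b.2 - a.2)*t ∧ a.1+a.2+2*(b.2 - a.2)*t ≤ u₂ := by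
        intro t h0 h1
        have hm := hseg (⟨1-t, t, by linarith, h0, by ring, rfl⟩ :
          (1-t) • a + t • b ∈ segment ℝ a b)
        rw [hbeq] at hm
        simp only [OmL, mem_setOf_eq, Prod.fst_add, Prod.snd_add, Prod.smul_fst,
          Prod.smul_snd, smul_eq_mul] at hm
        obtain ⟨m1, m2, m3, m4⟩ := hm
        refine ⟨by linarith, by linarith, by linarith, by linarith⟩
      have hcc : ConcaveOn ℝ (Icc (0:ℝ) 1) (Hfun ε fp fm a.1 a.2 (b.2 - a.2)) :=
        concaveSeg ε hε fp fm hfp1 hfp2 hfm1 hfm2 u₁ u₂ hIcc a.1 a.2 _ hc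
      have hk := hcc.2 (show (0:ℝ) ∈ Icc (0:ℝ) 1 by norm_num)
        (show (1:ℝ) ∈ Icc (0:ℝ) 1 by norm_num) hθ0 (by linarith : 0 ≤ 1-θ)
        (by ring : θ + (1-θ) = 1)
      rw [show (θ • (0:ℝ) + (1-θ) • (1:ℝ)) = 1-θ from by simp] at hk
      simp only [smul_eq_mul] at hk
      rw [GHval, GHval, GHval] at hk
      rw [show ((a.1 + (b.2-a.2)*0, a.2 + (b.2-a.2)*0) : ℝ × ℝ) = a from by simp] at hk
      rw [show ((a.1 + (b.2-a.2)*1, a.2 + (b.2-a.2)*1) : ℝ × ℝ) = b from by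
        rw [mul_one]; exact hbeq.symm] at hk
      have hcombo : θ • a + (1-θ) • b
          = ((a.1 + (b.2-a.2)*(1-θ), a.2 + (b.2-a.2)*(1-θ)) : ℝ × ℝ) := by
        rw [hbeq]
        refine Prod.ext_iff.mpr ⟨?_, ?_⟩ <;>
          simp only [Prod.fst_add, Prod.snd_add, Prod.smul_fst, Prod.smul_snd,
            smul_eq_mul] <;> ring
      rw [hcombo]
      exact hk
    · -- antidiagonal direction (1,-1): equality
      have hsum : b.1 + b.2 = a.1 + a.2 := by linarith
      simp only [Gfun, Prod.fst_add, Prod.snd_add, Prod.smul_fst, Prod.smul_snd, smul_eq_mul]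
      rw [show θ*a.1+(1-θ)*b.1 + (θ*a.2+(1-θ)*b.2) - ε = a.1 + a.2 - ε from by
            linear_combination (1-θ)*hsum,
          show θ*a.1+(1-θ)*b.1 + (θ*a.2+(1-θ)*b.2) + ε = a.1 + a.2 + ε from by
            linear_combination (1-θ)*hsum,
          show b.1 + b.2 - ε = a.1 + a.2 - ε from by linarith,
          show b.1 + b.2 + ε = a.1 + a.2 + ε from by linarith]
      exact le_of_eq (by ring)
end
end

section
/- Let u ∈ ℝ. If f₊′(u) > f₋′(u), then for all sufficiently small ε > 0 there exists δ = δ(ε) > 0 such that the inequalities f₊′(v+ε) − f₋′(v−ε) − 2ε·f₊″(v+ε) ≥ 0 and f₊′(v+ε) − f₋′(v−ε) − 2ε·f₋″(v−ε) ≥ 0 hold for all v ∈ (u−δ, u+δ); consequently the function B(x₁,x₂) = ((ε+x₂)/(2ε))·f₊(x₁−x₂+ε) + ((ε−x₂)/(2ε))·f₋(x₁−x₂−ε) is diagonally concave on Ω_R(u−δ,u+δ). If instead f₊′(u) < f₋′(u), then for all sufficiently small ε > 0 there exists δ = δ(ε) > 0 such that f₋′(v+ε) − f₊′(v−ε) −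 2ε·f₊″(v−ε) ≥ 0 and f₋′(v+ε) − f₊′(v−ε) − 2ε·f₋″(v+ε) ≥ 0 hold for all v ∈ (u−δ, u+δ); consequently the function B(x₁,x₂) = ((ε+x₂)/(2ε))·f₊(x₁+x₂−ε) + ((ε−x₂)/(2ε))·f₋(x₁+x₂+ε) is diagonally concave on Ω_L(u−δ,u+δ). -/
open Set

noncomputable section

lemma hasDerivAt_shift {f : ℝ → ℝ} (hf : Differentiable ℝ f) (c s : ℝ) :
    HasDerivAt (fun t => f (t + c)) (deriv f (s + c)) s := by
  have h := (hf (s + c)).hasDerivAt.comp s ((hasDerivAt_id s).add_const c)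
  exact h.congr_deriv (by simp)

lemma hasDerivAt_shift' {f : ℝ → ℝ} (hf : Differentiable ℝ f) (c s : ℝ) :
    HasDerivAt (fun t => f (t - c)) (deriv f (s - c)) s := by
  have h := (hf (s - c)).hasDerivAt.comp s ((hasDerivAt_id s).sub_const c)
  exact h.congr_deriv (by simp)

/-- Concavity of the one-dimensional restriction of the Bellman candidate. -/
lemma concaveOn_g (fp fm : ℝ → ℝ) (hp1 : Differentiable ℝ fp) (hp2 : Differentiable ℝ (deriv fp))
    (hm1 : Differentiable ℝ fm) (hm2 : Differentiable ℝ (deriv fm))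
    (ε c2 : ℝ) (hε : 0 < ε) (D : Set ℝ) (hD : Convex ℝ D)
    (hcond : ∀ s ∈ D, -ε ≤ (c2 - s)/2 ∧ (c2 - s)/2 ≤ ε ∧
      0 ≤ deriv fp (s+ε) - deriv fm (s-ε) - 2*ε*deriv (deriv fp) (s+ε) ∧
      0 ≤ deriv fp (s+ε) - deriv fm (s-ε) - 2*ε*deriv (deriv fm) (s-ε)) :
    ConcaveOn ℝ D (fun s =>
      ((ε + (c2 - s)/2)/(2*ε)) * fp (s+ε) + ((ε - (c2 - s)/2)/(2*ε)) * fm (s-ε)) := by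
  have hα : ∀ s : ℝ, HasDerivAt (fun t => (ε + (c2 - t)/2)/(2*ε)) (-1/2/(2*ε)) s := by
    intro s
    have h := (((((hasDerivAt_id s).const_sub c2).div_const 2).const_add ε).div_const (2*ε))
    exact h.congr_deriv (by ring)
  have hβ : ∀ s : ℝ, HasDerivAt (fun t => (ε - (c2 - t)/2)/(2*ε)) (1/2/(2*ε)) s := by
    intro s
    have h := (((((hasDerivAt_id s).const_sub c2).div_const 2).const_sub ε).div_const (2*ε))
    exact h.congr_deriv (by ring)
  have hg : ∀ s : ℝ, HasDerivAt (fun t =>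
      ((ε + (c2 - t)/2)/(2*ε)) * fp (t+ε) + ((ε - (c2 - t)/2)/(2*ε)) * fm (t-ε))
      ((-1/2/(2*ε)) * fp (s+ε) + ((ε + (c2 - s)/2)/(2*ε)) * deriv fp (s+ε)
        + ((1/2/(2*ε)) * fm (s-ε) + ((ε - (c2 - s)/2)/(2*ε)) * deriv fm (s-ε))) s := by
    intro s
    have H := ((hα s).mul (hasDerivAt_shift hp1 ε s)).add ((hβ s).mul (hasDerivAt_shift' hm1 ε s))
    exact H.congr_deriv (by ring)
  have hg1 : ∀ s : ℝ, HasDerivAt (fun t =>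
      (-1/2/(2*ε)) * fp (t+ε) + ((ε + (c2 - t)/2)/(2*ε)) * deriv fp (t+ε)
        + ((1/2/(2*ε)) * fm (t-ε) + ((ε - (c2 - t)/2)/(2*ε)) * deriv fm (t-ε)))
      ((-1/(2*ε)) * deriv fp (s+ε) + ((ε + (c2 - s)/2)/(2*ε)) * deriv (deriv fp) (s+ε)
        + ((1/(2*ε)) * deriv fm (s-ε) + ((ε - (c2 - s)/2)/(2*ε)) * deriv (deriv fm) (s-ε))) s := by
    intro s
    have H := (((hasDerivAt_shift hp1 ε s).const_mul (-1/2/(2*ε))).add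
        ((hα s).mul (hasDerivAt_shift hp2 ε s))).add
      (((hasDerivAt_shift' hm1 ε s).const_mul (1/2/(2*ε))).add
        ((hβ s).mul (hasDerivAt_shift' hm2 ε s)))
    exact H.congr_deriv (by ring)
  have hder : deriv (fun t =>
      ((ε + (c2 - t)/2)/(2*ε)) * fp (t+ε) + ((ε - (c2 - t)/2)/(2*ε)) * fm (t-ε)) = fun s =>
      (-1/2/(2*ε)) * fp (s+ε) + ((ε + (c2 - s)/2)/(2*ε)) * deriv fp (s+ε)
        + ((1/2/(2*ε)) * fm (s-ε) + ((ε - (c2 - s)/2)/(2*ε)) * deriv fm (s-ε)) :=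
    funext fun s => (hg s).deriv
  apply concaveOn_of_deriv2_nonpos' hD
  · exact fun s _ => (hg s).differentiableAt.differentiableWithinAt
  · rw [hder]
    exact fun s _ => (hg1 s).differentiableAt.differentiableWithinAt
  · intro s hs
    obtain ⟨hy1, hy2, hE1, hE2⟩ := hcond s hs
    have h2 : deriv^[2] (fun t =>
        ((ε + (c2 - t)/2)/(2*ε)) * fp (t+ε) + ((ε - (c2 - t)/2)/(2*ε)) * fm (t-ε)) s
        = (-1/(2*ε)) * deriv fp (s+ε) + ((ε + (c2 - s)/2)/(2*ε)) * deriv (deriv fp) (s+ε)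
          + ((1/(2*ε)) * deriv fm (s-ε) + ((ε - (c2 - s)/2)/(2*ε)) * deriv (deriv fm) (s-ε)) := by
      show deriv (deriv (fun t =>
        ((ε + (c2 - t)/2)/(2*ε)) * fp (t+ε) + ((ε - (c2 - t)/2)/(2*ε)) * fm (t-ε))) s = _
      rw [hder, (hg1 s).deriv]
    rw [h2]
    have key : 0 ≤ ((ε + (c2 - s)/2)/(2*ε)) *
          (deriv fp (s+ε) - deriv fm (s-ε) - 2*ε*deriv (deriv fp) (s+ε))
        + ((ε - (c2 - s)/2)/(2*ε)) *
          (deriv fp (s+ε) - deriv fm (s-ε) - 2*ε*deriv (deriv fm) (s-ε)) :=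
      add_nonneg (mul_nonneg (div_nonneg (by linarith) (by linarith)) hE1)
        (mul_nonneg (div_nonneg (by linarith) (by linarith)) hE2)
    have hVeq : (-1/(2*ε)) * deriv fp (s+ε) + ((ε + (c2 - s)/2)/(2*ε)) * deriv (deriv fp) (s+ε)
          + ((1/(2*ε)) * deriv fm (s-ε) + ((ε - (c2 - s)/2)/(2*ε)) * deriv (deriv fm) (s-ε))
        = -(((ε + (c2 - s)/2)/(2*ε)) *
            (deriv fp (s+ε) - deriv fm (s-ε) - 2*ε*deriv (deriv fp) (s+ε))
          + ((ε - (c2 - s)/2)/(2*ε)) *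
            (deriv fp (s+ε) - deriv fm (s-ε) - 2*ε*deriv (deriv fm) (s-ε))) / (2*ε) := by
      field_simp
      ring
    rw [hVeq]
    apply div_nonpos_of_nonpos_of_nonneg (by linarith) (by linarith)

/-- Reflection `x₂ ↦ -x₂` preserves diagonal concavity. -/
lemma DiagConcaveOn.reflect {S : Set (ℝ × ℝ)} {G : ℝ × ℝ → ℝ} (h : DiagConcaveOn S G) :
    DiagConcaveOn {x : ℝ × ℝ | (x.1, -x.2) ∈ S} (fun x => G (x.1, -x.2)) := by
  intro a b ha hb hdir hseg θ hθ0 hθ1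
  have hdir' : ((b.1, -b.2) : ℝ × ℝ).1 - ((a.1, -a.2) : ℝ × ℝ).1 =
      ((b.1, -b.2) : ℝ × ℝ).2 - ((a.1, -a.2) : ℝ × ℝ).2 ∨
      ((b.1, -b.2) : ℝ × ℝ).1 - ((a.1, -a.2) : ℝ × ℝ).1 =
      -(((b.1, -b.2) : ℝ × ℝ).2 - ((a.1, -a.2) : ℝ × ℝ).2) := by
    rcases hdir with h1 | h1
    · right; simp only; linarith
    · left; simp only; linarith
  have hseg' : segment ℝ ((a.1, -a.2) : ℝ × ℝ) ((b.1, -b.2) : ℝ × ℝ) ⊆ S := by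
    rintro x ⟨p, q, hp, hq, hpq, rfl⟩
    have h1 : p • a + q • b ∈ {x : ℝ × ℝ | (x.1, -x.2) ∈ S} := hseg ⟨p, q, hp, hq, hpq, rfl⟩
    have h2 : p • ((a.1, -a.2) : ℝ × ℝ) + q • ((b.1, -b.2) : ℝ × ℝ)
        = (((p • a + q • b : ℝ × ℝ)).1, -((p • a + q • b : ℝ × ℝ)).2) := by
      apply Prod.ext <;> simp <;> ring
    rw [h2]
    exact h1
  have key := h (a.1, -a.2) (b.1, -b.2) ha hb hdir' hseg' θ hθ0 hθ1
  have hpt : θ • ((a.1, -a.2) : ℝ × ℝ) + (1 - θ) • ((b.1, -b.2) : ℝ × ℝ)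
      = ((θ • a + (1 - θ) • b : ℝ × ℝ).1, -((θ • a + (1 - θ) • b : ℝ × ℝ)).2) := by
    apply Prod.ext <;> simp <;> ring
  rw [hpt] at key
  exact key

lemma DiagConcaveOn.congr {S S' : Set (ℝ × ℝ)} {G G' : ℝ × ℝ → ℝ} (h : DiagConcaveOn S G)
    (hS : S' = S) (hG : ∀ x, G' x = G x) : DiagConcaveOn S' G' := by
  subst hS
  intro a b ha hb hdir hseg θ h0 h1
  rw [hG, hG, hG]
  exact h a b ha hb hdir hseg θ h0 h1

/-- The right (OmR) half of the theorem, as a standalone lemma. -/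
lemma part1 (fp fm : ℝ → ℝ) (hfp : ContDiff ℝ (⊤ : ℕ∞) fp) (hfm : ContDiff ℝ (⊤ : ℕ∞) fm) (u : ℝ)
    (hlt : deriv fm u < deriv fp u) :
    ∃ ε₁ > (0:ℝ), ∀ ε : ℝ, 0 < ε → ε ≤ ε₁ →
      ∃ δ > (0:ℝ),
        (∀ v ∈ Set.Ioo (u - δ) (u + δ),
          0 ≤ deriv fp (v + ε) - deriv fm (v - ε) - 2 * ε * deriv (deriv fp) (v + ε) ∧
          0 ≤ deriv fp (v + ε) - deriv fm (v - ε) - 2 * ε * deriv (deriv fm) (v - ε)) ∧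
        DiagConcaveOn (OmR ε (u - δ) (u + δ))
          (fun x : ℝ × ℝ =>
            ((ε + x.2) / (2 * ε)) * fp (x.1 - x.2 + ε) +
            ((ε - x.2) / (2 * ε)) * fm (x.1 - x.2 - ε)) := by
  have hp0 := contDiff_infty_iff_deriv.mp (hfp.of_le (by simp))
  have hp1' := contDiff_infty_iff_deriv.mp hp0.2
  have hp2' := contDiff_infty_iff_deriv.mp hp1'.2
  have hm0 := contDiff_infty_iff_deriv.mp (hfm.of_le (by simp))
  have hm1' := contDiff_infty_iff_deriv.mp hm0.2
  have hm2' := contDiff_infty_iff_deriv.mp hm1'.2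
  have hp1 : Differentiable ℝ fp := hp0.1
  have hp2 : Differentiable ℝ (deriv fp) := hp1'.1
  have hp3 : Differentiable ℝ (deriv (deriv fp)) := hp2'.1
  have hm1 : Differentiable ℝ fm := hm0.1
  have hm2 : Differentiable ℝ (deriv fm) := hm1'.1
  have hm3 : Differentiable ℝ (deriv (deriv fm)) := hm2'.1
  -- continuous functions of (ε, v)
  set A : ℝ × ℝ → ℝ := fun p =>
    deriv fp (p.2 + p.1) - deriv fm (p.2 - p.1) - 2 * p.1 * deriv (deriv fp) (p.2 + p.1) with hA
  set B : ℝ × ℝ → ℝ := fun p =>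
    deriv fp (p.2 + p.1) - deriv fm (p.2 - p.1) - 2 * p.1 * deriv (deriv fm) (p.2 - p.1) with hB
  have hAc : Continuous A := by
    apply Continuous.sub
    · exact (hp2.continuous.comp (continuous_snd.add continuous_fst)).sub
        (hm2.continuous.comp (continuous_snd.sub continuous_fst))
    · exact (continuous_const.mul continuous_fst).mul
        (hp3.continuous.comp (continuous_snd.add continuous_fst))
  have hBc : Continuous B := by
    apply Continuous.sub
    · exact (hp2.continuous.comp (continuous_snd.add continuous_fst)).sub
        (hm2.continuous.comp (continuous_snd.sub continuous_fst))
    · exact (continuous_const.mul continuous_fst).mul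
        (hm3.continuous.comp (continuous_snd.sub continuous_fst))
  have hopen : IsOpen {p : ℝ × ℝ | 0 < A p ∧ 0 < B p} :=
    (isOpen_lt continuous_const hAc).inter (isOpen_lt continuous_const hBc)
  have hmem : ((0 : ℝ), u) ∈ {p : ℝ × ℝ | 0 < A p ∧ 0 < B p} := by
    constructor <;> · show (0:ℝ) < _ ; simp [hA, hB]; linarith
  obtain ⟨r, hr, hball⟩ := Metric.isOpen_iff.mp hopen _ hmem
  have key : ∀ ε v : ℝ, 0 < ε → ε ≤ r/2 → u - r/2 ≤ v → v ≤ u + r/2 →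
      0 < A (ε, v) ∧ 0 < B (ε, v) := by
    intro ε v hε hεr hv1 hv2
    apply hball
    rw [Metric.mem_ball, Prod.dist_eq, max_lt_iff]
    constructor
    · rw [show ((ε, v) : ℝ × ℝ).1 = ε from rfl, show ((0, u) : ℝ × ℝ).1 = (0:ℝ) from rfl,
        Real.dist_eq, abs_lt]
      constructor <;> linarith
    · rw [show ((ε, v) : ℝ × ℝ).2 = v from rfl, show ((0, u) : ℝ × ℝ).2 = u from rfl,
        Real.dist_eq, abs_lt]
      constructor <;> linarith
  refine ⟨r/2, by linarith, ?_⟩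
  intro ε hε hεr
  refine ⟨r/2, by linarith, ?_, ?_⟩
  · intro v hv
    have h := key ε v hε hεr (le_of_lt hv.1) (le_of_lt hv.2)
    exact ⟨le_of_lt h.1, le_of_lt h.2⟩
  · intro a b ha hb hdir hseg θ hθ0 hθ1
    simp only [Prod.fst_add, Prod.snd_add, Prod.smul_fst, Prod.smul_snd, smul_eq_mul]
    rcases hdir with hdir | hdir
    · -- direction (1,1): affine, equality
      have e1 : θ * a.1 + (1 - θ) * b.1 - (θ * a.2 + (1 - θ) * b.2) + ε = a.1 - a.2 + ε := by
        linear_combination (1 - θ) * hdir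
      have e2 : θ * a.1 + (1 - θ) * b.1 - (θ * a.2 + (1 - θ) * b.2) - ε = a.1 - a.2 - ε := by
        linear_combination (1 - θ) * hdir
      have e3 : b.1 - b.2 + ε = a.1 - a.2 + ε := by linear_combination hdir
      have e4 : b.1 - b.2 - ε = a.1 - a.2 - ε := by linear_combination hdir
      rw [e1, e2, e3, e4]
      apply le_of_eq
      ring
    · -- direction (1,-1)
      have hsum : b.1 + b.2 = a.1 + a.2 := by linarith
      have hconc := concaveOn_g fp fm hp1 hp2 hm1 hm2 ε (a.1 + a.2) hε
        (uIcc (a.1 - a.2) (b.1 - b.2)) (convex_uIcc _ _) ?_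
      · have h := hconc.2 (left_mem_uIcc) (right_mem_uIcc) hθ0
          (by linarith : (0:ℝ) ≤ 1 - θ) (by ring)
        simp only [smul_eq_mul] at h
        have hGx : ∀ x : ℝ × ℝ, x.1 + x.2 = a.1 + a.2 →
            ((ε + x.2) / (2 * ε)) * fp (x.1 - x.2 + ε) + ((ε - x.2) / (2 * ε)) * fm (x.1 - x.2 - ε)
            = ((ε + ((a.1 + a.2) - (x.1 - x.2))/2)/(2*ε)) * fp ((x.1 - x.2) + ε)
              + ((ε - ((a.1 + a.2) - (x.1 - x.2))/2)/(2*ε)) * fm ((x.1 - x.2) - ε) := by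
          intro x hx
          have h2 : ((a.1 + a.2) - (x.1 - x.2))/2 = x.2 := by linarith
          rw [h2]
        have hpsum : (θ * a.1 + (1 - θ) * b.1) + (θ * a.2 + (1 - θ) * b.2) = a.1 + a.2 := by
          linear_combination (1 - θ) * hsum
        have hGa := hGx a rfl
        have hGb := hGx b hsum
        have hGp := hGx (θ * a.1 + (1 - θ) * b.1, θ * a.2 + (1 - θ) * b.2) hpsum
        simp only at hGa hGb hGp
        rw [hGa, hGb, hGp]
        have harg : θ * (a.1 - a.2) + (1 - θ) * (b.1 - b.2)
            = (θ * a.1 + (1 - θ) * b.1) - (θ * a.2 + (1 - θ) * b.2) := by ring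
        rw [harg] at h
        exact h
      · -- conditions on D
        intro s hs
        rw [← segment_eq_uIcc] at hs
        obtain ⟨p, q, hp, hq, hpq, hsval⟩ := hs
        simp only [smul_eq_mul] at hsval
        have hxmem := hseg (⟨p, q, hp, hq, hpq, rfl⟩ : p • a + q • b ∈ segment ℝ a b)
        simp only [OmR, Set.mem_setOf_eq, Prod.fst_add, Prod.snd_add, Prod.smul_fst,
          Prod.smul_snd, smul_eq_mul] at hxmem
        obtain ⟨hx1, hx2, hx3, hx4⟩ := hxmem
        have e : ((a.1 + a.2) - s)/2 = p * a.2 + q * b.2 := by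
          linear_combination hsval / 2 - ((a.1 + a.2)/2) * hpq - (q/2) * hsum
        have e2 : p * a.1 + q * b.1 - (p * a.2 + q * b.2) = s := by
          linear_combination hsval
        refine ⟨by linarith, by linarith, ?_, ?_⟩
        · have h := key ε s hε hεr (by linarith) (by linarith)
          exact le_of_lt h.1
        · have h := key ε s hε hεr (by linarith) (by linarith)
          exact le_of_lt h.2

/-- Near a point where `f₊' > f₋'` (resp. `f₊' < f₋'`), for small `ε` there is a simple right
(resp. left) foliation giving a Bellman candidate. -/
theorem local_simple_foliation
    (fp fm : ℝ → ℝ) (hfp : ContDiff ℝ (⊤ : ℕ∞) fp) (hfm : ContDiff ℝ (⊤ : ℕ∞) fm) (u : ℝ) :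
    (deriv fm u < deriv fp u →
      ∃ ε₁ > (0:ℝ), ∀ ε : ℝ, 0 < ε → ε ≤ ε₁ →
        ∃ δ > (0:ℝ),
          (∀ v ∈ Set.Ioo (u - δ) (u + δ),
            0 ≤ deriv fp (v + ε) - deriv fm (v - ε) - 2 * ε * deriv (deriv fp) (v + ε) ∧
            0 ≤ deriv fp (v + ε) - deriv fm (v - ε) - 2 * ε * deriv (deriv fm) (v - ε)) ∧
          DiagConcaveOn (OmR ε (u - δ) (u + δ))
            (fun x : ℝ × ℝ =>
              ((ε + x.2) / (2 * ε)) * fp (x.1 - x.2 + ε) +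
              ((ε - x.2) / (2 * ε)) * fm (x.1 - x.2 - ε))) ∧
    (deriv fp u < deriv fm u →
      ∃ ε₁ > (0:ℝ), ∀ ε : ℝ, 0 < ε → ε ≤ ε₁ →
        ∃ δ > (0:ℝ),
          (∀ v ∈ Set.Ioo (u - δ) (u + δ),
            0 ≤ deriv fm (v + ε) - deriv fp (v - ε) - 2 * ε * deriv (deriv fp) (v - ε) ∧
            0 ≤ deriv fm (v + ε) - deriv fp (v - ε) - 2 * ε * deriv (deriv fm) (v + ε)) ∧
          DiagConcaveOn (OmL ε (u - δ) (u + δ))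
            (fun x : ℝ × ℝ =>
              ((ε + x.2) / (2 * ε)) * fp (x.1 + x.2 - ε) +
              ((ε - x.2) / (2 * ε)) * fm (x.1 + x.2 + ε))) := by
  constructor
  · exact part1 fp fm hfp hfm u
  · intro hlt
    obtain ⟨ε₁, hε₁, H⟩ := part1 fm fp hfm hfp u hlt
    refine ⟨ε₁, hε₁, ?_⟩
    intro ε hε hεle
    obtain ⟨δ, hδ, hineq, hconc⟩ := H ε hε hεle
    refine ⟨δ, hδ, ?_, ?_⟩
    · intro v hv
      obtain ⟨i1, i2⟩ := hineq v hv
      exact ⟨i2, i1⟩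
    · have hset : OmL ε (u - δ) (u + δ) = {x : ℝ × ℝ | (x.1, -x.2) ∈ OmR ε (u - δ) (u + δ)} := by
        ext x
        simp only [OmL, OmR, Set.mem_setOf_eq]
        constructor <;> rintro ⟨h1, h2, h3, h4⟩ <;>
          exact ⟨by linarith, by linarith, by linarith, by linarith⟩
      have hfun : ∀ x : ℝ × ℝ,
          ((ε + x.2) / (2 * ε)) * fp (x.1 + x.2 - ε) + ((ε - x.2) / (2 * ε)) * fm (x.1 + x.2 + ε)
          = (fun y : ℝ × ℝ => ((ε + y.2) / (2 * ε)) * fm (y.1 - y.2 + ε) +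
              ((ε - y.2) / (2 * ε)) * fp (y.1 - y.2 - ε)) (x.1, -x.2) := by
        intro x
        simp only
        have e1 : x.1 - -x.2 + ε = x.1 + x.2 + ε := by ring
        have e2 : x.1 - -x.2 - ε = x.1 + x.2 - ε := by ring
        rw [e1, e2]
        ring
      exact (hconc.reflect).congr hset hfun
end
end

section
/- Suppose the third derivatives f₊‴ and f₋‴ are uniformly bounded on ℝ, and suppose there is c > 0 with f₊′(t) − f₋′(t) ≥ c for all t ∈ ℝ. Then there exists ε₀ > 0 such that for every ε ∈ (0, ε₀] and every u ∈ ℝ the inequalities f₊′(u+ε) − f₋′(u−ε) − 2ε·f₊″(u+ε) ≥ 0 and f₊′(u+ε) − f₋′(u−ε) − 2ε·f₋″(u−ε) ≥ 0 hold; consequently the function B(x₁,x₂) = ((ε+x₂)/(2ε))·f₊(x₁−x₂+ε) + ((ε−x₂)/(2ε))·f₋(x₁−x₂−ε) is diagonally concave on all of Ω_ε. Symmetrically, if f₋′(t) − f₊′(t) ≥ c for all t, then for all sufficiently small ε the inequalities f₋′(u+ε) − f₊′(u−ε) − 2ε·f₊″(u−ε) ≥ 0 and f₋′(u+ε) − f₊′(u−ε)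 − 2ε·f₋″(u+ε) ≥ 0 hold for all u ∈ ℝ, and the function B(x₁,x₂) = ((ε+x₂)/(2ε))·f₊(x₁+x₂−ε) + ((ε−x₂)/(2ε))·f₋(x₁+x₂+ε) is diagonally concave on all of Ω_ε. -/
open Set

noncomputable section

/-- The horizontal strip `Ω_ε = ℝ × [-ε, ε]`. -/
def strip (ε : ℝ) : Set (ℝ × ℝ) := {x : ℝ × ℝ | -ε ≤ x.2 ∧ x.2 ≤ ε}

/-! ### Auxiliary lemmas -/

lemma lip_of_deriv_bound (g : ℝ → ℝ) (hg : Differentiable ℝ g) (K : ℝ)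
    (hK : ∀ t, |deriv g t| ≤ K) (x y : ℝ) : |g x - g y| ≤ K * |x - y| := by
  have := Convex.norm_image_sub_le_of_norm_deriv_le (f := g) (s := univ)
    (fun z _ => hg z) (fun z _ => by simpa [Real.norm_eq_abs] using hK z)
    convex_univ (mem_univ y) (mem_univ x)
  simpa [Real.norm_eq_abs] using this

lemma taylor1 (g : ℝ → ℝ) (hg : Differentiable ℝ g) (hg' : Differentiable ℝ (deriv g))
    (K : ℝ) (hK : ∀ t, |deriv (deriv g) t| ≤ K) (v t : ℝ) :
    |g (v - t) - g v + t * deriv g v| ≤ K * t ^ 2 := by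
  have hK0 : 0 ≤ K := le_trans (abs_nonneg _) (hK 0)
  have hlip : ∀ x y : ℝ, |deriv g x - deriv g y| ≤ K * |x - y| :=
    lip_of_deriv_bound (deriv g) hg' K hK
  rcases lt_trichotomy t 0 with ht | rfl | ht
  · obtain ⟨ξ, hξ, hs⟩ := exists_hasDerivAt_eq_slope g (deriv g) (by linarith : v < v - t)
      (hg.continuous.continuousOn) (fun x _ => (hg x).hasDerivAt)
    have hne : v - t - v ≠ 0 := by intro h; apply ht.ne; linarith
    rw [eq_div_iff hne] at hs
    have hkey : g (v - t) - g v + t * deriv g v = t * (deriv g v - deriv g ξ) := by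
      linear_combination -hs
    rw [hkey, abs_mul]
    have h1 : |deriv g v - deriv g ξ| ≤ K * |v - ξ| := hlip v ξ
    have h2 : |v - ξ| ≤ |t| := by
      rw [abs_of_neg ht, abs_le]
      constructor <;> [linarith [hξ.2]; linarith [hξ.1]]
    calc |t| * |deriv g v - deriv g ξ| ≤ |t| * (K * |t|) := by
          apply mul_le_mul_of_nonneg_left _ (abs_nonneg t)
          exact le_trans h1 (mul_le_mul_of_nonneg_left h2 hK0)
      _ = K * t ^ 2 := by rw [abs_of_neg ht]; ring
  · simp
  · obtain ⟨ξ, hξ, hs⟩ := exists_hasDerivAt_eq_slope g (deriv g) (by linarith : v - t < v)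
      (hg.continuous.continuousOn) (fun x _ => (hg x).hasDerivAt)
    have hne : v - (v - t) ≠ 0 := by intro h; apply ht.ne'; linarith
    rw [eq_div_iff hne] at hs
    have hkey : g (v - t) - g v + t * deriv g v = t * (deriv g v - deriv g ξ) := by
      linear_combination hs
    rw [hkey, abs_mul]
    have h1 : |deriv g v - deriv g ξ| ≤ K * |v - ξ| := hlip v ξ
    have h2 : |v - ξ| ≤ |t| := by
      rw [abs_of_pos ht, abs_le]
      constructor <;> [linarith [hξ.2]; linarith [hξ.1]]
    calc |t| * |deriv g v - deriv g ξ| ≤ |t| * (K * |t|) := by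
          apply mul_le_mul_of_nonneg_left _ (abs_nonneg t)
          exact le_trans h1 (mul_le_mul_of_nonneg_left h2 hK0)
      _ = K * t ^ 2 := by rw [abs_of_pos ht]; ring

lemma key_ineqs (fp fm : ℝ → ℝ) (hfp : ContDiff ℝ (⊤ : ℕ∞) fp) (hfm : ContDiff ℝ (⊤ : ℕ∞) fm)
    (M : ℝ)
    (hbp : ∀ t : ℝ, |deriv (deriv (deriv fp)) t| ≤ M)
    (hbm : ∀ t : ℝ, |deriv (deriv (deriv fm)) t| ≤ M)
    (c : ℝ) (hc : 0 < c) (hsep : ∀ t : ℝ, c ≤ deriv fp t - deriv fm t)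
    (ε : ℝ) (hε : 0 < ε) (hε2 : 20 * (M + 1) * ε ^ 2 ≤ c) (u : ℝ) :
    0 ≤ deriv fp (u + ε) - deriv fm (u - ε) - 2 * ε * deriv (deriv fp) (u + ε) ∧
    0 ≤ deriv fp (u + ε) - deriv fm (u - ε) - 2 * ε * deriv (deriv fm) (u - ε) := by
  have hM : 0 ≤ M := le_trans (abs_nonneg _) (hbp 0)
  have hfp' : ContDiff ℝ ((⊤ : ℕ∞) : WithTop ℕ∞) fp := hfp.of_le (by simp)
  have hfm' : ContDiff ℝ ((⊤ : ℕ∞) : WithTop ℕ∞) fm := hfm.of_le (by simp)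
  have hp1 : Differentiable ℝ (deriv fp) :=
    ((contDiff_infty_iff_deriv.mp hfp').2).differentiable (by simp)
  have hm1 : Differentiable ℝ (deriv fm) :=
    ((contDiff_infty_iff_deriv.mp hfm').2).differentiable (by simp)
  have hp2 : Differentiable ℝ (deriv (deriv fp)) :=
    ((contDiff_infty_iff_deriv.mp
      (contDiff_infty_iff_deriv.mp hfp').2).2).differentiable (by simp)
  have hm2 : Differentiable ℝ (deriv (deriv fm)) :=
    ((contDiff_infty_iff_deriv.mp
      (contDiff_infty_iff_deriv.mp hfm').2).2).differentiable (by simp)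
  set h : ℝ → ℝ := fun t => deriv fp t - deriv fm t with hh_def
  have hh : Differentiable ℝ h := hp1.sub hm1
  have hh1 : deriv h = fun t => deriv (deriv fp) t - deriv (deriv fm) t :=
    funext fun t => deriv_sub (hp1 t) (hm1 t)
  have hh' : Differentiable ℝ (deriv h) := by rw [hh1]; exact hp2.sub hm2
  have hh2 : ∀ t, |deriv (deriv h) t| ≤ 2 * M := by
    intro t
    rw [hh1]
    have : deriv (fun t => deriv (deriv fp) t - deriv (deriv fm) t) t
        = deriv (deriv (deriv fp)) t - deriv (deriv (deriv fm)) t :=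
      deriv_sub (hp2 t) (hm2 t)
    rw [this]
    calc |deriv (deriv (deriv fp)) t - deriv (deriv (deriv fm)) t|
        ≤ |deriv (deriv (deriv fp)) t| + |deriv (deriv (deriv fm)) t| := abs_sub _ _
      _ ≤ 2 * M := by linarith [hbp t, hbm t]
  have key : ∀ v t : ℝ, t * deriv h v ≤ h v - c + 2 * M * t ^ 2 := by
    intro v t
    have h1 := (abs_le.mp (taylor1 h hh hh' (2 * M) hh2 v t)).2
    have h2 := hsep (v - t)
    simp only [hh_def] at h1 h2 ⊢
    linarith
  constructor
  · have hT := (abs_le.mp (taylor1 (deriv fm) hm1 hm2 M hbm (u + ε) (2 * ε))).2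
    have hk := key (u + ε) (4 * ε)
    have hs := hsep (u + ε)
    rw [hh1] at hk
    simp only [hh_def] at hk hs
    have harg : u + ε - 2 * ε = u - ε := by ring
    rw [harg] at hT
    linarith [sq_nonneg ε]
  · have hT := (abs_le.mp (taylor1 (deriv fp) hp1 hp2 M hbp (u - ε) (-(2 * ε)))).1
    have hk := key (u - ε) (-(4 * ε))
    have hs := hsep (u - ε)
    rw [hh1] at hk
    simp only [hh_def] at hk hs
    have harg : u - ε - -(2 * ε) = u + ε := by ring
    rw [harg] at hT
    linarith [sq_nonneg ε]

lemma psi_concave (fp fm : ℝ → ℝ) (hfp : ContDiff ℝ (⊤ : ℕ∞) fp) (hfm : ContDiff ℝ (⊤ : ℕ∞) fm)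
    (ε : ℝ) (hε : 0 < ε)
    (H : ∀ u : ℝ,
      2 * ε * deriv (deriv fp) (u + ε) ≤ deriv fp (u + ε) - deriv fm (u - ε) ∧
      2 * ε * deriv (deriv fm) (u - ε) ≤ deriv fp (u + ε) - deriv fm (u - ε))
    (q : ℝ) :
    ConcaveOn ℝ (Icc (-ε) ε)
      (fun y : ℝ => (ε + y) * fp (q - 2 * y + ε) + (ε - y) * fm (q - 2 * y - ε)) := by
  have hfp' : ContDiff ℝ ((⊤ : ℕ∞) : WithTop ℕ∞) fp := hfp.of_le (by simp)
  have hfm' : ContDiff ℝ ((⊤ : ℕ∞) : WithTop ℕ∞) fm := hfm.of_le (by simp)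
  have hp0 : Differentiable ℝ fp := hfp'.differentiable (by simp)
  have hm0 : Differentiable ℝ fm := hfm'.differentiable (by simp)
  have hp1 : Differentiable ℝ (deriv fp) :=
    ((contDiff_infty_iff_deriv.mp hfp').2).differentiable (by simp)
  have hm1 : Differentiable ℝ (deriv fm) :=
    ((contDiff_infty_iff_deriv.mp hfm').2).differentiable (by simp)
  set ψ : ℝ → ℝ := fun y => (ε + y) * fp (q - 2 * y + ε) + (ε - y) * fm (q - 2 * y - ε) with hψ
  set d1 : ℝ → ℝ := fun y =>
    fp (q - 2 * y + ε) - 2 * (ε + y) * deriv fp (q - 2 * y + ε)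
      - fm (q - 2 * y - ε) - 2 * (ε - y) * deriv fm (q - 2 * y - ε) with hd1
  set d2 : ℝ → ℝ := fun y =>
    -4 * deriv fp (q - 2 * y + ε) + 4 * (ε + y) * deriv (deriv fp) (q - 2 * y + ε)
      + 4 * deriv fm (q - 2 * y - ε) + 4 * (ε - y) * deriv (deriv fm) (q - 2 * y - ε) with hd2
  have hin : ∀ y : ℝ, HasDerivAt (fun y : ℝ => q - 2 * y + ε) (-2) y := by
    intro y
    have : HasDerivAt (fun y : ℝ => q - 2 * y) (-(2 * 1)) y :=
      ((hasDerivAt_id y).const_mul 2).const_sub q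
    simpa using this.add_const ε
  have hin' : ∀ y : ℝ, HasDerivAt (fun y : ℝ => q - 2 * y - ε) (-2) y := by
    intro y
    have : HasDerivAt (fun y : ℝ => q - 2 * y) (-(2 * 1)) y :=
      ((hasDerivAt_id y).const_mul 2).const_sub q
    simpa using this.sub_const ε
  have hfc : ∀ y : ℝ, HasDerivAt (fun y : ℝ => fp (q - 2 * y + ε))
      (deriv fp (q - 2 * y + ε) * (-2)) y := fun y =>
    (hp0 _).hasDerivAt.comp y (hin y)
  have hmc : ∀ y : ℝ, HasDerivAt (fun y : ℝ => fm (q - 2 * y - ε))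
      (deriv fm (q - 2 * y - ε) * (-2)) y := fun y =>
    (hm0 _).hasDerivAt.comp y (hin' y)
  have hfc1 : ∀ y : ℝ, HasDerivAt (fun y : ℝ => deriv fp (q - 2 * y + ε))
      (deriv (deriv fp) (q - 2 * y + ε) * (-2)) y := fun y =>
    (hp1 _).hasDerivAt.comp y (hin y)
  have hmc1 : ∀ y : ℝ, HasDerivAt (fun y : ℝ => deriv fm (q - 2 * y - ε))
      (deriv (deriv fm) (q - 2 * y - ε) * (-2)) y := fun y =>
    (hm1 _).hasDerivAt.comp y (hin' y)
  have hψ' : ∀ y : ℝ, HasDerivAt ψ (d1 y) y := by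
    intro y
    have h1 : HasDerivAt (fun y : ℝ => (ε + y) * fp (q - 2 * y + ε))
        (1 * fp (q - 2 * y + ε) + (ε + y) * (deriv fp (q - 2 * y + ε) * (-2))) y :=
      ((hasDerivAt_id y).const_add ε).mul (hfc y)
    have h2 : HasDerivAt (fun y : ℝ => (ε - y) * fm (q - 2 * y - ε))
        (-1 * fm (q - 2 * y - ε) + (ε - y) * (deriv fm (q - 2 * y - ε) * (-2))) y :=
      ((hasDerivAt_id y).const_sub ε).mul (hmc y)
    have := h1.add h2
    refine this.congr_deriv ?_
    simp only [hd1]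
    ring
  have hd1' : ∀ y : ℝ, HasDerivAt d1 (d2 y) y := by
    intro y
    have h1 : HasDerivAt (fun y : ℝ => 2 * (ε + y) * deriv fp (q - 2 * y + ε))
        ((2 * 1) * deriv fp (q - 2 * y + ε)
          + 2 * (ε + y) * (deriv (deriv fp) (q - 2 * y + ε) * (-2))) y := by
      have ha : HasDerivAt (fun y : ℝ => 2 * (ε + y)) (2 * 1) y :=
        ((hasDerivAt_id y).const_add ε).const_mul 2
      exact ha.mul (hfc1 y)
    have h2 : HasDerivAt (fun y : ℝ => 2 * (ε - y) * deriv fm (q - 2 * y - ε))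
        ((2 * -1) * deriv fm (q - 2 * y - ε)
          + 2 * (ε - y) * (deriv (deriv fm) (q - 2 * y - ε) * (-2))) y := by
      have ha : HasDerivAt (fun y : ℝ => 2 * (ε - y)) (2 * -1) y :=
        ((hasDerivAt_id y).const_sub ε).const_mul 2
      exact ha.mul (hmc1 y)
    have := (((hfc y).sub h1).sub (hmc y)).sub h2
    refine this.congr_deriv ?_
    simp only [hd2]
    ring
  have hderiv1 : deriv ψ = d1 := funext fun y => (hψ' y).deriv
  apply concaveOn_of_deriv2_nonpos (convex_Icc _ _)
  · exact (Differentiable.continuous (fun y => (hψ' y).differentiableAt)).continuousOn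
  · exact fun y _ => ((hψ' y).differentiableAt).differentiableWithinAt
  · rw [hderiv1]
    exact fun y _ => ((hd1' y).differentiableAt).differentiableWithinAt
  · intro y hy
    rw [interior_Icc] at hy
    have h2 : deriv^[2] ψ y = d2 y := by
      have : deriv^[2] ψ = deriv (deriv ψ) := rfl
      rw [this, hderiv1, (hd1' y).deriv]
    rw [h2]
    have hy1 : 0 ≤ ε + y := by linarith [hy.1]
    have hy2 : 0 ≤ ε - y := by linarith [hy.2]
    obtain ⟨HA, HB⟩ := H (q - 2 * y)
    have e1 := mul_le_mul_of_nonneg_left HA hy1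
    have e2 := mul_le_mul_of_nonneg_left HB hy2
    have key : 2 * ε * ((ε + y) * deriv (deriv fp) (q - 2 * y + ε)
        + (ε - y) * deriv (deriv fm) (q - 2 * y - ε))
        ≤ 2 * ε * (deriv fp (q - 2 * y + ε) - deriv fm (q - 2 * y - ε)) := by
      linarith [e1, e2]
    have key2 : (ε + y) * deriv (deriv fp) (q - 2 * y + ε)
        + (ε - y) * deriv (deriv fm) (q - 2 * y - ε)
        ≤ deriv fp (q - 2 * y + ε) - deriv fm (q - 2 * y - ε) :=
      le_of_mul_le_mul_left (by linarith [key]) (by positivity : (0:ℝ) < 2 * ε)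
    simp only [hd2]
    linarith [key2]

lemma convex_strip (ε : ℝ) : Convex ℝ (strip ε) := by
  have : strip ε = {x : ℝ × ℝ | -ε ≤ x.2} ∩ {x : ℝ × ℝ | x.2 ≤ ε} := by
    ext x; simp [strip]
  rw [this]
  exact (convex_halfSpace_ge (LinearMap.isLinear (LinearMap.snd ℝ ℝ ℝ)) (-ε)).inter
    (convex_halfSpace_le (LinearMap.isLinear (LinearMap.snd ℝ ℝ ℝ)) ε)

lemma diag_concave (fp fm : ℝ → ℝ) (hfp : ContDiff ℝ (⊤ : ℕ∞) fp) (hfm : ContDiff ℝ (⊤ : ℕ∞) fm)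
    (ε : ℝ) (hε : 0 < ε)
    (H : ∀ u : ℝ,
      2 * ε * deriv (deriv fp) (u + ε) ≤ deriv fp (u + ε) - deriv fm (u - ε) ∧
      2 * ε * deriv (deriv fm) (u - ε) ≤ deriv fp (u + ε) - deriv fm (u - ε)) :
    DiagConcaveOn (strip ε)
      (fun x : ℝ × ℝ =>
        ((ε + x.2) / (2 * ε)) * fp (x.1 - x.2 + ε) +
        ((ε - x.2) / (2 * ε)) * fm (x.1 - x.2 - ε)) := by
  intro a b ha hb hdir _hseg θ hθ0 hθ1
  have hεne : (2 : ℝ) * ε ≠ 0 := by positivity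
  have hm1 : (θ • a + (1 - θ) • b).1 = θ * a.1 + (1 - θ) * b.1 := by
    simp [Prod.smul_fst, smul_eq_mul]
  have hm2 : (θ • a + (1 - θ) • b).2 = θ * a.2 + (1 - θ) * b.2 := by
    simp [Prod.smul_snd, smul_eq_mul]
  rcases hdir with h | h
  · apply le_of_eq
    simp only [hm1, hm2]
    have e1 : b.1 - b.2 = a.1 - a.2 := by linarith
    have e2 : θ * a.1 + (1 - θ) * b.1 - (θ * a.2 + (1 - θ) * b.2) = a.1 - a.2 := by
      linear_combination (1 - θ) * h
    rw [show θ * a.1 + (1 - θ) * b.1 - (θ * a.2 + (1 - θ) * b.2) + ε = a.1 - a.2 + ε by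
          linarith,
        show θ * a.1 + (1 - θ) * b.1 - (θ * a.2 + (1 - θ) * b.2) - ε = a.1 - a.2 - ε by
          linarith,
        show b.1 - b.2 + ε = a.1 - a.2 + ε by linarith,
        show b.1 - b.2 - ε = a.1 - a.2 - ε by linarith]
    field_simp
    ring
  · set q := a.1 + a.2 with hq
    have hbq : b.1 + b.2 = q := by rw [hq]; linarith
    have hconc := psi_concave fp fm hfp hfm ε hε H q
    set ψ : ℝ → ℝ := fun y => (ε + y) * fp (q - 2 * y + ε) + (ε - y) * fm (q - 2 * y - ε)
      with hψ
    have haI : a.2 ∈ Icc (-ε) ε := ⟨ha.1, ha.2⟩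
    have hbI : b.2 ∈ Icc (-ε) ε := ⟨hb.1, hb.2⟩
    have hcon := hconc.2 haI hbI hθ0 (by linarith : (0:ℝ) ≤ 1 - θ) (by ring)
    simp only [smul_eq_mul] at hcon
    have Ga : ((ε + a.2) / (2 * ε)) * fp (a.1 - a.2 + ε) +
        ((ε - a.2) / (2 * ε)) * fm (a.1 - a.2 - ε) = ψ a.2 / (2 * ε) := by
      rw [show a.1 - a.2 + ε = q - 2 * a.2 + ε by rw [hq]; ring,
          show a.1 - a.2 - ε = q - 2 * a.2 - ε by rw [hq]; ring]
      simp only [hψ]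
      field_simp
    have Gb : ((ε + b.2) / (2 * ε)) * fp (b.1 - b.2 + ε) +
        ((ε - b.2) / (2 * ε)) * fm (b.1 - b.2 - ε) = ψ b.2 / (2 * ε) := by
      rw [show b.1 - b.2 + ε = q - 2 * b.2 + ε by rw [hq]; linarith,
          show b.1 - b.2 - ε = q - 2 * b.2 - ε by rw [hq]; linarith]
      simp only [hψ]
      field_simp
    have hmix : θ * a.1 + (1 - θ) * b.1 - (θ * a.2 + (1 - θ) * b.2)
        = q - 2 * (θ * a.2 + (1 - θ) * b.2) := by
      rw [hq]; linear_combination (1 - θ) * h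
    simp only [hm1, hm2]
    rw [show θ * a.1 + (1 - θ) * b.1 - (θ * a.2 + (1 - θ) * b.2) + ε
          = q - 2 * (θ * a.2 + (1 - θ) * b.2) + ε by linarith,
        show θ * a.1 + (1 - θ) * b.1 - (θ * a.2 + (1 - θ) * b.2) - ε
          = q - 2 * (θ * a.2 + (1 - θ) * b.2) - ε by linarith]
    have Gm : ((ε + (θ * a.2 + (1 - θ) * b.2)) / (2 * ε)) *
          fp (q - 2 * (θ * a.2 + (1 - θ) * b.2) + ε) +
        ((ε - (θ * a.2 + (1 - θ) * b.2)) / (2 * ε)) *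
          fm (q - 2 * (θ * a.2 + (1 - θ) * b.2) - ε)
        = ψ (θ * a.2 + (1 - θ) * b.2) / (2 * ε) := by
      simp only [hψ]
      field_simp
    rw [Ga, Gb, Gm]
    have hrw : θ * (ψ a.2 / (2 * ε)) + (1 - θ) * (ψ b.2 / (2 * ε))
        = (θ * ψ a.2 + (1 - θ) * ψ b.2) / (2 * ε) := by ring
    rw [hrw]
    gcongr

lemma diag_reflect (ε : ℝ) (G : ℝ × ℝ → ℝ) (hG : DiagConcaveOn (strip ε) G) :
    DiagConcaveOn (strip ε) (fun x : ℝ × ℝ => G (x.1, -x.2)) := by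
  intro a b ha hb hdir _hseg θ hθ0 hθ1
  have ha2 : -ε ≤ a.2 ∧ a.2 ≤ ε := ha
  have hb2 : -ε ≤ b.2 ∧ b.2 ≤ ε := hb
  have ha' : ((a.1, -a.2) : ℝ × ℝ) ∈ strip ε :=
    ⟨by simp only; linarith [ha2.2], by simp only; linarith [ha2.1]⟩
  have hb' : ((b.1, -b.2) : ℝ × ℝ) ∈ strip ε :=
    ⟨by simp only; linarith [hb2.2], by simp only; linarith [hb2.1]⟩
  have hdir' : ((b.1, -b.2) : ℝ × ℝ).1 - ((a.1, -a.2) : ℝ × ℝ).1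
        = ((b.1, -b.2) : ℝ × ℝ).2 - ((a.1, -a.2) : ℝ × ℝ).2
      ∨ ((b.1, -b.2) : ℝ × ℝ).1 - ((a.1, -a.2) : ℝ × ℝ).1
        = -(((b.1, -b.2) : ℝ × ℝ).2 - ((a.1, -a.2) : ℝ × ℝ).2) := by
    rcases hdir with h | h
    · right; simp only; linarith
    · left; simp only; linarith
  have hseg' : segment ℝ ((a.1, -a.2) : ℝ × ℝ) ((b.1, -b.2) : ℝ × ℝ) ⊆ strip ε :=
    (convex_strip ε).segment_subset ha' hb'
  have := hG (a.1, -a.2) (b.1, -b.2) ha' hb' hdir' hseg' θ hθ0 hθ1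
  have hpt : θ • ((a.1, -a.2) : ℝ × ℝ) + (1 - θ) • ((b.1, -b.2) : ℝ × ℝ)
      = (((θ • a + (1 - θ) • b).1 : ℝ), -((θ • a + (1 - θ) • b).2 : ℝ)) := by
    apply Prod.ext
    · simp [smul_eq_mul]
    · simp [smul_eq_mul]; ring
  rw [hpt] at this
  simpa using this

lemma main_half (fp fm : ℝ → ℝ) (hfp : ContDiff ℝ (⊤ : ℕ∞) fp) (hfm : ContDiff ℝ (⊤ : ℕ∞) fm)
    (M : ℝ)
    (hbp : ∀ t : ℝ, |deriv (deriv (deriv fp)) t| ≤ M)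
    (hbm : ∀ t : ℝ, |deriv (deriv (deriv fm)) t| ≤ M) :
    (∃ c > (0:ℝ), ∀ t : ℝ, c ≤ deriv fp t - deriv fm t) →
      ∃ ε₀ > (0:ℝ), ∀ ε : ℝ, 0 < ε → ε ≤ ε₀ →
        (∀ u : ℝ,
          0 ≤ deriv fp (u + ε) - deriv fm (u - ε) - 2 * ε * deriv (deriv fp) (u + ε) ∧
          0 ≤ deriv fp (u + ε) - deriv fm (u - ε) - 2 * ε * deriv (deriv fm) (u - ε)) ∧
        DiagConcaveOn (strip ε)
          (fun x : ℝ × ℝ =>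
            ((ε + x.2) / (2 * ε)) * fp (x.1 - x.2 + ε) +
            ((ε - x.2) / (2 * ε)) * fm (x.1 - x.2 - ε)) := by
  rintro ⟨c, hc, hsep⟩
  have hM : 0 ≤ M := le_trans (abs_nonneg _) (hbp 0)
  have hpos : (0:ℝ) < c / (20 * (M + 1)) := by positivity
  refine ⟨Real.sqrt (c / (20 * (M + 1))), Real.sqrt_pos.mpr hpos, ?_⟩
  intro ε hε hεle
  have hε2 : 20 * (M + 1) * ε ^ 2 ≤ c := by
    have h1 : ε ^ 2 ≤ c / (20 * (M + 1)) := by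
      calc ε ^ 2 ≤ (Real.sqrt (c / (20 * (M + 1)))) ^ 2 := by
            apply pow_le_pow_left₀ hε.le hεle
        _ = c / (20 * (M + 1)) := Real.sq_sqrt hpos.le
    rw [le_div_iff₀ (by positivity : (0:ℝ) < 20 * (M + 1))] at h1
    linarith [h1]
  have hineq := fun u => key_ineqs fp fm hfp hfm M hbp hbm c hc hsep ε hε hε2 u
  refine ⟨hineq, diag_concave fp fm hfp hfm ε hε ?_⟩
  intro u
  obtain ⟨i1, i2⟩ := hineq u
  exact ⟨by linarith, by linarith⟩

/-- If `f₊''' , f₋'''` are uniformly bounded and `f₊' - f₋'` is uniformly separated from zero,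
then for sufficiently small `ε` the whole strip carries a simple right (resp. left) foliation. -/
theorem global_simple_foliation_small_eps
    (fp fm : ℝ → ℝ) (hfp : ContDiff ℝ (⊤ : ℕ∞) fp) (hfm : ContDiff ℝ (⊤ : ℕ∞) fm)
    (M : ℝ)
    (hbp : ∀ t : ℝ, |deriv (deriv (deriv fp)) t| ≤ M)
    (hbm : ∀ t : ℝ, |deriv (deriv (deriv fm)) t| ≤ M) :
    ((∃ c > (0:ℝ), ∀ t : ℝ, c ≤ deriv fp t - deriv fm t) →
      ∃ ε₀ > (0:ℝ), ∀ ε : ℝ, 0 < ε → ε ≤ ε₀ →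
        (∀ u : ℝ,
          0 ≤ deriv fp (u + ε) - deriv fm (u - ε) - 2 * ε * deriv (deriv fp) (u + ε) ∧
          0 ≤ deriv fp (u + ε) - deriv fm (u - ε) - 2 * ε * deriv (deriv fm) (u - ε)) ∧
        DiagConcaveOn (strip ε)
          (fun x : ℝ × ℝ =>
            ((ε + x.2) / (2 * ε)) * fp (x.1 - x.2 + ε) +
            ((ε - x.2) / (2 * ε)) * fm (x.1 - x.2 - ε))) ∧
    ((∃ c > (0:ℝ), ∀ t : ℝ, c ≤ deriv fm t - deriv fp t) →
      ∃ ε₀ > (0:ℝ), ∀ ε : ℝ, 0 < ε → ε ≤ ε₀ →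
        (∀ u : ℝ,
          0 ≤ deriv fm (u + ε) - deriv fp (u - ε) - 2 * ε * deriv (deriv fp) (u - ε) ∧
          0 ≤ deriv fm (u + ε) - deriv fp (u - ε) - 2 * ε * deriv (deriv fm) (u + ε)) ∧
        DiagConcaveOn (strip ε)
          (fun x : ℝ × ℝ =>
            ((ε + x.2) / (2 * ε)) * fp (x.1 + x.2 - ε) +
            ((ε - x.2) / (2 * ε)) * fm (x.1 + x.2 + ε))) := by
  constructor
  · exact main_half fp fm hfp hfm M hbp hbm
  · intro hc'
    obtain ⟨ε₀, hε₀, hmain⟩ := main_half fm fp hfm hfp M hbm hbp hc'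
    refine ⟨ε₀, hε₀, ?_⟩
    intro ε hε hεle
    obtain ⟨hineq, hconc⟩ := hmain ε hε hεle
    refine ⟨fun u => ⟨(hineq u).2, (hineq u).1⟩, ?_⟩
    have hrefl := diag_reflect ε _ hconc
    have heq : (fun x : ℝ × ℝ =>
          ((ε + x.2) / (2 * ε)) * fp (x.1 + x.2 - ε) +
          ((ε - x.2) / (2 * ε)) * fm (x.1 + x.2 + ε))
        = (fun x : ℝ × ℝ =>
            (fun x : ℝ × ℝ =>
              ((ε + x.2) / (2 * ε)) * fm (x.1 - x.2 + ε) +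
              ((ε - x.2) / (2 * ε)) * fp (x.1 - x.2 - ε)) (x.1, -x.2)) := by
      funext x
      simp only
      rw [show x.1 - -x.2 + ε = x.1 + x.2 + ε by ring,
          show x.1 - -x.2 - ε = x.1 + x.2 - ε by ring]
      ring
    rw [heq]
    exact hrefl

end
end

section
/- Left-herringbone case: let T : [u₁,u₂] → (−ε,ε) be C¹ with |T′| < 1, let A : [u₁,u₂] → ℝ be C¹, and let B be defined on the left-herringbone region by B(x) = ((ε−x₂)/(ε−T(u)))·A(u) + ((x₂−T(u))/(ε−T(u)))·f₊(x₁+x₂−ε) when x₂ ≥ T(u) (where u is determined by x₁+x₂ = u+T(u)), and B(x) = ((ε+x₂)/(ε+T(u)))·A(u) + ((T(u)−x₂)/(ε+T(u)))·f₋(x₁−x₂−ε) when x₂ ≤ T(u) (where u is determined by x₁−x₂ = u−T(u)). If B is C¹-smooth and diagonally concave, then for every u: 2A′(u) = (1−T′(u))·(A(u)−f₊(u+T(u)−ε))/(ε−T(u)) + (1+T′(u))·(A(u)−f₋(u−T(u)−ε))/(ε+T(u)). Right-herringbone case: if instead the ribs are defined by x₁−x₂ = u−T(u) for x₂ ≥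 T(u) with boundary value f₊(x₁−x₂+ε), and x₁+x₂ = u+T(u) for x₂ ≤ T(u) with boundary value f₋(x₁+x₂+ε), and the correspondingly defined B is C¹-smooth and diagonally concave, then 2A′(u) = (1−T′(u))·(f₋(u+T(u)+ε)−A(u))/(ε+T(u)) + (1+T′(u))·(f₊(u−T(u)+ε)−A(u))/(ε−T(u)). -/
open Set

noncomputable section

/-- The region foliated by a left horizontal herringbone with spine `T` over `[u₁, u₂]`:
the upper rib from `(u, T u)` to `(u + T u - ε, ε)` lies on `x₁ + x₂ = u + T u`, the lower
rib from `(u, T u)` to `(u - T u - ε, -ε)` lies on `x₁ - x₂ = u - T u`. -/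
def HbL (ε : ℝ) (T : ℝ → ℝ) (u₁ u₂ : ℝ) : Set (ℝ × ℝ) :=
  {x : ℝ × ℝ | ∃ u ∈ Set.Icc u₁ u₂,
    (x.2 ∈ Set.Icc (T u) ε ∧ x.1 = u + T u - x.2) ∨
    (x.2 ∈ Set.Icc (-ε) (T u) ∧ x.1 = u - T u + x.2)}

/-- The region foliated by a right horizontal herringbone with spine `T` over `[u₁, u₂]`:
the upper rib from `(u, T u)` to `(u - T u + ε, ε)` lies on `x₁ - x₂ = u - T u`, the lower
rib from `(u, T u)` to `(u + T u + ε, -ε)` lies on `x₁ + x₂ = u + T u`. -/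
def HbR (ε : ℝ) (T : ℝ → ℝ) (u₁ u₂ : ℝ) : Set (ℝ × ℝ) :=
  {x : ℝ × ℝ | ∃ u ∈ Set.Icc u₁ u₂,
    (x.2 ∈ Set.Icc (T u) ε ∧ x.1 = u - T u + x.2) ∨
    (x.2 ∈ Set.Icc (-ε) (T u) ∧ x.1 = u + T u - x.2)}

private lemma herringbone_key {B : ℝ × ℝ → ℝ} {L : ℝ × ℝ →L[ℝ] ℝ} {S : Set (ℝ × ℝ)}
    {c : ℝ → ℝ × ℝ} {v : ℝ × ℝ} {t : Set ℝ} {s₀ : ℝ} {p : ℝ × ℝ}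
    (hp : c s₀ = p)
    (hL : HasFDerivWithinAt B L S p)
    (hc : HasDerivWithinAt c v t s₀)
    (hmap : Set.MapsTo c t S)
    (hU : UniqueDiffWithinAt ℝ t s₀)
    {g : ℝ → ℝ} {d : ℝ}
    (hg : HasDerivWithinAt g d t s₀)
    (heq : ∀ s ∈ t, B (c s) = g s) (hs₀ : s₀ ∈ t) :
    L v = d := by
  subst hp
  have h1 : HasDerivWithinAt (fun s => B (c s)) (L v) t s₀ :=
    hL.comp_hasDerivWithinAt s₀ hc hmap
  have h2 : HasDerivWithinAt g (L v) t s₀ :=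
    h1.congr (fun s hs => (heq s hs).symm) (heq s₀ hs₀).symm
  rw [← h2.derivWithin hU, hg.derivWithin hU]

/-- If the Bellman candidate on a left (resp. right) horizontal herringbone is `C¹`-smooth
and diagonally concave, then the spine values `A` satisfy the differential relation
(equations (2.2)/(2.3) of the paper). -/
theorem herringbone_spine_relation
    (ε : ℝ) (hε : 0 < ε) (fp fm : ℝ → ℝ)
    (hfp : ContDiff ℝ (⊤ : ℕ∞) fp) (hfm : ContDiff ℝ (⊤ : ℕ∞) fm)
    (u₁ u₂ : ℝ) (h12 : u₁ < u₂)
    (T A : ℝ → ℝ) (hT : ContDiff ℝ 1 T) (hA : ContDiff ℝ 1 A)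
    (hTr : ∀ u ∈ Set.Icc u₁ u₂, |T u| < ε)
    (hT' : ∀ u ∈ Set.Icc u₁ u₂, |deriv T u| < 1) :
    (∀ B : ℝ × ℝ → ℝ,
      (∀ u ∈ Set.Icc u₁ u₂, ∀ s ∈ Set.Icc (T u) ε,
        B (u + T u - s, s) =
          ((ε - s) / (ε - T u)) * A u + ((s - T u) / (ε - T u)) * fp (u + T u - ε)) →
      (∀ u ∈ Set.Icc u₁ u₂, ∀ s ∈ Set.Icc (-ε) (T u),
        B (u - T u + s, s) =
          ((ε + s) / (ε + T u)) * A u + ((T u - s) / (ε + T u)) * fm (u - T u - ε)) →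
      ContDiffOn ℝ 1 B (HbL ε T u₁ u₂) →
      DiagConcaveOn (HbL ε T u₁ u₂) B →
      ∀ u ∈ Set.Icc u₁ u₂,
        2 * deriv A u =
          (1 - deriv T u) * ((A u - fp (u + T u - ε)) / (ε - T u)) +
          (1 + deriv T u) * ((A u - fm (u - T u - ε)) / (ε + T u))) ∧
    (∀ B : ℝ × ℝ → ℝ,
      (∀ u ∈ Set.Icc u₁ u₂, ∀ s ∈ Set.Icc (T u) ε,
        B (u - T u + s, s) =
          ((ε - s) / (ε - T u)) * A u + ((s - T u) / (ε - T u)) * fp (u - T u + ε)) →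
      (∀ u ∈ Set.Icc u₁ u₂, ∀ s ∈ Set.Icc (-ε) (T u),
        B (u + T u - s, s) =
          ((ε + s) / (ε + T u)) * A u + ((T u - s) / (ε + T u)) * fm (u + T u + ε)) →
      ContDiffOn ℝ 1 B (HbR ε T u₁ u₂) →
      DiagConcaveOn (HbR ε T u₁ u₂) B →
      ∀ u ∈ Set.Icc u₁ u₂,
        2 * deriv A u =
          (1 - deriv T u) * ((fm (u + T u + ε) - A u) / (ε + T u)) +
          (1 + deriv T u) * ((fp (u - T u + ε) - A u) / (ε - T u))) := by
  constructor
  · intro B hBp hBm hC1 _hconc u hu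
    obtain ⟨hτ1, hτ2⟩ := abs_lt.mp (hTr u hu)
    have heL : (0:ℝ) < ε - T u := by linarith
    have heR : (0:ℝ) < ε + T u := by linarith
    have hpS : ((u, T u) : ℝ × ℝ) ∈ HbL ε T u₁ u₂ :=
      ⟨u, hu, Or.inl ⟨⟨le_refl _, hτ2.le⟩, by ring⟩⟩
    obtain ⟨L, hL⟩ := (hC1.differentiableOn one_ne_zero) _ hpS
    have e₁ : L (-1, 1) = ((-1)/(ε - T u)) * A u + (1/(ε - T u)) * fp (u + T u - ε) := by
      refine herringbone_key (c := fun s => ((u + T u - s, s) : ℝ × ℝ)) (by norm_num) hL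
        (HasDerivAt.prodMk ((hasDerivAt_id (T u)).const_sub (u + T u)) (hasDerivAt_id (T u))).hasDerivWithinAt
        (fun s hs => ⟨u, hu, Or.inl ⟨hs, rfl⟩⟩)
        ((uniqueDiffOn_Icc hτ2) _ (left_mem_Icc.mpr hτ2.le))
        ?_ (fun s hs => hBp u hu s hs) (left_mem_Icc.mpr hτ2.le)
      exact ((((hasDerivAt_id (T u)).const_sub ε).div_const (ε - T u)).mul_const (A u)).add
        ((((hasDerivAt_id (T u)).sub_const (T u)).div_const (ε - T u)).mul_const
          (fp (u + T u - ε))) |>.hasDerivWithinAt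
    have e₂ : L (1, 1) = (1/(ε + T u)) * A u + ((-1)/(ε + T u)) * fm (u - T u - ε) := by
      have hm : -ε ≤ T u := by linarith
      refine herringbone_key (c := fun s => ((u - T u + s, s) : ℝ × ℝ)) (by norm_num) hL
        (HasDerivAt.prodMk ((hasDerivAt_id (T u)).const_add (u - T u)) (hasDerivAt_id (T u))).hasDerivWithinAt
        (fun s hs => ⟨u, hu, Or.inr ⟨hs, rfl⟩⟩)
        ((uniqueDiffOn_Icc (by linarith : -ε < T u)) _ (right_mem_Icc.mpr hm))
        ?_ (fun s hs => hBm u hu s hs) (right_mem_Icc.mpr hm)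
      exact ((((hasDerivAt_id (T u)).const_add ε).div_const (ε + T u)).mul_const (A u)).add
        ((((hasDerivAt_id (T u)).const_sub (T u)).div_const (ε + T u)).mul_const
          (fm (u - T u - ε))) |>.hasDerivWithinAt
    have e₃ : L (1, deriv T u) = deriv A u := by
      refine herringbone_key (c := fun v => ((v, T v) : ℝ × ℝ)) rfl hL
        (HasDerivAt.prodMk (hasDerivAt_id u) ((hT.differentiable one_ne_zero u).hasDerivAt)).hasDerivWithinAt
        (fun v hv => ⟨v, hv, Or.inl ⟨⟨le_refl _, (abs_lt.mp (hTr v hv)).2.le⟩, by ring⟩⟩)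
        ((uniqueDiffOn_Icc h12) u hu)
        ((hA.differentiable one_ne_zero u).hasDerivAt.hasDerivWithinAt)
        ?_ hu
      intro v hv
      obtain ⟨hv1, hv2⟩ := abs_lt.mp (hTr v hv)
      have h := hBp v hv (T v) ⟨le_refl _, hv2.le⟩
      have hv0 : (v + T v - T v : ℝ) = v := by ring
      rw [hv0] at h
      rw [h, sub_self, zero_div, zero_mul, add_zero,
        div_self (by linarith : ε - T v ≠ 0), one_mul]
    have lin : ((1 : ℝ), deriv T u) =
        ((deriv T u - 1)/2) • ((-1, 1) : ℝ × ℝ) + ((deriv T u + 1)/2) • ((1, 1) : ℝ × ℝ) := by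
      simp [Prod.ext_iff, smul_eq_mul]
      constructor <;> ring
    have e₄ : deriv A u
        = ((deriv T u - 1)/2) * L (-1, 1) + ((deriv T u + 1)/2) * L (1, 1) := by
      rw [← e₃, lin, map_add, map_smul, map_smul, smul_eq_mul, smul_eq_mul]
    rw [e₁, e₂] at e₄
    rw [e₄]
    field_simp
    ring
  · intro B hBp hBm hC1 _hconc u hu
    obtain ⟨hτ1, hτ2⟩ := abs_lt.mp (hTr u hu)
    have heL : (0:ℝ) < ε - T u := by linarith
    have heR : (0:ℝ) < ε + T u := by linarith
    have hpS : ((u, T u) : ℝ × ℝ) ∈ HbR ε T u₁ u₂ :=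
      ⟨u, hu, Or.inl ⟨⟨le_refl _, hτ2.le⟩, by ring⟩⟩
    obtain ⟨L, hL⟩ := (hC1.differentiableOn one_ne_zero) _ hpS
    have e₁ : L (1, 1) = ((-1)/(ε - T u)) * A u + (1/(ε - T u)) * fp (u - T u + ε) := by
      refine herringbone_key (c := fun s => ((u - T u + s, s) : ℝ × ℝ)) (by norm_num) hL
        (HasDerivAt.prodMk ((hasDerivAt_id (T u)).const_add (u - T u)) (hasDerivAt_id (T u))).hasDerivWithinAt
        (fun s hs => ⟨u, hu, Or.inl ⟨hs, rfl⟩⟩)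
        ((uniqueDiffOn_Icc hτ2) _ (left_mem_Icc.mpr hτ2.le))
        ?_ (fun s hs => hBp u hu s hs) (left_mem_Icc.mpr hτ2.le)
      exact ((((hasDerivAt_id (T u)).const_sub ε).div_const (ε - T u)).mul_const (A u)).add
        ((((hasDerivAt_id (T u)).sub_const (T u)).div_const (ε - T u)).mul_const
          (fp (u - T u + ε))) |>.hasDerivWithinAt
    have e₂ : L (-1, 1) = (1/(ε + T u)) * A u + ((-1)/(ε + T u)) * fm (u + T u + ε) := by
      have hm : -ε ≤ T u := by linarith
      refine herringbone_key (c := fun s => ((u + T u - s, s) : ℝ × ℝ)) (by norm_num) hL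
        (HasDerivAt.prodMk ((hasDerivAt_id (T u)).const_sub (u + T u)) (hasDerivAt_id (T u))).hasDerivWithinAt
        (fun s hs => ⟨u, hu, Or.inr ⟨hs, rfl⟩⟩)
        ((uniqueDiffOn_Icc (by linarith : -ε < T u)) _ (right_mem_Icc.mpr hm))
        ?_ (fun s hs => hBm u hu s hs) (right_mem_Icc.mpr hm)
      exact ((((hasDerivAt_id (T u)).const_add ε).div_const (ε + T u)).mul_const (A u)).add
        ((((hasDerivAt_id (T u)).const_sub (T u)).div_const (ε + T u)).mul_const
          (fm (u + T u + ε))) |>.hasDerivWithinAt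
    have e₃ : L (1, deriv T u) = deriv A u := by
      refine herringbone_key (c := fun v => ((v, T v) : ℝ × ℝ)) rfl hL
        (HasDerivAt.prodMk (hasDerivAt_id u) ((hT.differentiable one_ne_zero u).hasDerivAt)).hasDerivWithinAt
        (fun v hv => ⟨v, hv, Or.inl ⟨⟨le_refl _, (abs_lt.mp (hTr v hv)).2.le⟩, by ring⟩⟩)
        ((uniqueDiffOn_Icc h12) u hu)
        ((hA.differentiable one_ne_zero u).hasDerivAt.hasDerivWithinAt)
        ?_ hu
      intro v hv
      obtain ⟨hv1, hv2⟩ := abs_lt.mp (hTr v hv)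
      have h := hBp v hv (T v) ⟨le_refl _, hv2.le⟩
      have hv0 : (v - T v + T v : ℝ) = v := by ring
      rw [hv0] at h
      rw [h, sub_self, zero_div, zero_mul, add_zero,
        div_self (by linarith : ε - T v ≠ 0), one_mul]
    have lin : ((1 : ℝ), deriv T u) =
        ((deriv T u - 1)/2) • ((-1, 1) : ℝ × ℝ) + ((deriv T u + 1)/2) • ((1, 1) : ℝ × ℝ) := by
      simp [Prod.ext_iff, smul_eq_mul]
      constructor <;> ring
    have e₄ : deriv A u
        = ((deriv T u - 1)/2) * L (-1, 1) + ((deriv T u + 1)/2) * L (1, 1) := by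
      rw [← e₃, lin, map_add, map_smul, map_smul, smul_eq_mul, smul_eq_mul]
    rw [e₁, e₂] at e₄
    rw [e₄]
    field_simp
    ring
end
end

section
/- Let T : [u₁,u₂] → (−ε,ε) be C¹ with |T′| < 1 and let A : [u₁,u₂] → ℝ be C¹ and satisfy 2A′(u) = (1−T′(u))·(A(u)−f₊(u+T(u)−ε))/(ε−T(u)) + (1+T′(u))·(A(u)−f₋(u−T(u)−ε))/(ε+T(u)) for all u. Define B on the left-herringbone region by B(x) = ((ε−x₂)/(ε−T(u)))·A(u) + ((x₂−T(u))/(ε−T(u)))·f₊(x₁+x₂−ε) when x₂ ≥ T(u) (u determined by x₁+x₂ = u+T(u)), and B(x) = ((ε+x₂)/(ε+T(u)))·A(u) + ((T(u)−x₂)/(ε+T(u)))·f₋(x₁−x₂−ε) when x₂ ≤ T(u) (u determined by x₁−x₂ = u−T(u)). Then B is C¹-smooth on the herringbone region; in particular, at a spine point (u, T(u)) the partial derivative B_{x₁} equals (1/2)·[(A(u)−f₋(u−T(u)−ε))/(ε+T(u)) + (A(u)−f₊(u+T(u)−ε))/(ε−T(u))] and B_{x₂} equals (1/2)·[(A(u)−f₋(u−T(u)−ε))/(ε+T(u))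 − (A(u)−f₊(u+T(u)−ε))/(ε−T(u))], computed as the common limit from both sides of the spine. -/
open Set

noncomputable section

private lemma image_Icc_of_strictMonoOn {f : ℝ → ℝ} (hf : Continuous f) {a b : ℝ} (hab : a ≤ b)
    (hm : StrictMonoOn f (Set.Icc a b)) : f '' Set.Icc a b = Set.Icc (f a) (f b) := by
  apply Set.Subset.antisymm
  · rintro y ⟨u, hu, rfl⟩
    exact ⟨hm.monotoneOn (Set.left_mem_Icc.2 hab) hu hu.1,
      hm.monotoneOn hu (Set.right_mem_Icc.2 hab) hu.2⟩
  · exact intermediate_value_Icc hab hf.continuousOn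

private lemma continuousAt_invFunOn {f : ℝ → ℝ} (hf : Continuous f) {a b : ℝ} (hab : a ≤ b)
    (hm : StrictMonoOn f (Set.Icc a b)) {w : ℝ} (hw : w ∈ Set.Ioo (f a) (f b)) :
    ContinuousAt (Function.invFunOn f (Set.Icc a b)) w := by
  have himg := image_Icc_of_strictMonoOn hf hab hm
  set g := Function.invFunOn f (Set.Icc a b) with hg
  have hex : ∀ y ∈ Set.Icc (f a) (f b), g y ∈ Set.Icc a b ∧ f (g y) = y := by
    intro y hy
    rw [← himg] at hy
    obtain ⟨u, hu, hu2⟩ := hy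
    exact ⟨Function.invFunOn_mem ⟨u, hu, hu2⟩, Function.invFunOn_eq ⟨u, hu, hu2⟩⟩
  have hwmem : w ∈ Set.Icc (f a) (f b) := Set.mem_Icc_of_Ioo hw
  obtain ⟨hgw, hfgw⟩ := hex w hwmem
  have hga : a < g w := by
    rcases lt_or_eq_of_le hgw.1 with h | h
    · exact h
    · exfalso; rw [← h] at hfgw; rw [hfgw] at hw; exact lt_irrefl _ hw.1
  have hgb : g w < b := by
    rcases lt_or_eq_of_le hgw.2 with h | h
    · exact h
    · exfalso; rw [h] at hfgw; rw [hfgw] at hw; exact lt_irrefl _ hw.2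
  rw [ContinuousAt, tendsto_order]
  constructor
  · intro c hc
    have hc' : max c a < g w := max_lt hc hga
    have hmax : max c a ∈ Set.Icc a b := ⟨le_max_right _ _, le_trans hc'.le hgw.2⟩
    have hfc : f (max c a) < w := by
      calc f (max c a) < f (g w) := hm hmax hgw hc'
      _ = w := hfgw
    filter_upwards [Ioo_mem_nhds hfc hw.2] with y hy
    have hy' : y ∈ Set.Icc (f a) (f b) :=
      ⟨le_trans (hm.monotoneOn (Set.left_mem_Icc.2 hab) hmax (le_max_right c a)) hy.1.le, hy.2.le⟩
    obtain ⟨hgy, hfgy⟩ := hex y hy'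
    by_contra h
    push_neg at h
    have h2 : f (g y) ≤ f (max c a) :=
      hm.monotoneOn hgy hmax (le_trans h (le_max_left _ _))
    rw [hfgy] at h2
    exact absurd hy.1 (not_lt.2 h2)
  · intro c hc
    have hc' : g w < min c b := lt_min hc hgb
    have hmin : min c b ∈ Set.Icc a b := ⟨le_trans hgw.1 hc'.le, min_le_right _ _⟩
    have hfc : w < f (min c b) := by rw [← hfgw]; exact hm hgw hmin hc'
    filter_upwards [Ioo_mem_nhds hw.1 hfc] with y hy
    have hy' : y ∈ Set.Icc (f a) (f b) :=
      ⟨hy.1.le, le_trans hy.2.le (hm.monotoneOn hmin (Set.right_mem_Icc.2 hab) (min_le_right c b))⟩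
    obtain ⟨hgy, hfgy⟩ := hex y hy'
    by_contra h
    push_neg at h
    have h2 : f (min c b) ≤ f (g y) := hm.monotoneOn hmin hgy (le_trans (min_le_left c b) h)
    rw [hfgy] at h2
    exact absurd hy.2 (not_lt.2 h2)


private lemma alg1 (e t d a q r q' DA : ℝ) (n1 : e - t ≠ 0) (n2 : e + t ≠ 0) (n3 : 1 + d ≠ 0)
    (hDA : DA = ((1 - d) * ((a - q) / (e - t)) + (1 + d) * ((a - r) / (e + t))) / 2) :
    ((e * (DA * (1 + d)⁻¹) - (d * (1 + d)⁻¹ * q + t * (q' * 1))) * (e - t) -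
        (e * a - t * q) * -(d * (1 + d)⁻¹)) / (e - t) ^ 2 +
      t * (((q' * 1 - DA * (1 + d)⁻¹) * (e - t) - (q - a) * -(d * (1 + d)⁻¹)) / (e - t) ^ 2) =
    1 / 2 * ((a - r) / (e + t) + (a - q) / (e - t)) := by
  subst hDA; field_simp; ring

private lemma alg2 (e t d a q r q' DA : ℝ) (n1 : e - t ≠ 0) (n2 : e + t ≠ 0) (n3 : 1 + d ≠ 0)
    (hDA : DA = ((1 - d) * ((a - q) / (e - t)) + (1 + d) * ((a - r) / (e + t))) / 2) :
    ((e * (DA * (1 + d)⁻¹) - (d * (1 + d)⁻¹ * q + t * (q' * 1))) * (e - t) -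
        (e * a - t * q) * -(d * (1 + d)⁻¹)) / (e - t) ^ 2 +
      t * (((q' * 1 - DA * (1 + d)⁻¹) * (e - t) - (q - a) * -(d * (1 + d)⁻¹)) / (e - t) ^ 2) +
      (q - a) / (e - t) =
    1 / 2 * ((a - r) / (e + t) - (a - q) / (e - t)) := by
  subst hDA; field_simp; ring

private lemma alg3 (e t d a q r r' DA : ℝ) (n1 : e - t ≠ 0) (n2 : e + t ≠ 0) (n4 : 1 - d ≠ 0)
    (hDA : DA = ((1 - d) * ((a - q) / (e - t)) + (1 + d) * ((a - r) / (e + t))) / 2) :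
    ((e * (DA * (1 - d)⁻¹) + (d * (1 - d)⁻¹ * r + t * (r' * 1))) * (e + t) -
        (e * a + t * r) * (d * (1 - d)⁻¹)) / (e + t) ^ 2 +
      t * (((DA * (1 - d)⁻¹ - r' * 1) * (e + t) - (a - r) * (d * (1 - d)⁻¹)) / (e + t) ^ 2) =
    1 / 2 * ((a - r) / (e + t) + (a - q) / (e - t)) := by
  subst hDA; field_simp; ring

private lemma alg4 (e t d a q r r' DA : ℝ) (n1 : e - t ≠ 0) (n2 : e + t ≠ 0) (n4 : 1 - d ≠ 0)
    (hDA : DA = ((1 - d) * ((a - q) / (e - t)) + (1 + d) * ((a - r) / (e + t))) / 2) :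
    -(((e * (DA * (1 - d)⁻¹) + (d * (1 - d)⁻¹ * r + t * (r' * 1))) * (e + t) -
        (e * a + t * r) * (d * (1 - d)⁻¹)) / (e + t) ^ 2 +
      t * (((DA * (1 - d)⁻¹ - r' * 1) * (e + t) - (a - r) * (d * (1 - d)⁻¹)) / (e + t) ^ 2)) +
      (a - r) / (e + t) =
    1 / 2 * ((a - r) / (e + t) - (a - q) / (e - t)) := by
  subst hDA; field_simp; ring

set_option maxHeartbeats 2000000 in
/-- Under the spine relation (2.2), the left-herringbone candidate `B` is `C¹`-smooth on the
herringbone region; on the spine its gradient is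
`(½(R₋ + R₊), ½(R₋ - R₊))` where `R₋ = (A - f₋)/(ε+T)` and `R₊ = (A - f₊)/(ε-T)`. -/
theorem herringbone_candidate_C1
    (ε : ℝ) (hε : 0 < ε) (fp fm : ℝ → ℝ)
    (hfp : ContDiff ℝ (⊤ : ℕ∞) fp) (hfm : ContDiff ℝ (⊤ : ℕ∞) fm)
    (u₁ u₂ : ℝ) (h12 : u₁ < u₂)
    (T A : ℝ → ℝ) (hT : ContDiff ℝ 1 T) (hA : ContDiff ℝ 1 A)
    (hTr : ∀ u ∈ Set.Icc u₁ u₂, |T u| < ε)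
    (hT' : ∀ u ∈ Set.Icc u₁ u₂, |deriv T u| < 1)
    (hAode : ∀ u ∈ Set.Icc u₁ u₂,
      2 * deriv A u =
        (1 - deriv T u) * ((A u - fp (u + T u - ε)) / (ε - T u)) +
        (1 + deriv T u) * ((A u - fm (u - T u - ε)) / (ε + T u)))
    (B : ℝ × ℝ → ℝ)
    (hBup : ∀ u ∈ Set.Icc u₁ u₂, ∀ s ∈ Set.Icc (T u) ε,
      B (u + T u - s, s) =
        ((ε - s) / (ε - T u)) * A u + ((s - T u) / (ε - T u)) * fp (u + T u - ε))
    (hBdown : ∀ u ∈ Set.Icc u₁ u₂, ∀ s ∈ Set.Icc (-ε) (T u),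
      B (u - T u + s, s) =
        ((ε + s) / (ε + T u)) * A u + ((T u - s) / (ε + T u)) * fm (u - T u - ε)) :
    ContDiffOn ℝ 1 B (HbL ε T u₁ u₂) ∧
    ∀ u ∈ Set.Icc u₁ u₂,
      HasFDerivWithinAt B
        ((((1:ℝ)/2) * ((A u - fm (u - T u - ε)) / (ε + T u)
            + (A u - fp (u + T u - ε)) / (ε - T u))) • ContinuousLinearMap.fst ℝ ℝ ℝ +
         (((1:ℝ)/2) * ((A u - fm (u - T u - ε)) / (ε + T u)
            - (A u - fp (u + T u - ε)) / (ε - T u))) • ContinuousLinearMap.snd ℝ ℝ ℝ)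
        (HbL ε T u₁ u₂) (u, T u) := by
  classical
  have hTc : Continuous T := hT.continuous
  have hAc : Continuous A := hA.continuous
  have hT'c : Continuous (deriv T) := hT.continuous_deriv le_rfl
  have hA'c : Continuous (deriv A) := hA.continuous_deriv le_rfl
  have hfpc : Continuous fp := hfp.continuous
  have hfmc : Continuous fm := hfm.continuous
  have hfp'c : Continuous (deriv fp) := hfp.continuous_deriv (by simp)
  have hfm'c : Continuous (deriv fm) := hfm.continuous_deriv (by simp)
  have hTd : ∀ u, HasDerivAt T (deriv T u) u := fun u => ((hT.differentiable one_ne_zero) u).hasDerivAt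
  have hAd : ∀ u, HasDerivAt A (deriv A u) u := fun u => ((hA.differentiable one_ne_zero) u).hasDerivAt
  have hfpd : ∀ w, HasDerivAt fp (deriv fp w) w :=
    fun w => ((hfp.differentiable (by simp)) w).hasDerivAt
  have hfmd : ∀ w, HasDerivAt fm (deriv fm w) w :=
    fun w => ((hfm.differentiable (by simp)) w).hasDerivAt
  obtain ⟨δ, hδ, hδsub⟩ : ∃ δ, 0 < δ ∧
      ∀ u ∈ Set.Icc (u₁ - δ/2) (u₂ + δ/2), |T u| < ε ∧ |deriv T u| < 1 := by
    have hopen : IsOpen {u : ℝ | |T u| < ε ∧ |deriv T u| < 1} :=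
      (isOpen_lt (continuous_abs.comp hTc) continuous_const).inter
        (isOpen_lt (continuous_abs.comp hT'c) continuous_const)
    obtain ⟨δ, hδ, hsub⟩ := isCompact_Icc.exists_thickening_subset_open hopen
      (fun u hu => ⟨hTr u hu, hT' u hu⟩)
    refine ⟨δ, hδ, fun u hu => hsub ?_⟩
    rw [Metric.mem_thickening_iff]
    refine ⟨max u₁ (min u u₂), ⟨le_max_left _ _, max_le h12.le (min_le_right _ _)⟩, ?_⟩
    rcases le_total u u₁ with h1 | h1
    · have hmin : min u u₂ = u := min_eq_left (le_trans h1 h12.le)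
      have hmax : max u₁ (min u u₂) = u₁ := by rw [hmin]; exact max_eq_left h1
      rw [hmax, Real.dist_eq, abs_lt]
      constructor <;> linarith [hu.1]
    · rcases le_total u₂ u with h2 | h2
      · have hmin : min u u₂ = u₂ := min_eq_right h2
        have hmax : max u₁ (min u u₂) = u₂ := by rw [hmin]; exact max_eq_right h12.le
        rw [hmax, Real.dist_eq, abs_lt]
        constructor <;> linarith [hu.2]
      · have hmin : min u u₂ = u := min_eq_left h2
        have hmax : max u₁ (min u u₂) = u := by rw [hmin]; exact max_eq_right h1
        rw [hmax, Real.dist_eq]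
        simpa using hδ
  set j₁ : ℝ := u₁ - δ/2 with hj₁
  set j₂ : ℝ := u₂ + δ/2 with hj₂
  have hj12 : j₁ ≤ j₂ := by rw [hj₁, hj₂]; linarith
  have hIJ : Set.Icc u₁ u₂ ⊆ Set.Icc j₁ j₂ :=
    Set.Icc_subset_Icc (by rw [hj₁]; linarith) (by rw [hj₂]; linarith)
  have hJnz : ∀ u ∈ Set.Icc j₁ j₂,
      0 < ε - T u ∧ 0 < ε + T u ∧ 0 < 1 + deriv T u ∧ 0 < 1 - deriv T u := by
    intro u hu
    obtain ⟨h1, h2⟩ := hδsub u hu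
    rw [abs_lt] at h1 h2
    exact ⟨by linarith, by linarith, by linarith, by linarith⟩
  set φp : ℝ → ℝ := fun u => u + T u with hφp
  set φm : ℝ → ℝ := fun u => u - T u with hφm
  have hφpc : Continuous φp := continuous_id.add hTc
  have hφmc : Continuous φm := continuous_id.sub hTc
  have hφpd : ∀ u, HasDerivAt φp (1 + deriv T u) u := fun u => (hasDerivAt_id u).add (hTd u)
  have hφmd : ∀ u, HasDerivAt φm (1 - deriv T u) u := fun u => (hasDerivAt_id u).sub (hTd u)
  have hmp : StrictMonoOn φp (Set.Icc j₁ j₂) := by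
    apply strictMonoOn_of_deriv_pos (convex_Icc _ _) hφpc.continuousOn
    intro u hu
    rw [interior_Icc] at hu
    rw [(hφpd u).deriv]
    exact (hJnz u (Set.Ioo_subset_Icc_self hu)).2.2.1
  have hmm : StrictMonoOn φm (Set.Icc j₁ j₂) := by
    apply strictMonoOn_of_deriv_pos (convex_Icc _ _) hφmc.continuousOn
    intro u hu
    rw [interior_Icc] at hu
    rw [(hφmd u).deriv]
    exact (hJnz u (Set.Ioo_subset_Icc_self hu)).2.2.2
  set wa : ℝ := φp j₁ with hwa
  set wb : ℝ := φp j₂ with hwb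
  set va : ℝ := φm j₁ with hva
  set vb : ℝ := φm j₂ with hvb
  have himgp : φp '' Set.Icc j₁ j₂ = Set.Icc wa wb := image_Icc_of_strictMonoOn hφpc hj12 hmp
  have himgm : φm '' Set.Icc j₁ j₂ = Set.Icc va vb := image_Icc_of_strictMonoOn hφmc hj12 hmm
  set σp : ℝ → ℝ := Function.invFunOn φp (Set.Icc j₁ j₂) with hσp
  set σm : ℝ → ℝ := Function.invFunOn φm (Set.Icc j₁ j₂) with hσm
  have hσpex : ∀ w ∈ Set.Icc wa wb, σp w ∈ Set.Icc j₁ j₂ ∧ φp (σp w) = w := by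
    intro w hw
    rw [← himgp] at hw
    obtain ⟨u, hu, hu2⟩ := hw
    exact ⟨Function.invFunOn_mem ⟨u, hu, hu2⟩, Function.invFunOn_eq ⟨u, hu, hu2⟩⟩
  have hσmex : ∀ v ∈ Set.Icc va vb, σm v ∈ Set.Icc j₁ j₂ ∧ φm (σm v) = v := by
    intro v hv
    rw [← himgm] at hv
    obtain ⟨u, hu, hu2⟩ := hv
    exact ⟨Function.invFunOn_mem ⟨u, hu, hu2⟩, Function.invFunOn_eq ⟨u, hu, hu2⟩⟩
  have hσpleft : ∀ u ∈ Set.Icc j₁ j₂, σp (φp u) = u := fun u hu =>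
    hmp.injOn.leftInvOn_invFunOn hu
  have hσmleft : ∀ u ∈ Set.Icc j₁ j₂, σm (φm u) = u := fun u hu =>
    hmm.injOn.leftInvOn_invFunOn hu
  have hσpcont : ∀ w ∈ Set.Ioo wa wb, ContinuousAt σp w := fun w hw =>
    continuousAt_invFunOn hφpc hj12 hmp hw
  have hσmcont : ∀ v ∈ Set.Ioo va vb, ContinuousAt σm v := fun v hv =>
    continuousAt_invFunOn hφmc hj12 hmm hv
  have hσpd : ∀ w ∈ Set.Ioo wa wb, HasDerivAt σp (1 + deriv T (σp w))⁻¹ w := by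
    intro w hw
    obtain ⟨hmem, heq⟩ := hσpex w (Set.Ioo_subset_Icc_self hw)
    apply HasDerivAt.of_local_left_inverse (hσpcont w hw) (hφpd (σp w))
      (ne_of_gt (hJnz _ hmem).2.2.1)
    filter_upwards [Ioo_mem_nhds hw.1 hw.2] with y hy
    exact (hσpex y (Set.Ioo_subset_Icc_self hy)).2
  have hσmd : ∀ v ∈ Set.Ioo va vb, HasDerivAt σm (1 - deriv T (σm v))⁻¹ v := by
    intro v hv
    obtain ⟨hmem, heq⟩ := hσmex v (Set.Ioo_subset_Icc_self hv)
    apply HasDerivAt.of_local_left_inverse (hσmcont v hv) (hφmd (σm v))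
      (ne_of_gt (hJnz _ hmem).2.2.2)
    filter_upwards [Ioo_mem_nhds hv.1 hv.2] with y hy
    exact (hσmex y (Set.Ioo_subset_Icc_self hy)).2
  set aF : ℝ → ℝ := fun w => (ε * A (σp w) - T (σp w) * fp (w - ε)) / (ε - T (σp w)) with haF
  set bF : ℝ → ℝ := fun w => (fp (w - ε) - A (σp w)) / (ε - T (σp w)) with hbF
  set cF : ℝ → ℝ := fun v => (ε * A (σm v) + T (σm v) * fm (v - ε)) / (ε + T (σm v)) with hcF
  set dF : ℝ → ℝ := fun v => (A (σm v) - fm (v - ε)) / (ε + T (σm v)) with hdF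
  set EA : ℝ → ℝ := fun w =>
    ((ε * (deriv A (σp w) * (1 + deriv T (σp w))⁻¹) -
        ((deriv T (σp w) * (1 + deriv T (σp w))⁻¹) * fp (w - ε) +
          T (σp w) * (deriv fp (w - ε) * 1))) * (ε - T (σp w)) -
      (ε * A (σp w) - T (σp w) * fp (w - ε)) * -(deriv T (σp w) * (1 + deriv T (σp w))⁻¹)) /
      (ε - T (σp w)) ^ 2 with hEA
  set EB : ℝ → ℝ := fun w =>
    ((deriv fp (w - ε) * 1 - deriv A (σp w) * (1 + deriv T (σp w))⁻¹) * (ε - T (σp w)) -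
      (fp (w - ε) - A (σp w)) * -(deriv T (σp w) * (1 + deriv T (σp w))⁻¹)) /
      (ε - T (σp w)) ^ 2 with hEB
  set EC : ℝ → ℝ := fun v =>
    ((ε * (deriv A (σm v) * (1 - deriv T (σm v))⁻¹) +
        ((deriv T (σm v) * (1 - deriv T (σm v))⁻¹) * fm (v - ε) +
          T (σm v) * (deriv fm (v - ε) * 1))) * (ε + T (σm v)) -
      (ε * A (σm v) + T (σm v) * fm (v - ε)) * (deriv T (σm v) * (1 - deriv T (σm v))⁻¹)) /
      (ε + T (σm v)) ^ 2 with hEC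
  set ED : ℝ → ℝ := fun v =>
    ((deriv A (σm v) * (1 - deriv T (σm v))⁻¹ - deriv fm (v - ε) * 1) * (ε + T (σm v)) -
      (A (σm v) - fm (v - ε)) * (deriv T (σm v) * (1 - deriv T (σm v))⁻¹)) /
      (ε + T (σm v)) ^ 2 with hED
  have haFd : ∀ w ∈ Set.Ioo wa wb, HasDerivAt aF (EA w) w ∧ HasDerivAt bF (EB w) w := by
    intro w hw
    have hσd := hσpd w hw
    have hmem := (hσpex w (Set.Ioo_subset_Icc_self hw)).1
    have hTne : ε - T (σp w) ≠ 0 := ne_of_gt (hJnz _ hmem).1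
    have h1 : HasDerivAt (fun y => A (σp y)) (deriv A (σp w) * (1 + deriv T (σp w))⁻¹) w :=
      (hAd (σp w)).comp w hσd
    have h2 : HasDerivAt (fun y => T (σp y)) (deriv T (σp w) * (1 + deriv T (σp w))⁻¹) w :=
      (hTd (σp w)).comp w hσd
    have h3 : HasDerivAt (fun y : ℝ => fp (y - ε)) (deriv fp (w - ε) * 1) w :=
      (hfpd (w - ε)).comp w ((hasDerivAt_id w).sub_const ε)
    have hden : HasDerivAt (fun y => ε - T (σp y))
        (-(deriv T (σp w) * (1 + deriv T (σp w))⁻¹)) w := h2.const_sub ε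
    exact ⟨((h1.const_mul ε).sub (h2.mul h3)).div hden hTne, (h3.sub h1).div hden hTne⟩
  have hcFd : ∀ v ∈ Set.Ioo va vb, HasDerivAt cF (EC v) v ∧ HasDerivAt dF (ED v) v := by
    intro v hv
    have hσd := hσmd v hv
    have hmem := (hσmex v (Set.Ioo_subset_Icc_self hv)).1
    have hTne : ε + T (σm v) ≠ 0 := ne_of_gt (hJnz _ hmem).2.1
    have h1 : HasDerivAt (fun y => A (σm y)) (deriv A (σm v) * (1 - deriv T (σm v))⁻¹) v :=
      (hAd (σm v)).comp v hσd
    have h2 : HasDerivAt (fun y => T (σm y)) (deriv T (σm v) * (1 - deriv T (σm v))⁻¹) v :=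
      (hTd (σm v)).comp v hσd
    have h3 : HasDerivAt (fun y : ℝ => fm (y - ε)) (deriv fm (v - ε) * 1) v :=
      (hfmd (v - ε)).comp v ((hasDerivAt_id v).sub_const ε)
    have hden : HasDerivAt (fun y => ε + T (σm y))
        (deriv T (σm v) * (1 - deriv T (σm v))⁻¹) v := h2.const_add ε
    exact ⟨((h1.const_mul ε).add (h2.mul h3)).div hden hTne, (h1.sub h3).div hden hTne⟩
  -- continuity of the basic building blocks on the plus side
  have hσpcOn : ContinuousOn σp (Set.Ioo wa wb) := fun w hw => (hσpcont w hw).continuousWithinAt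
  have hσmcOn : ContinuousOn σm (Set.Ioo va vb) := fun v hv => (hσmcont v hv).continuousWithinAt
  have cp1 : ContinuousOn (fun w => A (σp w)) (Set.Ioo wa wb) := hAc.comp_continuousOn hσpcOn
  have cp2 : ContinuousOn (fun w => T (σp w)) (Set.Ioo wa wb) := hTc.comp_continuousOn hσpcOn
  have cp3 : ContinuousOn (fun w => deriv T (σp w)) (Set.Ioo wa wb) :=
    hT'c.comp_continuousOn hσpcOn
  have cp4 : ContinuousOn (fun w => deriv A (σp w)) (Set.Ioo wa wb) :=
    hA'c.comp_continuousOn hσpcOn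
  have cp5 : ContinuousOn (fun w : ℝ => fp (w - ε)) (Set.Ioo wa wb) :=
    (hfpc.comp (continuous_id.sub continuous_const)).continuousOn
  have cp6 : ContinuousOn (fun w : ℝ => deriv fp (w - ε)) (Set.Ioo wa wb) :=
    (hfp'c.comp (continuous_id.sub continuous_const)).continuousOn
  have cp7 : ContinuousOn (fun w => (1 + deriv T (σp w))⁻¹) (Set.Ioo wa wb) :=
    (continuousOn_const.add cp3).inv₀ (fun w hw =>
      ne_of_gt (hJnz _ (hσpex w (Set.Ioo_subset_Icc_self hw)).1).2.2.1)
  have cpden : ∀ w ∈ Set.Ioo wa wb, ε - T (σp w) ≠ 0 := fun w hw =>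
    ne_of_gt (hJnz _ (hσpex w (Set.Ioo_subset_Icc_self hw)).1).1
  have cm1 : ContinuousOn (fun v => A (σm v)) (Set.Ioo va vb) := hAc.comp_continuousOn hσmcOn
  have cm2 : ContinuousOn (fun v => T (σm v)) (Set.Ioo va vb) := hTc.comp_continuousOn hσmcOn
  have cm3 : ContinuousOn (fun v => deriv T (σm v)) (Set.Ioo va vb) :=
    hT'c.comp_continuousOn hσmcOn
  have cm4 : ContinuousOn (fun v => deriv A (σm v)) (Set.Ioo va vb) :=
    hA'c.comp_continuousOn hσmcOn
  have cm5 : ContinuousOn (fun v : ℝ => fm (v - ε)) (Set.Ioo va vb) :=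
    (hfmc.comp (continuous_id.sub continuous_const)).continuousOn
  have cm6 : ContinuousOn (fun v : ℝ => deriv fm (v - ε)) (Set.Ioo va vb) :=
    (hfm'c.comp (continuous_id.sub continuous_const)).continuousOn
  have cm7 : ContinuousOn (fun v => (1 - deriv T (σm v))⁻¹) (Set.Ioo va vb) :=
    (continuousOn_const.sub cm3).inv₀ (fun v hv =>
      ne_of_gt (hJnz _ (hσmex v (Set.Ioo_subset_Icc_self hv)).1).2.2.2)
  have cmden : ∀ v ∈ Set.Ioo va vb, ε + T (σm v) ≠ 0 := fun v hv =>
    ne_of_gt (hJnz _ (hσmex v (Set.Ioo_subset_Icc_self hv)).1).2.1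
  have hEAc : ContinuousOn EA (Set.Ioo wa wb) := by
    apply ContinuousOn.div
    · exact (((continuousOn_const.mul (cp4.mul cp7)).sub
          (((cp3.mul cp7).mul cp5).add (cp2.mul (cp6.mul continuousOn_const)))).mul
          (continuousOn_const.sub cp2)).sub
        (((continuousOn_const.mul cp1).sub (cp2.mul cp5)).mul (cp3.mul cp7).neg)
    · exact (continuousOn_const.sub cp2).pow 2
    · exact fun w hw => pow_ne_zero 2 (cpden w hw)
  have hEBc : ContinuousOn EB (Set.Ioo wa wb) := by
    apply ContinuousOn.div
    · exact (((cp6.mul continuousOn_const).sub (cp4.mul cp7)).mul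
          (continuousOn_const.sub cp2)).sub ((cp5.sub cp1).mul (cp3.mul cp7).neg)
    · exact (continuousOn_const.sub cp2).pow 2
    · exact fun w hw => pow_ne_zero 2 (cpden w hw)
  have hECc : ContinuousOn EC (Set.Ioo va vb) := by
    apply ContinuousOn.div
    · exact (((continuousOn_const.mul (cm4.mul cm7)).add
          (((cm3.mul cm7).mul cm5).add (cm2.mul (cm6.mul continuousOn_const)))).mul
          (continuousOn_const.add cm2)).sub
        (((continuousOn_const.mul cm1).add (cm2.mul cm5)).mul (cm3.mul cm7))
    · exact (continuousOn_const.add cm2).pow 2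
    · exact fun v hv => pow_ne_zero 2 (cmden v hv)
  have hEDc : ContinuousOn ED (Set.Ioo va vb) := by
    apply ContinuousOn.div
    · exact (((cm4.mul cm7).sub (cm6.mul continuousOn_const)).mul
          (continuousOn_const.add cm2)).sub ((cm1.sub cm5).mul (cm3.mul cm7))
    · exact (continuousOn_const.add cm2).pow 2
    · exact fun v hv => pow_ne_zero 2 (cmden v hv)
  have hbFc : ContinuousOn bF (Set.Ioo wa wb) :=
    (cp5.sub cp1).div (continuousOn_const.sub cp2) cpden
  have hdFc : ContinuousOn dF (Set.Ioo va vb) :=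
    (cm1.sub cm5).div (continuousOn_const.add cm2) cmden
  -- the candidate derivative fields
  set lp : ℝ × ℝ →L[ℝ] ℝ :=
    ContinuousLinearMap.fst ℝ ℝ ℝ + ContinuousLinearMap.snd ℝ ℝ ℝ with hlp
  set lq : ℝ × ℝ →L[ℝ] ℝ :=
    ContinuousLinearMap.fst ℝ ℝ ℝ - ContinuousLinearMap.snd ℝ ℝ ℝ with hlq
  set DP : ℝ × ℝ → (ℝ × ℝ →L[ℝ] ℝ) := fun x =>
    deriv aF (x.1 + x.2) • lp + (x.2 • (deriv bF (x.1 + x.2) • lp) +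
      bF (x.1 + x.2) • ContinuousLinearMap.snd ℝ ℝ ℝ) with hDP
  set DM : ℝ × ℝ → (ℝ × ℝ →L[ℝ] ℝ) := fun x =>
    deriv cF (x.1 - x.2) • lq + (x.2 • (deriv dF (x.1 - x.2) • lq) +
      dF (x.1 - x.2) • ContinuousLinearMap.snd ℝ ℝ ℝ) with hDM
  have hlpfd : ∀ x : ℝ × ℝ, HasFDerivAt (fun y : ℝ × ℝ => y.1 + y.2) lp x := fun x =>
    hasFDerivAt_fst.add hasFDerivAt_snd
  have hlqfd : ∀ x : ℝ × ℝ, HasFDerivAt (fun y : ℝ × ℝ => y.1 - y.2) lq x := fun x =>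
    hasFDerivAt_fst.sub hasFDerivAt_snd
  have hmodelp : ∀ x : ℝ × ℝ, x.1 + x.2 ∈ Set.Ioo wa wb →
      HasFDerivAt (fun y : ℝ × ℝ => aF (y.1 + y.2) + y.2 * bF (y.1 + y.2)) (DP x) x := by
    intro x hx
    have h1 : HasDerivAt aF (deriv aF (x.1 + x.2)) (x.1 + x.2) :=
      (haFd _ hx).1.differentiableAt.hasDerivAt
    have h2 : HasDerivAt bF (deriv bF (x.1 + x.2)) (x.1 + x.2) :=
      (haFd _ hx).2.differentiableAt.hasDerivAt
    exact (h1.comp_hasFDerivAt x (hlpfd x)).add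
      (hasFDerivAt_snd.mul (h2.comp_hasFDerivAt x (hlpfd x)))
  have hmodelm : ∀ x : ℝ × ℝ, x.1 - x.2 ∈ Set.Ioo va vb →
      HasFDerivAt (fun y : ℝ × ℝ => cF (y.1 - y.2) + y.2 * dF (y.1 - y.2)) (DM x) x := by
    intro x hx
    have h1 : HasDerivAt cF (deriv cF (x.1 - x.2)) (x.1 - x.2) :=
      (hcFd _ hx).1.differentiableAt.hasDerivAt
    have h2 : HasDerivAt dF (deriv dF (x.1 - x.2)) (x.1 - x.2) :=
      (hcFd _ hx).2.differentiableAt.hasDerivAt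
    exact (h1.comp_hasFDerivAt x (hlqfd x)).add
      (hasFDerivAt_snd.mul (h2.comp_hasFDerivAt x (hlqfd x)))
  have hderaF : ContinuousOn (deriv aF) (Set.Ioo wa wb) :=
    hEAc.congr (fun w hw => ((haFd w hw).1).deriv)
  have hderbF : ContinuousOn (deriv bF) (Set.Ioo wa wb) :=
    hEBc.congr (fun w hw => ((haFd w hw).2).deriv)
  have hdercF : ContinuousOn (deriv cF) (Set.Ioo va vb) :=
    hECc.congr (fun v hv => ((hcFd v hv).1).deriv)
  have hderdF : ContinuousOn (deriv dF) (Set.Ioo va vb) :=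
    hEDc.congr (fun v hv => ((hcFd v hv).2).deriv)
  have hsumc : ∀ x : ℝ × ℝ, ContinuousAt (fun y : ℝ × ℝ => y.1 + y.2) x := fun x =>
    (continuous_fst.add continuous_snd).continuousAt
  have hsubc : ∀ x : ℝ × ℝ, ContinuousAt (fun y : ℝ × ℝ => y.1 - y.2) x := fun x =>
    (continuous_fst.sub continuous_snd).continuousAt
  have hDPc : ∀ x : ℝ × ℝ, x.1 + x.2 ∈ Set.Ioo wa wb → ContinuousAt DP x := by
    intro x hx
    have hnw : Set.Ioo wa wb ∈ nhds (x.1 + x.2) := isOpen_Ioo.mem_nhds hx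
    have c1 : ContinuousAt (fun y : ℝ × ℝ => deriv aF (y.1 + y.2)) x :=
      ContinuousAt.comp (f := fun y : ℝ × ℝ => y.1 + y.2) (hderaF.continuousAt hnw) (hsumc x)
    have c2 : ContinuousAt (fun y : ℝ × ℝ => deriv bF (y.1 + y.2)) x :=
      ContinuousAt.comp (f := fun y : ℝ × ℝ => y.1 + y.2) (hderbF.continuousAt hnw) (hsumc x)
    have c3 : ContinuousAt (fun y : ℝ × ℝ => bF (y.1 + y.2)) x :=
      ContinuousAt.comp (f := fun y : ℝ × ℝ => y.1 + y.2) (hbFc.continuousAt hnw) (hsumc x)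
    exact (c1.smul continuousAt_const).add
      ((continuousAt_snd.smul (c2.smul continuousAt_const)).add (c3.smul continuousAt_const))
  have hDMc : ∀ x : ℝ × ℝ, x.1 - x.2 ∈ Set.Ioo va vb → ContinuousAt DM x := by
    intro x hx
    have hnw : Set.Ioo va vb ∈ nhds (x.1 - x.2) := isOpen_Ioo.mem_nhds hx
    have c1 : ContinuousAt (fun y : ℝ × ℝ => deriv cF (y.1 - y.2)) x :=
      ContinuousAt.comp (f := fun y : ℝ × ℝ => y.1 - y.2) (hdercF.continuousAt hnw) (hsubc x)
    have c2 : ContinuousAt (fun y : ℝ × ℝ => deriv dF (y.1 - y.2)) x :=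
      ContinuousAt.comp (f := fun y : ℝ × ℝ => y.1 - y.2) (hderdF.continuousAt hnw) (hsubc x)
    have c3 : ContinuousAt (fun y : ℝ × ℝ => dF (y.1 - y.2)) x :=
      ContinuousAt.comp (f := fun y : ℝ × ℝ => y.1 - y.2) (hdFc.continuousAt hnw) (hsubc x)
    exact (c1.smul continuousAt_const).add
      ((continuousAt_snd.smul (c2.smul continuousAt_const)).add (c3.smul continuousAt_const))
  -- representation predicates
  set Up : ℝ × ℝ → Prop := fun x =>
    ∃ u ∈ Set.Icc u₁ u₂, x.2 ∈ Set.Icc (T u) ε ∧ x.1 = u + T u - x.2 with hUpdef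
  set Lo : ℝ × ℝ → Prop := fun x =>
    ∃ u ∈ Set.Icc u₁ u₂, x.2 ∈ Set.Icc (-ε) (T u) ∧ x.1 = u - T u + x.2 with hLodef
  have hHb : ∀ x, x ∈ HbL ε T u₁ u₂ ↔ (Up x ∨ Lo x) := by
    intro x
    constructor
    · rintro ⟨u, hu, h | h⟩
      exacts [Or.inl ⟨u, hu, h⟩, Or.inr ⟨u, hu, h⟩]
    · rintro (⟨u, hu, h⟩ | ⟨u, hu, h⟩)
      exacts [⟨u, hu, Or.inl h⟩, ⟨u, hu, Or.inr h⟩]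
  -- crossing estimates
  have hCP : ∀ u' ∈ Set.Icc u₁ u₂, ∀ x : ℝ × ℝ, x.2 ≤ T u' → x.1 = u' - T u' + x.2 →
      x.1 + x.2 ∈ Set.Icc wa wb →
      x.2 ≤ T (σp (x.1 + x.2)) ∧ (x.2 < T u' → x.2 < T (σp (x.1 + x.2))) := by
    intro u' hu' x hle hx1 hmemw
    obtain ⟨hmemJ, heq⟩ := hσpex _ hmemw
    have hu'J := hIJ hu'
    have he : σp (x.1 + x.2) + T (σp (x.1 + x.2)) = u' - T u' + 2 * x.2 := by
      have h0 := heq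
      simp only [hφp] at h0
      rw [h0, hx1]; ring
    have h1 : φp (σp (x.1 + x.2)) ≤ φp u' := by
      simp only [hφp]; linarith
    have h2 : σp (x.1 + x.2) ≤ u' := by
      by_contra h
      push_neg at h
      exact absurd (hmp hu'J hmemJ h) (not_lt.2 h1)
    have h3 : φm (σp (x.1 + x.2)) ≤ φm u' := hmm.monotoneOn hmemJ hu'J h2
    simp only [hφm] at h3
    constructor
    · linarith
    · intro hlt
      have h1' : φp (σp (x.1 + x.2)) < φp u' := by simp only [hφp]; linarith
      have h2' : σp (x.1 + x.2) < u' := by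
        by_contra h
        push_neg at h
        exact absurd (hmp.monotoneOn hu'J hmemJ h) (not_le.2 h1')
      have h3' : φm (σp (x.1 + x.2)) < φm u' := hmm hmemJ hu'J h2'
      simp only [hφm] at h3'
      linarith
  have hCM : ∀ u ∈ Set.Icc u₁ u₂, ∀ x : ℝ × ℝ, T u ≤ x.2 → x.1 = u + T u - x.2 →
      x.1 - x.2 ∈ Set.Icc va vb →
      T (σm (x.1 - x.2)) ≤ x.2 ∧ (T u < x.2 → T (σm (x.1 - x.2)) < x.2) := by
    intro u hu x hle hx1 hmemv
    obtain ⟨hmemJ, heq⟩ := hσmex _ hmemv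
    have huJ := hIJ hu
    have he : σm (x.1 - x.2) - T (σm (x.1 - x.2)) = u + T u - 2 * x.2 := by
      have h0 := heq
      simp only [hφm] at h0
      rw [h0, hx1]; ring
    have h1 : φm (σm (x.1 - x.2)) ≤ φm u := by
      simp only [hφm]; linarith
    have h2 : σm (x.1 - x.2) ≤ u := by
      by_contra h
      push_neg at h
      exact absurd (hmm huJ hmemJ h) (not_lt.2 h1)
    have h3 : φp (σm (x.1 - x.2)) ≤ φp u := hmp.monotoneOn hmemJ huJ h2
    simp only [hφp] at h3
    constructor
    · linarith
    · intro hlt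
      have h1' : φm (σm (x.1 - x.2)) < φm u := by simp only [hφm]; linarith
      have h2' : σm (x.1 - x.2) < u := by
        by_contra h
        push_neg at h
        exact absurd (hmm.monotoneOn huJ hmemJ h) (not_le.2 h1')
      have h3' : φp (σm (x.1 - x.2)) < φp u := hmp hmemJ huJ h2'
      simp only [hφp] at h3'
      linarith
  -- the window
  set k₁ : ℝ := u₁ - δ/4 with hk₁
  set k₂ : ℝ := u₂ + δ/4 with hk₂
  have hk₁J : k₁ ∈ Set.Icc j₁ j₂ := ⟨by rw [hk₁, hj₁]; linarith, by rw [hk₁, hj₂]; linarith⟩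
  have hk₂J : k₂ ∈ Set.Icc j₁ j₂ := ⟨by rw [hk₂, hj₁]; linarith, by rw [hk₂, hj₂]; linarith⟩
  have hj₁k₁ : j₁ < k₁ := by rw [hk₁, hj₁]; linarith
  have hk₂j₂ : k₂ < j₂ := by rw [hk₂, hj₂]; linarith
  set wa' : ℝ := φp k₁ with hwa'
  set wb' : ℝ := φp k₂ with hwb'
  have hj₁J : j₁ ∈ Set.Icc j₁ j₂ := Set.left_mem_Icc.2 hj12
  have hj₂J : j₂ ∈ Set.Icc j₁ j₂ := Set.right_mem_Icc.2 hj12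
  have hwin1 : Set.Icc wa' wb' ⊆ Set.Ioo wa wb := by
    intro w hw
    exact ⟨lt_of_lt_of_le (hmp hj₁J hk₁J hj₁k₁) hw.1,
      lt_of_le_of_lt hw.2 (hmp hk₂J hj₂J hk₂j₂)⟩
  have hupmem : ∀ u ∈ Set.Icc u₁ u₂, φp u ∈ Set.Icc wa' wb' := by
    intro u hu
    exact ⟨hmp.monotoneOn hk₁J (hIJ hu) (by rw [hk₁]; linarith [hu.1, hδ]),
      hmp.monotoneOn (hIJ hu) hk₂J (by rw [hk₂]; linarith [hu.2, hδ])⟩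
  have hlomem : ∀ u ∈ Set.Icc u₁ u₂, φm u ∈ Set.Ioo va vb := by
    intro u hu
    exact ⟨hmm hj₁J (hIJ hu) (by rw [hj₁]; linarith [hu.1, hδ]),
      hmm (hIJ hu) hj₂J (by rw [hj₂]; linarith [hu.2, hδ])⟩
  set cond : ℝ × ℝ → Prop := fun x =>
    x.1 + x.2 ∈ Set.Icc wa' wb' ∧ T (σp (x.1 + x.2)) ≤ x.2 with hconddef
  have hsump : ∀ (x : ℝ × ℝ) u, x.1 = u + T u - x.2 → x.1 + x.2 = φp u := by
    intro x u h
    simp only [hφp]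
    rw [h]; ring
  have hsubm : ∀ (x : ℝ × ℝ) u, x.1 = u - T u + x.2 → x.1 - x.2 = φm u := by
    intro x u h
    simp only [hφm]
    rw [h]; ring
  have hM1a : ∀ x, Up x → cond x := by
    rintro x ⟨u, hu, hs, hx1⟩
    have hx : x.1 + x.2 = φp u := hsump x u hx1
    refine ⟨by rw [hx]; exact hupmem u hu, ?_⟩
    rw [hx, hσpleft u (hIJ hu)]
    exact hs.1
  have hM1b : ∀ x, (Up x ∨ Lo x) → x.1 + x.2 ∈ Set.Icc wa wb →
      T (σp (x.1 + x.2)) ≤ x.2 → Up x := by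
    intro x hrep hmemw hle
    rcases hrep with h | ⟨u', hu', hs, hx1⟩
    · exact h
    · have hC := hCP u' hu' x hs.2 hx1 hmemw
      have heq2 : x.2 = T u' := by
        rcases lt_or_eq_of_le hs.2 with h | h
        · exact absurd hle (not_le.2 (hC.2 h))
        · exact h
      refine ⟨u', hu', ⟨heq2.ge, ?_⟩, ?_⟩
      · have := (hJnz u' (hIJ hu')).1
        linarith
      · rw [hx1, heq2]; ring
  have hUB : ∀ x : ℝ × ℝ, Up x → B x = aF (x.1 + x.2) + x.2 * bF (x.1 + x.2) := by
    rintro ⟨x1, x2⟩ ⟨u, hu, hs, hx1⟩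
    dsimp only at hs hx1 ⊢
    have hx : x1 + x2 = φp u := hsump (x1, x2) u hx1
    have hσ : σp (x1 + x2) = u := by rw [hx]; exact hσpleft u (hIJ hu)
    have hne : ε - T u ≠ 0 := ne_of_gt (hJnz u (hIJ hu)).1
    have hBx := hBup u hu x2 hs
    have hpt : (x1, x2) = (u + T u - x2, x2) := by rw [hx1]
    rw [hpt, hBx, hx]
    simp only [haF, hbF]
    rw [hσpleft u (hIJ hu)]
    simp only [hφp]
    field_simp
    ring
  have hLB : ∀ x : ℝ × ℝ, Lo x → B x = cF (x.1 - x.2) + x.2 * dF (x.1 - x.2) := by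
    rintro ⟨x1, x2⟩ ⟨u, hu, hs, hx1⟩
    dsimp only at hs hx1 ⊢
    have hx : x1 - x2 = φm u := hsubm (x1, x2) u hx1
    have hσ : σm (x1 - x2) = u := by rw [hx]; exact hσmleft u (hIJ hu)
    have hne : ε + T u ≠ 0 := ne_of_gt (hJnz u (hIJ hu)).2.1
    have hBx := hBdown u hu x2 hs
    have hpt : (x1, x2) = (u - T u + x2, x2) := by rw [hx1]
    rw [hpt, hBx, hx]
    simp only [hcF, hdF]
    rw [hσmleft u (hIJ hu)]
    simp only [hφm]
    field_simp
    ring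
  -- the target derivative on the spine
  set TGT : ℝ → (ℝ × ℝ →L[ℝ] ℝ) := fun u =>
    (((1:ℝ)/2) * ((A u - fm (u - T u - ε)) / (ε + T u)
        + (A u - fp (u + T u - ε)) / (ε - T u))) • ContinuousLinearMap.fst ℝ ℝ ℝ +
    (((1:ℝ)/2) * ((A u - fm (u - T u - ε)) / (ε + T u)
        - (A u - fp (u + T u - ε)) / (ε - T u))) • ContinuousLinearMap.snd ℝ ℝ ℝ with hTGT
  have hspineval : ∀ u₀ ∈ Set.Icc u₁ u₂,
      DP (u₀, T u₀) = TGT u₀ ∧ DM (u₀, T u₀) = TGT u₀ := by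
    intro u₀ hu₀
    have huJ := hIJ hu₀
    have hw : u₀ + T u₀ ∈ Set.Ioo wa wb := by
      have := hwin1 (hupmem u₀ hu₀)
      simpa only [hφp] using this
    have hv : u₀ - T u₀ ∈ Set.Ioo va vb := by
      have := hlomem u₀ hu₀
      simpa only [hφm] using this
    have hσ1 : σp (u₀ + T u₀) = u₀ := by
      have := hσpleft u₀ huJ
      simpa only [hφp] using this
    have hσ2 : σm (u₀ - T u₀) = u₀ := by
      have := hσmleft u₀ huJ
      simpa only [hφm] using this
    have e1 : deriv aF (u₀ + T u₀) = EA (u₀ + T u₀) := ((haFd _ hw).1).deriv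
    have e2 : deriv bF (u₀ + T u₀) = EB (u₀ + T u₀) := ((haFd _ hw).2).deriv
    have e3 : deriv cF (u₀ - T u₀) = EC (u₀ - T u₀) := ((hcFd _ hv).1).deriv
    have e4 : deriv dF (u₀ - T u₀) = ED (u₀ - T u₀) := ((hcFd _ hv).2).deriv
    obtain ⟨hn1, hn2, hn3, hn4⟩ := hJnz u₀ huJ
    have n1 : ε - T u₀ ≠ 0 := ne_of_gt hn1
    have n2 : ε + T u₀ ≠ 0 := ne_of_gt hn2
    have n3 : 1 + deriv T u₀ ≠ 0 := ne_of_gt hn3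
    have n4 : 1 - deriv T u₀ ≠ 0 := ne_of_gt hn4
    have hDA : deriv A u₀ =
        ((1 - deriv T u₀) * ((A u₀ - fp (u₀ + T u₀ - ε)) / (ε - T u₀)) +
         (1 + deriv T u₀) * ((A u₀ - fm (u₀ - T u₀ - ε)) / (ε + T u₀))) / 2 := by
      linarith [hAode u₀ hu₀]
    have s1 : EA (u₀ + T u₀) + T u₀ * EB (u₀ + T u₀) =
        (1/2) * ((A u₀ - fm (u₀ - T u₀ - ε)) / (ε + T u₀)
          + (A u₀ - fp (u₀ + T u₀ - ε)) / (ε - T u₀)) := by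
      simp only [hEA, hEB]
      rw [hσ1]
      exact alg1 ε (T u₀) (deriv T u₀) (A u₀) (fp (u₀ + T u₀ - ε)) (fm (u₀ - T u₀ - ε))
        (deriv fp (u₀ + T u₀ - ε)) (deriv A u₀) n1 n2 n3 hDA
    have s2 : EA (u₀ + T u₀) + T u₀ * EB (u₀ + T u₀) + bF (u₀ + T u₀) =
        (1/2) * ((A u₀ - fm (u₀ - T u₀ - ε)) / (ε + T u₀)
          - (A u₀ - fp (u₀ + T u₀ - ε)) / (ε - T u₀)) := by
      simp only [hEA, hEB, hbF]
      rw [hσ1]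
      exact alg2 ε (T u₀) (deriv T u₀) (A u₀) (fp (u₀ + T u₀ - ε)) (fm (u₀ - T u₀ - ε))
        (deriv fp (u₀ + T u₀ - ε)) (deriv A u₀) n1 n2 n3 hDA
    have s3 : EC (u₀ - T u₀) + T u₀ * ED (u₀ - T u₀) =
        (1/2) * ((A u₀ - fm (u₀ - T u₀ - ε)) / (ε + T u₀)
          + (A u₀ - fp (u₀ + T u₀ - ε)) / (ε - T u₀)) := by
      simp only [hEC, hED]
      rw [hσ2]
      exact alg3 ε (T u₀) (deriv T u₀) (A u₀) (fp (u₀ + T u₀ - ε)) (fm (u₀ - T u₀ - ε))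
        (deriv fm (u₀ - T u₀ - ε)) (deriv A u₀) n1 n2 n4 hDA
    have s4 : -(EC (u₀ - T u₀) + T u₀ * ED (u₀ - T u₀)) + dF (u₀ - T u₀) =
        (1/2) * ((A u₀ - fm (u₀ - T u₀ - ε)) / (ε + T u₀)
          - (A u₀ - fp (u₀ + T u₀ - ε)) / (ε - T u₀)) := by
      simp only [hEC, hED, hdF]
      rw [hσ2]
      exact alg4 ε (T u₀) (deriv T u₀) (A u₀) (fp (u₀ + T u₀ - ε)) (fm (u₀ - T u₀ - ε))
        (deriv fm (u₀ - T u₀ - ε)) (deriv A u₀) n1 n2 n4 hDA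
    constructor
    · apply ContinuousLinearMap.ext
      intro p
      simp only [hDP, hlp, hTGT, ContinuousLinearMap.add_apply,
        ContinuousLinearMap.coe_smul', Pi.smul_apply, ContinuousLinearMap.coe_fst',
        ContinuousLinearMap.coe_snd', smul_eq_mul]
      rw [e1, e2]
      linear_combination p.1 * s1 + p.2 * s2
    · apply ContinuousLinearMap.ext
      intro p
      simp only [hDM, hlq, hTGT, ContinuousLinearMap.add_apply, ContinuousLinearMap.sub_apply,
        ContinuousLinearMap.coe_smul', Pi.smul_apply, ContinuousLinearMap.coe_fst',
        ContinuousLinearMap.coe_snd', smul_eq_mul]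
      rw [e3, e4]
      linear_combination p.1 * s3 + p.2 * s4
  set gD : ℝ × ℝ → (ℝ × ℝ →L[ℝ] ℝ) := fun x => if cond x then DP x else DM x with hgD
  -- derivative at spine points
  have hUspine : ∀ u₀ ∈ Set.Icc u₁ u₂, Up (u₀, T u₀) := by
    intro u₀ hu₀
    exact ⟨u₀, hu₀, ⟨le_rfl, by linarith [(hJnz u₀ (hIJ hu₀)).1]⟩, by dsimp only; ring⟩
  have hLspine : ∀ u₀ ∈ Set.Icc u₁ u₂, Lo (u₀, T u₀) := by
    intro u₀ hu₀
    exact ⟨u₀, hu₀, ⟨by linarith [(hJnz u₀ (hIJ hu₀)).2.1], le_rfl⟩, by dsimp only; ring⟩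
  have hspinefd : ∀ u₀ ∈ Set.Icc u₁ u₂,
      HasFDerivWithinAt B (TGT u₀) (HbL ε T u₁ u₂) (u₀, T u₀) := by
    intro u₀ hu₀
    have hw : u₀ + T u₀ ∈ Set.Ioo wa wb := by
      have := hwin1 (hupmem u₀ hu₀)
      simpa only [hφp] using this
    have hv : u₀ - T u₀ ∈ Set.Ioo va vb := by
      have := hlomem u₀ hu₀
      simpa only [hφm] using this
    have hfdP := hmodelp (u₀, T u₀) (by simpa using hw)
    have hfdM := hmodelm (u₀, T u₀) (by simpa using hv)
    have h1 : HasFDerivWithinAt B (DP (u₀, T u₀))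
        (HbL ε T u₁ u₂ ∩ {y | cond y}) (u₀, T u₀) := by
      apply (hfdP.hasFDerivWithinAt).congr ?_ (hUB _ (hUspine u₀ hu₀))
      intro y hy
      exact hUB y (hM1b y ((hHb y).1 hy.1)
        (Set.Ioo_subset_Icc_self (hwin1 hy.2.1)) hy.2.2)
    have h2 : HasFDerivWithinAt B (DM (u₀, T u₀))
        (HbL ε T u₁ u₂ ∩ {y | ¬ cond y}) (u₀, T u₀) := by
      apply (hfdM.hasFDerivWithinAt).congr ?_ (hLB _ (hLspine u₀ hu₀))
      intro y hy
      rcases (hHb y).1 hy.1 with h | h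
      · exact absurd (hM1a y h) hy.2
      · exact hLB y h
    rw [(hspineval u₀ hu₀).1] at h1
    rw [(hspineval u₀ hu₀).2] at h2
    have h3 := h1.union h2
    have hsets : (HbL ε T u₁ u₂ ∩ {y | cond y}) ∪ (HbL ε T u₁ u₂ ∩ {y | ¬ cond y})
        = HbL ε T u₁ u₂ := by
      ext y
      constructor
      · rintro (⟨h1, _⟩ | ⟨h1, _⟩) <;> exact h1
      · intro hy
        by_cases h : cond y
        exacts [Or.inl ⟨hy, h⟩, Or.inr ⟨hy, h⟩]
    rwa [hsets] at h3
  -- derivative of B within the region everywhere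
  have hAll : ∀ x ∈ HbL ε T u₁ u₂, HasFDerivWithinAt B (gD x) (HbL ε T u₁ u₂) x := by
    intro x hx
    rcases (hHb x).1 hx with hUx | hLx
    · obtain ⟨u, hu, hs, hx1⟩ := hUx
      rcases eq_or_lt_of_le hs.1 with heq | hlt
      · have hxeq : x = (u, T u) := Prod.ext (by rw [hx1, ← heq]; ring) heq.symm
        rw [hxeq]
        have hgx : gD (u, T u) = TGT u := by
          simp only [hgD]
          rw [if_pos (hM1a _ (hUspine u hu))]
          exact (hspineval u hu).1
        rw [hgx]
        exact hspinefd u hu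
      · have hcx : cond x := hM1a x ⟨u, hu, hs, hx1⟩
        have hgx : gD x = DP x := by simp only [hgD]; exact if_pos hcx
        have hwx : x.1 + x.2 ∈ Set.Ioo wa wb := hwin1 hcx.1
        have hσval : T (σp (x.1 + x.2)) < x.2 := by
          rw [hsump x u hx1, hσpleft u (hIJ hu)]
          exact hlt
        have hc : ContinuousAt (fun y : ℝ × ℝ => T (σp (y.1 + y.2))) x :=
          hTc.continuousAt.comp (ContinuousAt.comp (f := fun y : ℝ × ℝ => y.1 + y.2)
            (hσpcont _ hwx) (hsumc x))
        have hev1 : ∀ᶠ y in nhds x, y.1 + y.2 ∈ Set.Ioo wa wb :=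
          (hsumc x).eventually_mem (isOpen_Ioo.mem_nhds hwx)
        have hev2 : ∀ᶠ y in nhds x, T (σp (y.1 + y.2)) < y.2 :=
          Filter.Tendsto.eventually_lt hc continuousAt_snd hσval
        have hevU : ∀ᶠ y in nhdsWithin x (HbL ε T u₁ u₂),
            B y = aF (y.1 + y.2) + y.2 * bF (y.1 + y.2) := by
          filter_upwards [(hev1.and hev2).filter_mono nhdsWithin_le_nhds,
            self_mem_nhdsWithin] with y hy hyH
          exact hUB y (hM1b y ((hHb y).1 hyH) (Set.Ioo_subset_Icc_self hy.1) hy.2.le)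
        have hres := ((hmodelp x hwx).hasFDerivWithinAt).congr_of_eventuallyEq hevU
          (hUB x ⟨u, hu, hs, hx1⟩)
        rwa [hgx]
    · obtain ⟨u, hu, hs, hx1⟩ := hLx
      rcases eq_or_lt_of_le hs.2 with heq | hlt
      · have hxeq : x = (u, T u) := Prod.ext (by rw [hx1, heq]; ring) heq
        rw [hxeq]
        have hgx : gD (u, T u) = TGT u := by
          simp only [hgD]
          rw [if_pos (hM1a _ (hUspine u hu))]
          exact (hspineval u hu).1
        rw [hgx]
        exact hspinefd u hu
      · have hncx : ¬ cond x := by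
          intro hcx
          have := (hCP u hu x hs.2 hx1 (Set.Ioo_subset_Icc_self (hwin1 hcx.1))).2 hlt
          linarith [hcx.2]
        have hgx : gD x = DM x := by simp only [hgD]; exact if_neg hncx
        have hvx : x.1 - x.2 ∈ Set.Ioo va vb := by
          rw [hsubm x u hx1]
          exact hlomem u hu
        have hevNC : ∀ᶠ y in nhds x, ¬ cond y := by
          by_cases hcase : x.1 + x.2 ∈ Set.Icc wa' wb'
          · have hwx : x.1 + x.2 ∈ Set.Ioo wa wb := hwin1 hcase
            have hσs : x.2 < T (σp (x.1 + x.2)) :=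
              (hCP u hu x hs.2 hx1 (Set.Ioo_subset_Icc_self hwx)).2 hlt
            have hc : ContinuousAt (fun y : ℝ × ℝ => T (σp (y.1 + y.2))) x :=
              hTc.continuousAt.comp (ContinuousAt.comp (f := fun y : ℝ × ℝ => y.1 + y.2)
                (hσpcont _ hwx) (hsumc x))
            filter_upwards [Filter.Tendsto.eventually_lt continuousAt_snd hc hσs] with y hy hcy
            exact absurd hcy.2 (not_le.2 hy)
          · filter_upwards [(hsumc x).eventually_mem
              (isClosed_Icc.isOpen_compl.mem_nhds hcase)] with y hy hcy
            exact hy hcy.1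
        have hevL : ∀ᶠ y in nhdsWithin x (HbL ε T u₁ u₂),
            B y = cF (y.1 - y.2) + y.2 * dF (y.1 - y.2) := by
          filter_upwards [hevNC.filter_mono nhdsWithin_le_nhds,
            self_mem_nhdsWithin] with y hnc hyH
          rcases (hHb y).1 hyH with h | h
          · exact absurd (hM1a y h) hnc
          · exact hLB y h
        have hres := ((hmodelm x hvx).hasFDerivWithinAt).congr_of_eventuallyEq hevL
          (hLB x ⟨u, hu, hs, hx1⟩)
        rwa [hgx]
  have hupmem2 : ∀ u ∈ Set.Icc u₁ u₂, φp u ∈ Set.Ioo wa' wb' := by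
    intro u hu
    exact ⟨hmp hk₁J (hIJ hu) (by rw [hk₁]; linarith [hu.1, hδ]),
      hmp (hIJ hu) hk₂J (by rw [hk₂]; linarith [hu.2, hδ])⟩
  -- continuity of gD on the herringbone region
  have hgc : ContinuousOn gD (HbL ε T u₁ u₂) := by
    have hspinecont : ∀ u ∈ Set.Icc u₁ u₂, ContinuousAt gD (u, T u) := by
      intro u hu
      have hw : u + T u ∈ Set.Ioo wa wb := by
        simpa only [hφp] using hwin1 (hupmem u hu)
      have hv : u - T u ∈ Set.Ioo va vb := by
        simpa only [hφm] using hlomem u hu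
      have hdp : ContinuousAt DP (u, T u) := hDPc _ (by simpa using hw)
      have hdm : ContinuousAt DM (u, T u) := hDMc _ (by simpa using hv)
      have hbound : ∀ y, dist (gD y) (TGT u) ≤ dist (DP y) (TGT u) + dist (DM y) (TGT u) := by
        intro y
        by_cases h : cond y
        · simp only [hgD]
          rw [if_pos h]
          exact le_add_of_nonneg_right dist_nonneg
        · simp only [hgD]
          rw [if_neg h]
          exact le_add_of_nonneg_left dist_nonneg
      have htend : Filter.Tendsto (fun y => dist (DP y) (TGT u) + dist (DM y) (TGT u))
          (nhds (u, T u)) (nhds 0) := by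
        have h1 := Filter.Tendsto.dist hdp (tendsto_const_nhds (x := TGT u))
        have h2 := Filter.Tendsto.dist hdm (tendsto_const_nhds (x := TGT u))
        have h0 : (0:ℝ) = dist (DP (u, T u)) (TGT u) + dist (DM (u, T u)) (TGT u) := by
          rw [(hspineval u hu).1, (hspineval u hu).2, dist_self]
          norm_num
        rw [h0]
        exact h1.add h2
      have hgt : Filter.Tendsto gD (nhds (u, T u)) (nhds (TGT u)) := by
        rw [tendsto_iff_dist_tendsto_zero]
        exact squeeze_zero (fun y => dist_nonneg) hbound htend
      have hval : gD (u, T u) = TGT u := by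
        simp only [hgD]
        rw [if_pos (hM1a _ (hUspine u hu))]
        exact (hspineval u hu).1
      rw [ContinuousAt, hval]
      exact hgt
    intro x hx
    rcases (hHb x).1 hx with hUx | hLx
    · obtain ⟨u, hu, hs, hx1⟩ := hUx
      rcases eq_or_lt_of_le hs.1 with heq | hlt
      · have hxeq : x = (u, T u) := Prod.ext (by rw [hx1, ← heq]; ring) heq.symm
        rw [hxeq]
        exact (hspinecont u hu).continuousWithinAt
      · have hcx : cond x := hM1a x ⟨u, hu, hs, hx1⟩
        have hwx : x.1 + x.2 ∈ Set.Ioo wa wb := hwin1 hcx.1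
        have hσval : T (σp (x.1 + x.2)) < x.2 := by
          rw [hsump x u hx1, hσpleft u (hIJ hu)]
          exact hlt
        have hc : ContinuousAt (fun y : ℝ × ℝ => T (σp (y.1 + y.2))) x :=
          hTc.continuousAt.comp (ContinuousAt.comp (f := fun y : ℝ × ℝ => y.1 + y.2)
            (hσpcont _ hwx) (hsumc x))
        have hev1 : ∀ᶠ y in nhds x, y.1 + y.2 ∈ Set.Ioo wa' wb' :=
          (hsumc x).eventually_mem (isOpen_Ioo.mem_nhds
            (by rw [hsump x u hx1]; exact hupmem2 u hu))
        have hev2 : ∀ᶠ y in nhds x, T (σp (y.1 + y.2)) < y.2 :=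
          Filter.Tendsto.eventually_lt hc continuousAt_snd hσval
        have hevc : ∀ᶠ y in nhds x, gD y = DP y := by
          filter_upwards [hev1, hev2] with y h1 h2
          simp only [hgD]
          exact if_pos ⟨Set.Ioo_subset_Icc_self h1, h2.le⟩
        exact ((hDPc x hwx).congr_of_eventuallyEq hevc).continuousWithinAt
    · obtain ⟨u, hu, hs, hx1⟩ := hLx
      rcases eq_or_lt_of_le hs.2 with heq | hlt
      · have hxeq : x = (u, T u) := Prod.ext (by rw [hx1, heq]; ring) heq
        rw [hxeq]
        exact (hspinecont u hu).continuousWithinAt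
      · have hvx : x.1 - x.2 ∈ Set.Ioo va vb := by
          rw [hsubm x u hx1]
          exact hlomem u hu
        have hevNC : ∀ᶠ y in nhds x, ¬ cond y := by
          by_cases hcase : x.1 + x.2 ∈ Set.Icc wa' wb'
          · have hwx : x.1 + x.2 ∈ Set.Ioo wa wb := hwin1 hcase
            have hσs : x.2 < T (σp (x.1 + x.2)) :=
              (hCP u hu x hs.2 hx1 (Set.Ioo_subset_Icc_self hwx)).2 hlt
            have hc : ContinuousAt (fun y : ℝ × ℝ => T (σp (y.1 + y.2))) x :=
              hTc.continuousAt.comp (ContinuousAt.comp (f := fun y : ℝ × ℝ => y.1 + y.2)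
                (hσpcont _ hwx) (hsumc x))
            filter_upwards [Filter.Tendsto.eventually_lt continuousAt_snd hc hσs] with y hy hcy
            exact absurd hcy.2 (not_le.2 hy)
          · filter_upwards [(hsumc x).eventually_mem
              (isClosed_Icc.isOpen_compl.mem_nhds hcase)] with y hy hcy
            exact hy hcy.1
        have hevc : ∀ᶠ y in nhds x, gD y = DM y := by
          filter_upwards [hevNC] with y hy
          simp only [hgD]
          exact if_neg hy
        exact ((hDMc x hvx).congr_of_eventuallyEq hevc).continuousWithinAt
  -- assemble the two conclusions
  constructor
  · intro x hx
    rw [show (1 : WithTop ℕ∞) = 0 + 1 by norm_num,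
      contDiffWithinAt_succ_iff_hasFDerivWithinAt (by simp)]
    refine ⟨HbL ε T u₁ u₂, ?_, ?_, gD, fun y hy => hAll y hy, ?_⟩
    · rw [Set.insert_eq_of_mem hx]
      exact self_mem_nhdsWithin
    · intro h
      exact absurd h (by simp)
    · rw [contDiffWithinAt_zero hx]
      refine ⟨Set.univ, Filter.univ_mem, ?_⟩
      rw [Set.inter_univ]
      exact hgc
  · intro u hu
    simpa only [hTGT] using hspinefd u hu
end
end

section
/- Let T : [u₁,u₂] → (−ε,ε) be C¹ with |T′| < 1 and T(u) ≠ 0 for all u. Define D₊^L(u) = (f₊′(u+T(u)−ε) − f₋′(u−T(u)−ε))/(2T(u)) − f₊″(u+T(u)−ε) and D₋^L(u) = (f₊′(u+T(u)−ε) − f₋′(u−T(u)−ε))/(2T(u)) − f₋″(u−T(u)−ε), and let A be given by the spine formula A(u) = ((ε²−T(u)²)/(2ε·T(u)))·[(ε+T(u))·f₊′(u+T(u)−ε) − (ε−T(u))·f₋′(u−T(u)−ε)] + ((ε+T(u))·f₊(u+T(u)−ε) + (ε−T(u))·f₋(u−T(u)−ε))/(2ε). If A satisfies 2A′(u) = (1−T′(u))·(A(u)−f₊(u+T(u)−ε))/(ε−T(u))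 + (1+T′(u))·(A(u)−f₋(u−T(u)−ε))/(ε+T(u)) for all u, and (ε−T(u))·D₋^L(u) + (ε+T(u))·D₊^L(u) ≠ 0, then T satisfies the differential equation T′(u) = [(ε−T(u))·D₋^L(u) − (ε+T(u))·D₊^L(u)] / [(ε−T(u))·D₋^L(u) + (ε+T(u))·D₊^L(u)]. -/
open Set
open scoped ContDiff

noncomputable section

set_option maxHeartbeats 1000000

/-- The spine `T` of a left horizontal herringbone satisfies the differential equation
`T' = ((ε-T)D₋ - (ε+T)D₊) / ((ε-T)D₋ + (ε+T)D₊)`. -/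
theorem spine_ode
    (ε : ℝ) (hε : 0 < ε) (fp fm : ℝ → ℝ)
    (hfp : ContDiff ℝ (⊤ : ℕ∞) fp) (hfm : ContDiff ℝ (⊤ : ℕ∞) fm)
    (u₁ u₂ : ℝ) (h12 : u₁ < u₂)
    (T : ℝ → ℝ) (hT : ContDiff ℝ 1 T)
    (hTr : ∀ u ∈ Set.Icc u₁ u₂, |T u| < ε)
    (hT' : ∀ u ∈ Set.Icc u₁ u₂, |deriv T u| < 1)
    (hT0 : ∀ u ∈ Set.Icc u₁ u₂, T u ≠ 0)
    (A : ℝ → ℝ)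
    (hAdef : ∀ u : ℝ, A u =
      ((ε ^ 2 - (T u) ^ 2) / (2 * ε * T u)) *
        ((ε + T u) * deriv fp (u + T u - ε) - (ε - T u) * deriv fm (u - T u - ε)) +
      ((ε + T u) * fp (u + T u - ε) + (ε - T u) * fm (u - T u - ε)) / (2 * ε))
    (hAode : ∀ u ∈ Set.Icc u₁ u₂,
      2 * deriv A u =
        (1 - deriv T u) * ((A u - fp (u + T u - ε)) / (ε - T u)) +
        (1 + deriv T u) * ((A u - fm (u - T u - ε)) / (ε + T u))) :
    ∀ u ∈ Set.Icc u₁ u₂,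
      (ε - T u) * ((deriv fp (u + T u - ε) - deriv fm (u - T u - ε)) / (2 * T u)
          - deriv (deriv fm) (u - T u - ε)) +
        (ε + T u) * ((deriv fp (u + T u - ε) - deriv fm (u - T u - ε)) / (2 * T u)
          - deriv (deriv fp) (u + T u - ε)) ≠ 0 →
      deriv T u =
        ((ε - T u) * ((deriv fp (u + T u - ε) - deriv fm (u - T u - ε)) / (2 * T u)
            - deriv (deriv fm) (u - T u - ε)) -
          (ε + T u) * ((deriv fp (u + T u - ε) - deriv fm (u - T u - ε)) / (2 * T u)
            - deriv (deriv fp) (u + T u - ε))) /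
        ((ε - T u) * ((deriv fp (u + T u - ε) - deriv fm (u - T u - ε)) / (2 * T u)
            - deriv (deriv fm) (u - T u - ε)) +
          (ε + T u) * ((deriv fp (u + T u - ε) - deriv fm (u - T u - ε)) / (2 * T u)
            - deriv (deriv fp) (u + T u - ε))) := by
  
  intro u hu hD
  -- notation
  set t := T u with ht_def
  set t' := deriv T u with ht'_def
  have htd : HasDerivAt T t' u := (hT.differentiable one_ne_zero u).hasDerivAt
  have ht0 : t ≠ 0 := hT0 u hu
  have habs := abs_lt.mp (hTr u hu)
  have hem : ε - t ≠ 0 := by linarith [habs.2]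
  have hep : ε + t ≠ 0 := by linarith [habs.1]
  have hε0 : ε ≠ 0 := ne_of_gt hε
  have hden : 2 * ε * t ≠ 0 := by
    simp [hε0, ht0]
  -- derivatives of fp, fm
  have h1i : (1 : WithTop ℕ∞) ≤ ∞ := by exact_mod_cast OrderTop.le_top _
  have hfp1 : ContDiff ℝ ∞ (deriv fp) := (contDiff_infty_iff_deriv.mp (hfp.of_le (by simp))).2
  have hfm1 : ContDiff ℝ ∞ (deriv fm) := (contDiff_infty_iff_deriv.mp (hfm.of_le (by simp))).2
  set a := u + t - ε with ha_def
  set b := u - t - ε with hb_def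
  set p := fp a
  set m := fm b
  set p1 := deriv fp a
  set m1 := deriv fm b
  set p2 := deriv (deriv fp) a
  set m2 := deriv (deriv fm) b
  -- inner functions
  have hia : HasDerivAt (fun x => x + T x - ε) (1 + t') u :=
    ((hasDerivAt_id u).add htd).sub_const ε
  have hib : HasDerivAt (fun x => x - T x - ε) (1 - t') u :=
    ((hasDerivAt_id u).sub htd).sub_const ε
  have hpa : HasDerivAt (fun x => fp (x + T x - ε)) (p1 * (1 + t')) u :=
    ((hfp.differentiable (by simp) a).hasDerivAt).comp u hia
  have hma : HasDerivAt (fun x => fm (x - T x - ε)) (m1 * (1 - t')) u :=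
    ((hfm.differentiable (by simp) b).hasDerivAt).comp u hib
  have hp1a : HasDerivAt (fun x => deriv fp (x + T x - ε)) (p2 * (1 + t')) u :=
    by
    have hd := (hfp1.differentiable (lt_of_lt_of_le zero_lt_one h1i).ne' a).hasDerivAt
    exact hd.comp u hia
  have hm1a : HasDerivAt (fun x => deriv fm (x - T x - ε)) (m2 * (1 - t')) u :=
    by
    have hd := (hfm1.differentiable (lt_of_lt_of_le zero_lt_one h1i).ne' b).hasDerivAt
    exact hd.comp u hib
  -- building blocks
  have hnum : HasDerivAt (fun x => ε ^ 2 - (T x) ^ 2) (-(2 * t ^ 1 * t')) u := by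
    have h : HasDerivAt (fun x => ε ^ 2 - (T x) ^ 2) (0 - ((2 : ℕ) * T u ^ (2 - 1) * t')) u :=
      (hasDerivAt_const u (ε ^ 2)).sub (htd.pow 2)
    simpa using h
  have hdenf : HasDerivAt (fun x => 2 * ε * T x) (2 * ε * t') u := by
    simpa [mul_assoc] using htd.const_mul (2 * ε)
  have hq : HasDerivAt (fun x => (ε ^ 2 - (T x) ^ 2) / (2 * ε * T x))
      ((-(2 * t ^ 1 * t') * (2 * ε * t) - (ε ^ 2 - t ^ 2) * (2 * ε * t')) / (2 * ε * t) ^ 2)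
      u := hnum.div hdenf hden
  have hP : HasDerivAt (fun x => ε + T x) t' u := by
    have h : HasDerivAt (fun x => ε + T x) (0 + t') u := (hasDerivAt_const u ε).add htd
    simpa using h
  have hM : HasDerivAt (fun x => ε - T x) (-t') u := by
    have h : HasDerivAt (fun x => ε - T x) (0 - t') u := (hasDerivAt_const u ε).sub htd
    simpa using h
  have hS : HasDerivAt
      (fun x => (ε + T x) * deriv fp (x + T x - ε) - (ε - T x) * deriv fm (x - T x - ε))
      ((t' * p1 + (ε + t) * (p2 * (1 + t'))) - ((-t') * m1 + (ε - t) * (m2 * (1 - t')))) u :=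
    (hP.mul hp1a).sub (hM.mul hm1a)
  have hLow : HasDerivAt
      (fun x => ((ε + T x) * fp (x + T x - ε) + (ε - T x) * fm (x - T x - ε)) / (2 * ε))
      (((t' * p + (ε + t) * (p1 * (1 + t'))) + ((-t') * m + (ε - t) * (m1 * (1 - t')))) / (2 * ε))
      u := ((hP.mul hpa).add (hM.mul hma)).div_const (2 * ε)
  have hF : HasDerivAt (fun x =>
      ((ε ^ 2 - (T x) ^ 2) / (2 * ε * T x)) *
        ((ε + T x) * deriv fp (x + T x - ε) - (ε - T x) * deriv fm (x - T x - ε)) +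
      ((ε + T x) * fp (x + T x - ε) + (ε - T x) * fm (x - T x - ε)) / (2 * ε))
      (((-(2 * t ^ 1 * t') * (2 * ε * t) - (ε ^ 2 - t ^ 2) * (2 * ε * t')) / (2 * ε * t) ^ 2) *
        ((ε + t) * p1 - (ε - t) * m1) +
       ((ε ^ 2 - t ^ 2) / (2 * ε * t)) *
        ((t' * p1 + (ε + t) * (p2 * (1 + t'))) - ((-t') * m1 + (ε - t) * (m2 * (1 - t')))) +
       ((t' * p + (ε + t) * (p1 * (1 + t'))) + ((-t') * m + (ε - t) * (m1 * (1 - t')))) / (2 * ε))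
      u := (hq.mul hS).add hLow
  have hAeq : A = fun x =>
      ((ε ^ 2 - (T x) ^ 2) / (2 * ε * T x)) *
        ((ε + T x) * deriv fp (x + T x - ε) - (ε - T x) * deriv fm (x - T x - ε)) +
      ((ε + T x) * fp (x + T x - ε) + (ε - T x) * fm (x - T x - ε)) / (2 * ε) :=
    funext hAdef
  have hderivA : deriv A u =
      (((-(2 * t ^ 1 * t') * (2 * ε * t) - (ε ^ 2 - t ^ 2) * (2 * ε * t')) / (2 * ε * t) ^ 2) *
        ((ε + t) * p1 - (ε - t) * m1) +
       ((ε ^ 2 - t ^ 2) / (2 * ε * t)) *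
        ((t' * p1 + (ε + t) * (p2 * (1 + t'))) - ((-t') * m1 + (ε - t) * (m2 * (1 - t')))) +
       ((t' * p + (ε + t) * (p1 * (1 + t'))) + ((-t') * m + (ε - t) * (m1 * (1 - t')))) / (2 * ε)) := by
    rw [hAeq]
    exact hF.deriv
  -- the ODE at u
  have hE := hAode u hu
  rw [hderivA, hAdef u] at hE
  -- abbreviations for D terms
  set Dm := (p1 - m1) / (2 * t) - m2 with hDm_def
  set Dp := (p1 - m1) / (2 * t) - p2 with hDp_def
  -- key algebraic identity
  have hkey : (2 * (((-(2 * t ^ 1 * t') * (2 * ε * t) - (ε ^ 2 - t ^ 2) * (2 * ε * t')) / (2 * ε * t) ^ 2) *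
        ((ε + t) * p1 - (ε - t) * m1) +
       ((ε ^ 2 - t ^ 2) / (2 * ε * t)) *
        ((t' * p1 + (ε + t) * (p2 * (1 + t'))) - ((-t') * m1 + (ε - t) * (m2 * (1 - t')))) +
       ((t' * p + (ε + t) * (p1 * (1 + t'))) + ((-t') * m + (ε - t) * (m1 * (1 - t')))) / (2 * ε)))
      - ((1 - t') * ((((ε ^ 2 - t ^ 2) / (2 * ε * t)) * ((ε + t) * p1 - (ε - t) * m1) +
            ((ε + t) * p + (ε - t) * m) / (2 * ε) - p) / (ε - t)) +
         (1 + t') * ((((ε ^ 2 - t ^ 2) / (2 * ε * t)) * ((ε + t) * p1 - (ε - t) * m1) +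
            ((ε + t) * p + (ε - t) * m) / (2 * ε) - m) / (ε + t)))
      = (-(ε ^ 2 - t ^ 2) / (ε * t)) *
        (t' * ((ε - t) * Dm + (ε + t) * Dp) - ((ε - t) * Dm - (ε + t) * Dp)) := by
    rw [hDm_def, hDp_def]
    field_simp
    ring
  have hzero : t' * ((ε - t) * Dm + (ε + t) * Dp) - ((ε - t) * Dm - (ε + t) * Dp) = 0 := by
    have h2 : ε ^ 2 - t ^ 2 ≠ 0 := by
      intro h
      rcases mul_eq_zero.mp (show (ε - t) * (ε + t) = 0 by nlinarith [h]) with h' | h'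
      · exact hem h'
      · exact hep h'
    have hc : (-(ε ^ 2 - t ^ 2) / (ε * t)) ≠ 0 :=
      div_ne_zero (neg_ne_zero.mpr h2) (mul_ne_zero hε0 ht0)
    have hlhs0 : (-(ε ^ 2 - t ^ 2) / (ε * t)) *
        (t' * ((ε - t) * Dm + (ε + t) * Dp) - ((ε - t) * Dm - (ε + t) * Dp)) = 0 := by
      rw [← hkey, hE, sub_self]
    exact (mul_eq_zero.mp hlhs0).resolve_left hc
  -- conclude
  rw [eq_div_iff hD]
  have : (ε - t) * Dm + (ε + t) * Dp ≠ 0 := hD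
  linarith [hzero]
end
end
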